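/- arXiv:1401.1805 — 8 statements merged into one kernel-verified Lean document; each statement's English description precedes it below -/
import Mathlib

section
/- For integers t ≥ 2 and a ≥ 0, the number of lattice paths with steps (0,1) and (1,0) from (0,0) to (n, n(t-1)+a) all of whose points (x,y) satisfy y ≤ a + x(t-1) equals (a+1)/(n(t-1)+a+1) · C(nt+a, n). -/
/-!
Read a path as a word in `true` (right step) and `false` (up step), and give an up step weight `1`
and a right step weight `-(t-1)`, so that the partial sums are `y - (t-1)x`. Appending one up step
turns the paths being counted into the words of length `nt+a+1` with `n` right steps, total weight
`a+1`, whose walk of partial sums has a strict record at its end.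

Cycle lemma: a word of total weight `k > 0` has exactly `k` cyclic rotations with this property.
Extended periodically, its walk climbs by at most one per step, so the first visits to the
successive values are exactly its records. The rotations in question are the records in a window
of one period, and these records take the `k` values between the walk's values at the two ends
of the window. Summing over all rotations of all `C(nt+a+1, n)` words gives
`(nt+a+1) · #paths = (a+1) · C(nt+a+1, n)`.
-/

open Finset Fin.NatCast

def IsRecord (S : ℕ → ℤ) (p : ℕ) : Prop := ∀ j < p, S j < S p

instance (S : ℕ → ℤ) : DecidablePred (IsRecord S) :=
  fun p => inferInstanceAs (Decidable (∀ j < p, S j < S p))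

section Record

variable {S : ℕ → ℤ}

theorem strictMonoOn_isRecord (S : ℕ → ℤ) : StrictMonoOn S {p | IsRecord S p} :=
  fun _ _ _ hb hab => hb _ hab

theorem IsRecord.apply_zero_le {p : ℕ} (hp : IsRecord S p) : S 0 ≤ S p := by
  rcases Nat.eq_zero_or_pos p with rfl | hp0
  · rfl
  · exact (hp 0 hp0).le

theorem exists_isRecord_apply_eq (hS : ∀ j, S (j + 1) ≤ S j + 1) {c : ℤ} (h0 : S 0 ≤ c) {n : ℕ}
    (hn : c ≤ S n) : ∃ p, IsRecord S p ∧ S p = c := by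
  classical
  have hex : ∃ j, c ≤ S j := ⟨n, hn⟩
  have hbelow : ∀ j < Nat.find hex, S j < c := fun j hj => lt_of_not_ge (Nat.find_min hex hj)
  have hval : S (Nat.find hex) = c := by
    refine le_antisymm ?_ (Nat.find_spec hex)
    rcases hp : Nat.find hex with _ | p
    · exact h0
    · have := hbelow p (by omega)
      linarith [hS p]
  exact ⟨_, fun j hj => hval.symm ▸ hbelow j hj, hval⟩

theorem card_filter_isRecord_Ico (hS : ∀ j, S (j + 1) ≤ S j + 1) {p p' : ℕ} (hp : IsRecord S p)
    (hp' : IsRecord S p') : #{i ∈ Ico p p' | IsRecord S i} = (S p' - S p).toNat := by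
  rw [← Int.card_Ico]
  have hmono := strictMonoOn_isRecord S
  refine card_bij (fun i _ => S i) ?_ ?_ ?_
  · simp only [mem_filter, mem_Ico, and_imp]
    intro i hpi hip' hi
    exact ⟨(hmono.le_iff_le hp hi).2 hpi, hp' i hip'⟩
  · simp only [mem_filter]
    exact fun i hi j hj => hmono.injOn hi.2 hj.2
  · simp only [mem_Ico, mem_filter, exists_prop]
    rintro c ⟨hpc, hcp'⟩
    obtain ⟨i, hi, rfl⟩ := exists_isRecord_apply_eq hS (hp.apply_zero_le.trans hpc) hcp'.le
    exact ⟨i, ⟨⟨(hmono.le_iff_le hp hi).1 hpc, (hmono.lt_iff_lt hi hp').1 hcp'⟩, hi⟩, rfl⟩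

theorem isRecord_add_iff {m : ℕ} (hm : 0 < m) (hper : ∀ j, S j ≤ S (j + m)) (r : ℕ) :
    IsRecord S (r + m) ↔ ∀ i < m, S (r + i) < S (r + m) := by
  refine ⟨fun h i hi => h _ (by omega), fun h j hj => ?_⟩
  induction hd : r + m - j using Nat.strong_induction_on generalizing j with
  | _ d ih =>
    by_cases hrj : r ≤ j
    · simpa [Nat.add_sub_cancel' hrj] using h (j - r) (by omega)
    · exact (hper j).trans_lt (ih _ (by omega) (j + m) (by omega) rfl)

section Periodic

variable {m k : ℕ} (hper : ∀ j, S (j + m) = S j + k)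
include hper

theorem isRecord_add_period_iff {p : ℕ} (hp : m ≤ p) : IsRecord S (p + m) ↔ IsRecord S p := by
  refine ⟨fun h j hj => ?_, fun h j hj => ?_⟩
  · linarith [h (j + m) (by omega), hper j, hper p]
  · rw [hper]
    by_cases hjm : m ≤ j
    · have := hper (j - m)
      rw [Nat.sub_add_cancel hjm] at this
      linarith [h (j - m) (by omega)]
    · linarith [h j (by omega)]

theorem count_isRecord_add_period (hS : ∀ j, S (j + 1) ≤ S j + 1) (hk : 0 < k) :
    Nat.count (fun r => IsRecord S (r + m)) m = k := by
  have hle : ∀ j, S j ≤ S 0 + j := fun j => by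
    induction j with
    | zero => simp
    | succ j ih => push_cast; linarith [hS j]
  have hmul : ∀ l, S (l * m) = S 0 + l * k := fun l => by
    induction l with
    | zero => simp
    | succ l ih => rw [Nat.succ_mul, hper, ih]; push_cast; ring
  -- a record `p ≥ m`, so that the window `[p, p + m)` lies between the records `p` and `p + m`
  obtain ⟨p, hp, hpv⟩ := exists_isRecord_apply_eq hS (c := S 0 + m) (by omega) (n := m * m)
    (by rw [hmul]; nlinarith)
  have hmp : m ≤ p := by
    by_contra h
    linarith [hle p, (show (p : ℤ) < m by exact_mod_cast not_le.1 h)]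
  have hperiodic : Function.Periodic (fun r => IsRecord S (r + m)) m :=
    fun r => propext (isRecord_add_period_iff hper (by omega))
  have hshift : #{r ∈ Ico (p - m) (p - m + m) | IsRecord S (r + m)} =
      #{i ∈ Ico p (p + m) | IsRecord S i} := by
    have hIco : Ico p (p + m) = (Ico (p - m) (p - m + m)).map (addRightEmbedding m) := by
      rw [map_add_right_Ico, Nat.sub_add_cancel hmp]
    rw [hIco, filter_map, card_map]
    rfl
  rw [← Nat.filter_Ico_card_eq_of_periodic (p - m) m _ hperiodic, hshift,
    card_filter_isRecord_Ico hS hp ((isRecord_add_period_iff hper hmp).2 hp), hper]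
  simp

end Periodic

end Record

namespace LatticeWord

section Rotate

variable {α : Type*} {m : ℕ}

def rotate (c : Fin m) (u : Fin m → α) : Fin m → α := fun j => u (j + c)

theorem rotate_rotate (c d : Fin m) (u : Fin m → α) : rotate c (rotate d u) = rotate (c + d) u := by
  funext j; simp [rotate, add_assoc]

variable [NeZero m]

@[simp]
theorem rotate_zero (u : Fin m → α) : rotate 0 u = u := by
  funext j; simp [rotate]

theorem card_filter_rotate (W : Finset (Fin m → α)) (hW : ∀ c u, rotate c u ∈ W ↔ u ∈ W)
    (P : (Fin m → α) → Prop) [DecidablePred P] (c : Fin m) :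
    #{u ∈ W | P (rotate c u)} = #{u ∈ W | P u} := by
  refine card_nbij' (rotate c) (rotate (-c)) ?_ ?_ ?_ ?_ <;> intro u <;>
    simp [hW, rotate_rotate]

theorem mul_card_filter_eq_of_card_rotate (W : Finset (Fin m → α))
    (hW : ∀ c u, rotate c u ∈ W ↔ u ∈ W)
    (P : (Fin m → α) → Prop) [DecidablePred P] {k : ℕ}
    (hk : ∀ u ∈ W, #{c | P (rotate c u)} = k) : m * #{u ∈ W | P u} = k * #W :=
  calc m * #{u ∈ W | P u} = ∑ c : Fin m, #{u ∈ W | P (rotate c u)} := by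
        simp [card_filter_rotate W hW]
    _ = ∑ u ∈ W, #{c | P (rotate c u)} := by simp only [card_filter]; exact sum_comm
    _ = k * #W := by rw [sum_congr rfl hk, sum_const, smul_eq_mul, mul_comm]

theorem card_filter_rotate_eq_true (c : Fin m) (u : Fin m → Bool) :
    #{i | rotate c u i = true} = #{i | u i = true} :=
  card_equiv (Equiv.addRight c) (by intro i; rw [mem_filter]; simp [rotate])

end Rotate

theorem card_filter_card_true_eq_choose (m n : ℕ) :
    #{u : Fin m → Bool | #{i | u i = true} = n} = m.choose n := by
  have hchoose : m.choose n = #(powersetCard n (univ : Finset (Fin m))) := by simp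
  rw [hchoose]
  refine card_nbij' (fun u => univ.filter (u · = true)) (fun s i => decide (i ∈ s)) ?_ ?_ ?_ ?_ <;>
    intro u <;> simp [mem_powersetCard]

def stepWeight (q : ℕ) (b : Bool) : ℤ := if b then -q else 1

/-- `u` is read periodically: the cast `ℕ → Fin m` reduces mod `m`. -/
def walk (q : ℕ) {m : ℕ} [NeZero m] (u : Fin m → Bool) (k : ℕ) : ℤ :=
  ∑ j ∈ range k, stepWeight q (u (j : Fin m))

theorem sum_stepWeight {ι : Type*} (q : ℕ) (s : Finset ι) (w : ι → Bool) :
    ∑ j ∈ s, stepWeight q (w j) = #{j ∈ s | w j = false} - q * #{j ∈ s | w j = true} := by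
  simp [stepWeight, sum_ite, sub_eq_add_neg, add_comm, mul_comm]

section Walk

variable (q : ℕ) {m : ℕ} [NeZero m] (u : Fin m → Bool)

theorem walk_succ (k : ℕ) : walk q u (k + 1) = walk q u k + stepWeight q (u (k : Fin m)) :=
  sum_range_succ _ _

theorem walk_succ_le (k : ℕ) : walk q u (k + 1) ≤ walk q u k + 1 := by
  rw [walk_succ]
  cases u (k : Fin m) <;> simp [stepWeight]

theorem walk_add (r k : ℕ) : walk q u (r + k) = walk q u r + walk q (rotate (r : Fin m) u) k := by
  simp [walk, sum_range_add, rotate, add_comm]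

theorem walk_add_period (j : ℕ) : walk q u (j + m) = walk q u j + walk q u m := by
  rw [add_comm, walk_add, Fin.natCast_self, rotate_zero, add_comm]

theorem walk_rotate (c : Fin m) (i : ℕ) :
    walk q (rotate c u) i = walk q u (c + i) - walk q u c := by
  rw [walk_add, Fin.cast_val_eq_self]; ring

theorem walk_eq_sum_filter {i : ℕ} (hi : i ≤ m) :
    walk q u i = ∑ j ∈ univ.filter (fun j : Fin m => (j : ℕ) < i), stepWeight q (u j) := by
  have hrange : (range m).filter (· < i) = range i := by ext; simp; omega
  have hsum := Fin.sum_univ_eq_sum_range (fun j => if j < i then stepWeight q (u j) else 0) m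
  simp only [Fin.cast_val_eq_self] at hsum
  rw [sum_filter, hsum, ← sum_filter, hrange, walk]

theorem walk_self : walk q u m = m - (q + 1) * #{j | u j = true} := by
  rw [walk_eq_sum_filter q u le_rfl, filter_true_of_mem (fun j _ => j.is_lt), sum_stepWeight]
  have hsplit := card_filter_add_card_filter_not (s := univ) (fun j => u j = true)
  simp only [Bool.not_eq_true, card_univ, Fintype.card_fin] at hsplit
  zify at hsplit
  linear_combination hsplit

theorem isRecord_walk_rotate_iff (c : Fin m) (h : 0 ≤ walk q u m) :
    IsRecord (walk q (rotate c u)) m ↔ IsRecord (walk q u) (c + m) := by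
  rw [isRecord_add_iff (NeZero.pos m) (fun j => by rw [walk_add_period]; linarith)]
  simp only [IsRecord, walk_rotate, sub_lt_sub_iff_right]

theorem card_filter_isRecord_walk_rotate {k : ℕ} (hu : walk q u m = k) (hk : 0 < k) :
    #{c : Fin m | IsRecord (walk q (rotate c u)) m} = k := by
  simp_rw [isRecord_walk_rotate_iff q u _ (by omega)]
  rw [card_filter,
    Fin.sum_univ_eq_sum_range (fun r => if IsRecord (walk q u) (r + m) then 1 else 0),
    ← card_filter, ← Nat.count_eq_card_filter_range]
  exact count_isRecord_add_period (fun j => by rw [walk_add_period, hu]) (walk_succ_le q u) hk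

theorem card_mul_card_filter_isRecord_walk {n a N : ℕ} (hN : N = n * (q + 1) + a) :
    (N + 1) * #{u : Fin (N + 1) → Bool | #{i | u i = true} = n ∧ IsRecord (walk q u) (N + 1)} =
      (a + 1) * (N + 1).choose n := by
  rw [← filter_filter, ← card_filter_card_true_eq_choose]
  refine mul_card_filter_eq_of_card_rotate _ (fun c u => by simp [card_filter_rotate_eq_true]) _ ?_
  intro u hu
  refine card_filter_isRecord_walk_rotate q u ?_ a.succ_pos
  rw [walk_self, (mem_filter.1 hu).2, hN]
  push_cast
  ring

end Walk

section Snoc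

variable (q : ℕ) {N : ℕ}

def StaysBelow (a : ℕ) (w : Fin N → Bool) : Prop :=
  ∀ i ≤ N, #{j : Fin N | (j : ℕ) < i ∧ w j = false} ≤
    a + q * #{j : Fin N | (j : ℕ) < i ∧ w j = true}

instance (a : ℕ) : DecidablePred (StaysBelow q (N := N) a) :=
  fun _ => by unfold StaysBelow; infer_instance

theorem card_snoc_eq_true (w : Fin N → Bool) :
    #{i | (Fin.snoc w false : Fin (N + 1) → Bool) i = true} = #{i | w i = true} := by
  rw [card_filter, card_filter, Fin.sum_univ_castSucc]
  simp

theorem walk_snoc (w : Fin N → Bool) {i : ℕ} (hi : i ≤ N) :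
    walk q (Fin.snoc w false : Fin (N + 1) → Bool) i =
      #{j : Fin N | (j : ℕ) < i ∧ w j = false} - q * #{j : Fin N | (j : ℕ) < i ∧ w j = true} := by
  rw [walk_eq_sum_filter q _ (by omega), sum_filter, Fin.sum_univ_castSucc, ← filter_filter,
    ← filter_filter, ← sum_stepWeight, sum_filter]
  simp [hi]

theorem snoc_init_of_isRecord_walk (u : Fin (N + 1) → Bool) (h : IsRecord (walk q u) (N + 1)) :
    Fin.snoc (Fin.init u) false = u := by
  have hlast := h N N.lt_succ_self
  rw [walk_succ, Fin.natCast_eq_last] at hlast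
  cases hu : u (Fin.last N)
  · exact hu ▸ Fin.snoc_init_self u
  · simp [hu, stepWeight] at hlast
    omega

theorem isRecord_walk_snoc_iff {n a : ℕ} (hN : N = n * (q + 1) + a) (w : Fin N → Bool)
    (hw : #{i | w i = true} = n) :
    IsRecord (walk q (Fin.snoc w false : Fin (N + 1) → Bool)) (N + 1) ↔ StaysBelow q a w := by
  have htotal : walk q (Fin.snoc w false : Fin (N + 1) → Bool) (N + 1) = a + 1 := by
    rw [walk_self, card_snoc_eq_true, hw, hN]
    push_cast
    ring
  simp only [IsRecord, StaysBelow, htotal, Nat.lt_succ_iff]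
  refine forall₂_congr fun i hi => ?_
  rw [walk_snoc q w hi, Int.lt_add_one_iff, sub_le_iff_le_add]
  norm_cast

theorem card_filter_staysBelow {n a : ℕ} (hN : N = n * (q + 1) + a) :
    #{w : Fin N → Bool | #{i | w i = true} = n ∧ StaysBelow q a w} =
      #{u : Fin (N + 1) → Bool | #{i | u i = true} = n ∧ IsRecord (walk q u) (N + 1)} := by
  refine card_nbij' (Fin.snoc · false) Fin.init ?_ ?_ ?_ ?_ <;> intro u <;>
    simp only [coe_filter, mem_univ, true_and, Set.mem_ofPred_eq]
  · rintro ⟨hu, hbelow⟩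
    rw [card_snoc_eq_true]
    exact ⟨hu, (isRecord_walk_snoc_iff q hN u hu).2 hbelow⟩
  · rintro ⟨hu, hrecord⟩
    rw [← snoc_init_of_isRecord_walk q u hrecord] at hu hrecord
    rw [card_snoc_eq_true] at hu
    exact ⟨hu, (isRecord_walk_snoc_iff q hN _ hu).1 hrecord⟩
  · exact fun _ => Fin.init_snoc _ _
  · exact fun ⟨_, hrecord⟩ => snoc_init_of_isRecord_walk q u hrecord

end Snoc

end LatticeWord

/-- Lattice paths with unit steps right `(1,0)` (encoded `true`) and up `(0,1)`
(encoded `false`).  A path from `(0,0)` to `(n, n(t-1)+a)` consists of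
`n + (n(t-1)+a) = nt+a` steps; it stays (weakly) below the line `y = a + (t-1)x`
if after every initial segment of `i` steps the point `(x,y)` reached, where
`x` is the number of right-steps and `y` the number of up-steps so far,
satisfies `y ≤ a + (t-1)x`.  The number of such paths is
`(a+1)/(n(t-1)+a+1) · C(nt+a, n)`. -/
theorem card_lattice_paths_below_line (t a n : ℕ) (ht : 2 ≤ t) :
    ((Finset.univ.filter (fun w : Fin (n * t + a) → Bool =>
        -- endpoint: exactly `n` right-steps (hence `n(t-1)+a` up-steps)
        (Finset.univ.filter (fun i => w i = true)).card = n ∧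
        -- stay on or below the line `y = a + (t-1)x` at every step
        ∀ i : ℕ, i ≤ n * t + a →
          ((Finset.univ.filter (fun j : Fin (n * t + a) => (j : ℕ) < i ∧ w j = false)).card
            ≤ a + (t - 1) *
              (Finset.univ.filter (fun j : Fin (n * t + a) => (j : ℕ) < i ∧ w j = true)).card))).card
      : ℚ) =
      ((a : ℚ) + 1) / (n * (t - 1) + a + 1) * (Nat.choose (n * t + a) n : ℚ) := by
  have hN : n * t + a = n * (t - 1 + 1) + a := by rw [Nat.sub_add_cancel (by omega : 1 ≤ t)]
  have hcount := LatticeWord.card_mul_card_filter_isRecord_walk (t - 1) hN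
  rw [← LatticeWord.card_filter_staysBelow (t - 1) hN] at hcount
  set P :=
    #{w : Fin (n * t + a) → Bool | #{i | w i = true} = n ∧ LatticeWord.StaysBelow (t - 1) a w}
  have hP : P * (n * t + a + 1 - n) = (a + 1) * (n * t + a).choose n := by
    refine Nat.eq_of_mul_eq_mul_left (by omega : 0 < n * t + a + 1) ?_
    rw [← mul_assoc, hcount, mul_assoc, ← Nat.choose_mul_succ_eq]
    ring
  have hnt : n ≤ n * t := Nat.le_mul_of_pos_right n (by omega)
  have hden : ((n * t + a + 1 - n : ℕ) : ℚ) = n * (t - 1) + a + 1 := by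
    rw [Nat.cast_sub (by omega)]
    push_cast
    ring
  have hpos : (0 : ℚ) < n * (t - 1) + a + 1 := by
    rw [← hden]
    exact_mod_cast (by omega : 0 < n * t + a + 1 - n)
  change (P : ℚ) = _
  rw [div_mul_eq_mul_div, eq_div_iff hpos.ne', ← hden]
  exact_mod_cast hP
end

section
/- Let t ≥ 2 be an integer. The number of lattice paths with steps (0,1) and (1,0) from (0,0) to (k,n) with n > tk that never touch the line y = tx except at the origin equals (n - tk)·C(n+k, n)/(n+k). -/
/-!
Follow the height `y - t x` along the path: a right step changes it by `-t`, an up step by `+1`,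
and the path touches the line exactly when the height returns to `0`. Since the height climbs only
in unit steps and ends at `n - t k > 0`, avoiding `0` after the start means staying strictly above it.

Cycle lemma: among the `k + n` rotations of a word (read periodically), those avoiding `0` start at
the positions after which the height stays strictly above its current value, and within one period
these positions correspond bijectively to the `n - t k` values from the global minimum upwards
(take the last time the height is at most the value). Double counting pairs (word, rotation) gives
`(k + n) · #paths = C(k + n, k) · (n - t k)`.
-/

open Finset

namespace Barbier

section CycleLemma

variable {P : ℕ → ℤ} {N S : ℕ}

theorem exists_eq_of_lt_of_le (hstep : ∀ j, P (j + 1) ≤ P j + 1) {a b : ℕ} {v : ℤ}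
    (hab : a ≤ b) (ha : P a < v) (hb : v ≤ P b) : ∃ c, a < c ∧ c ≤ b ∧ P c = v := by
  induction b, hab using Nat.le_induction with
  | base => omega
  | succ b hab ih =>
    by_cases hv : v ≤ P b
    · obtain ⟨c, hac, hcb, hc⟩ := ih hv
      exact ⟨c, hac, by omega, hc⟩
    · exact ⟨b + 1, by omega, le_rfl, by linarith [hstep b]⟩

theorem forall_lt_of_forall_ne (hper : ∀ j, P (j + N) = P j + S)
    (hstep : ∀ j, P (j + 1) ≤ P j + 1) (hN : 0 < N) {r : ℕ}
    (hr : ∀ i ∈ Icc 1 N, P (r + i) ≠ P r) : ∀ j, r < j → P r < P j := by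
  have hnext : ∀ i ∈ Icc 1 N, P r < P (r + i) := by
    intro i hi
    rw [mem_Icc] at hi
    by_contra! hle
    -- the height climbs back to `P r + S ≥ P r` by time `r + N`, so it meets `P r` on the way
    obtain ⟨c, hic, hcN, hc⟩ := exists_eq_of_lt_of_le hstep (by omega : r + i ≤ r + N)
      (lt_of_le_of_ne hle (hr i (mem_Icc.2 hi))) (by rw [hper]; omega)
    exact hr (c - r) (mem_Icc.2 ⟨by omega, by omega⟩) (by rwa [Nat.add_sub_cancel' (by omega)])
  intro j hrj
  induction j using Nat.strong_induction_on with
  | _ j ih =>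
    by_cases hj : j ≤ r + N
    · simpa [Nat.add_sub_cancel' hrj.le] using hnext (j - r) (mem_Icc.2 ⟨by omega, by omega⟩)
    · have := ih (j - N) (by omega) (by omega)
      have := hper (j - N)
      rw [Nat.sub_add_cancel (by omega)] at this
      omega

theorem exists_lt_forall_le (hper : ∀ j, P (j + N) = P j + S) (hN : 0 < N) :
    ∃ r₀ < N, ∀ j, P r₀ ≤ P j := by
  obtain ⟨r₀, hr₀, hmin⟩ := exists_min_image (range N) P (nonempty_range_iff.2 hN.ne')
  refine ⟨r₀, mem_range.1 hr₀, fun j => ?_⟩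
  induction j using Nat.strong_induction_on with
  | _ j ih =>
    by_cases hj : j < N
    · exact hmin j (mem_range.2 hj)
    · have := ih (j - N) (by omega)
      have := hper (j - N)
      rw [Nat.sub_add_cancel (by omega)] at this
      omega

theorem exists_lt_eq_forall_lt (hper : ∀ j, P (j + N) = P j + S)
    (hstep : ∀ j, P (j + 1) ≤ P j + 1) {r₀ : ℕ} (hr₀ : r₀ < N) (hmin : ∀ j, P r₀ ≤ P j) {v : ℤ}
    (hv₀ : P r₀ ≤ v) (hv₁ : v < P r₀ + S) : ∃ r < N, P r = v ∧ ∀ j, r < j → P r < P j := by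
  have hlate : ∀ j, N ≤ j → v < P j := fun j hj => by
    have := hmin (j - N)
    have := hper (j - N)
    rw [Nat.sub_add_cancel hj] at this
    omega
  set r := Nat.findGreatest (fun j => P j ≤ v) N
  have hr : P r ≤ v := Nat.findGreatest_spec (P := fun j => P j ≤ v) hr₀.le hv₀
  have hafter : ∀ j, r < j → v < P j := fun j hj => by
    by_cases hjN : j ≤ N
    · exact lt_of_not_ge (Nat.findGreatest_is_greatest hj hjN)
    · exact hlate j (by omega)
  have hrv : P r = v := le_antisymm hr (by linarith [hstep r, hafter (r + 1) (by omega)])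
  refine ⟨r, ?_, hrv, fun j hj => hrv ▸ hafter j hj⟩
  by_contra! hNr
  exact absurd (hlate r hNr) (not_lt.2 hr)

open Classical in
theorem card_filter_forall_lt (hper : ∀ j, P (j + N) = P j + S)
    (hstep : ∀ j, P (j + 1) ≤ P j + 1) (hS : 0 < S) :
    #{r ∈ range N | ∀ j, r < j → P r < P j} = S := by
  have hN : 0 < N := Nat.pos_of_ne_zero fun h => by
    have := hper 0
    simp only [h, add_zero] at this
    omega
  obtain ⟨r₀, hr₀, hmin⟩ := exists_lt_forall_le hper hN
  calc #{r ∈ range N | ∀ j, r < j → P r < P j} = #(Ico (P r₀) (P r₀ + S)) := by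
        refine card_bij (fun r _ => P r) (fun r hr => ?_) (fun r hr r' hr' h => ?_) fun v hv => ?_
        · rw [mem_filter, mem_range] at hr
          rw [mem_Ico, ← hper]
          exact ⟨hmin r, hr.2 _ (by omega)⟩
        · rw [mem_filter] at hr hr'
          by_contra hne
          rcases Nat.lt_or_gt_of_ne hne with h' | h'
          · exact (hr.2 r' h').ne h
          · exact (hr'.2 r h').ne' h
        · rw [mem_Ico] at hv
          obtain ⟨r, hrN, hrv, hr⟩ := exists_lt_eq_forall_lt hper hstep hr₀ hmin hv.1 hv.2
          exact ⟨r, mem_filter.2 ⟨mem_range.2 hrN, hr⟩, hrv⟩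
    _ = S := by simp

end CycleLemma

open Fin.NatCast

section Paths

variable (t : ℕ) {N : ℕ}

def step (b : Bool) : ℤ := if b then -t else 1

variable [NeZero N]

/-- `height t w i` is `y - t x` at the point reached after `i` steps of `w`, read `N`-periodically
(`l : Fin N` below is `l % N`). -/
def height (w : Fin N → Bool) (i : ℕ) : ℤ := ∑ l ∈ range i, step t (w l)

def AvoidsLine (w : Fin N → Bool) : Prop := ∀ i ∈ Icc 1 N, height t w i ≠ 0

instance : DecidablePred (AvoidsLine t : (Fin N → Bool) → Prop) := fun _ =>
  inferInstanceAs (Decidable (∀ i ∈ Icc 1 N, _))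

def rotate (r : ℕ) (w : Fin N → Bool) : Fin N → Bool := fun i => w (i + r)

theorem card_filter_rotate (r : ℕ) (Q : (Fin N → Bool) → Prop) [DecidablePred Q] :
    #{w | Q (rotate r w)} = #{w | Q w} :=
  card_equiv ((Equiv.addRight (r : Fin N)).symm.arrowCongr (Equiv.refl Bool)) fun w => by
    simp only [mem_filter, mem_univ, true_and]
    rfl

variable {t} (w : Fin N → Bool)

theorem card_rotate (r : ℕ) : #{i | rotate r w i = true} = #{i | w i = true} :=
  card_equiv (Equiv.addRight (r : Fin N)) fun i => by
    simp only [mem_filter, mem_univ, true_and]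
    rfl

theorem height_add_one_le (i : ℕ) : height t w (i + 1) ≤ height t w i + 1 := by
  unfold height step
  rw [sum_range_succ]
  split_ifs <;> omega

theorem height_add_period (i : ℕ) : height t w (i + N) = height t w i + height t w N := by
  simp only [height, add_comm i N, sum_range_add, Nat.cast_add, Fin.natCast_self, add_zero,
    add_comm]

theorem height_rotate (r i : ℕ) :
    height t (rotate r w) i = height t w (r + i) - height t w r := by
  simp only [height, rotate, sum_range_add, Nat.cast_add, add_comm, add_sub_cancel_left]

theorem card_filter_val_lt (b : Bool) {i : ℕ} (hi : i ≤ N) :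
    #{j : Fin N | (j : ℕ) < i ∧ w j = b} = #((range i).filter fun l : ℕ => w l = b) := by
  have hval : ∀ l < i, ((l : Fin N) : ℕ) = l := fun l hl => Fin.val_cast_of_lt (hl.trans_le hi)
  refine card_nbij' Fin.val (fun l => l) (fun j hj => ?_) (fun l hl => ?_)
    (fun j _ => Fin.cast_val_eq_self j) (fun l hl => hval l ?_)
  all_goals simp_all

theorem height_eq_card_sub_mul_card {i : ℕ} (hi : i ≤ N) :
    height t w i = #{j : Fin N | (j : ℕ) < i ∧ w j = false}
      - t * #{j : Fin N | (j : ℕ) < i ∧ w j = true} := by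
  rw [card_filter_val_lt w false hi, card_filter_val_lt w true hi, ← sum_boole, ← sum_boole,
    mul_sum, ← sum_sub_distrib, height]
  refine sum_congr rfl fun l _ => ?_
  cases w l <;> simp [step]

theorem height_self : height t w N = N - (t + 1) * #{i | w i = true} := by
  have hsplit := card_filter_add_card_filter_not (s := (univ : Finset (Fin N))) (w · = true)
  simp only [Bool.not_eq_true, card_univ, Fintype.card_fin] at hsplit
  zify at hsplit
  rw [height_eq_card_sub_mul_card w le_rfl]
  simp only [Fin.is_lt, true_and]
  linear_combination hsplit

theorem avoidsLine_iff_forall_card_ne :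
    AvoidsLine t w ↔ ∀ i, 1 ≤ i → i ≤ N →
      #{j : Fin N | (j : ℕ) < i ∧ w j = false} ≠ t * #{j : Fin N | (j : ℕ) < i ∧ w j = true} := by
  refine forall_congr' fun i => ⟨fun h hi₁ hi₂ => ?_, fun h hi => ?_⟩
  · have := h (mem_Icc.2 ⟨hi₁, hi₂⟩)
    rw [height_eq_card_sub_mul_card w hi₂] at this
    exact_mod_cast sub_ne_zero.1 this
  · rw [mem_Icc] at hi
    rw [height_eq_card_sub_mul_card w hi.2, sub_ne_zero]
    exact_mod_cast h hi.1 hi.2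

theorem avoidsLine_rotate_iff (r : ℕ) :
    AvoidsLine t (rotate r w) ↔ ∀ i ∈ Icc 1 N, height t w (r + i) ≠ height t w r := by
  simp only [AvoidsLine, height_rotate, sub_ne_zero]

end Paths

theorem card_filter_card_eq_true (N k : ℕ) :
    #{w : Fin N → Bool | #{i | w i = true} = k} = N.choose k :=
  calc #{w : Fin N → Bool | #{i | w i = true} = k} = #(powersetCard k (univ : Finset (Fin N))) :=
        card_nbij' (fun w => ({i | w i = true} : Finset _)) (fun s i => decide (i ∈ s))
          (fun w hw => by simpa using hw) (fun s hs => by simpa using hs)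
          (fun w _ => by ext; simp) (fun s _ => by ext; simp)
    _ = N.choose k := by simp

section Count

variable {t k n : ℕ} [NeZero (k + n)]

theorem card_filter_avoidsLine_rotate (w : Fin (k + n) → Bool) (hw : #{i | w i = true} = k)
    (hn : t * k < n) : #{r ∈ range (k + n) | AvoidsLine t (rotate r w)} = n - t * k := by
  have hper : ∀ j, height t w (j + (k + n)) = height t w j + (n - t * k : ℕ) := fun j => by
    rw [height_add_period, height_self, hw]
    push_cast [hn.le]
    ring
  classical
  rw [← card_filter_forall_lt hper (height_add_one_le w) (by omega)]
  refine congrArg card (filter_congr fun r _ => ?_)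
  rw [avoidsLine_rotate_iff]
  exact ⟨forall_lt_of_forall_ne hper (height_add_one_le w) (by omega),
    fun h i hi => (h _ (by have := (mem_Icc.1 hi).1; omega)).ne'⟩

theorem card_mul_card_avoidsLine (hn : t * k < n) :
    (k + n) * #{w : Fin (k + n) → Bool | #{i | w i = true} = k ∧ AvoidsLine t w}
      = (k + n).choose k * (n - t * k) := by
  set W : Finset (Fin (k + n) → Bool) := {w | #{i | w i = true} = k}
  have hdouble := sum_card_bipartiteAbove_eq_sum_card_bipartiteBelow (s := W) (t := range (k + n))
    (r := fun w r => AvoidsLine t (rotate r w))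
  have hrot : ∀ r, #{w ∈ W | AvoidsLine t (rotate r w)}
      = #{w : Fin (k + n) → Bool | #{i | w i = true} = k ∧ AvoidsLine t w} := fun r => by
    rw [← card_filter_rotate r fun w => #{i | w i = true} = k ∧ AvoidsLine t w]
    simp only [W, filter_filter, card_rotate]
  simp only [bipartiteAbove, bipartiteBelow, hrot, sum_const, card_range, smul_eq_mul] at hdouble
  rw [← hdouble, sum_congr rfl fun w hw => card_filter_avoidsLine_rotate w (mem_filter.1 hw).2 hn,
    sum_const, card_filter_card_eq_true, smul_eq_mul]

end Count

end Barbier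

theorem card_lattice_paths_avoiding_line_general (t k n : ℕ) (hn : t * k < n) :
    ((Finset.univ.filter (fun w : Fin (k + n) → Bool =>
        -- endpoint: exactly `k` right-steps (hence `n` up-steps)
        (Finset.univ.filter (fun i => w i = true)).card = k ∧
        -- never touch the line `y = tx` except at the origin
        ∀ i : ℕ, 1 ≤ i → i ≤ k + n →
          ((Finset.univ.filter (fun j : Fin (k + n) => (j : ℕ) < i ∧ w j = false)).card
            ≠ t *
              (Finset.univ.filter (fun j : Fin (k + n) => (j : ℕ) < i ∧ w j = true)).card))).card
      : ℚ) =
      ((n : ℚ) - t * k) * (Nat.choose (n + k) n : ℚ) / (n + k) := by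
  have : NeZero (k + n) := ⟨by omega⟩
  have hcount := congrArg (Nat.cast : ℕ → ℚ) (Barbier.card_mul_card_avoidsLine (t := t) hn)
  push_cast [hn.le] at hcount
  simp only [← Barbier.avoidsLine_iff_forall_card_ne]
  have hn₀ : (0 : ℚ) < n := by exact_mod_cast (by omega : 0 < n)
  rw [eq_div_iff (by positivity), add_comm n k, ← Nat.choose_symm_add]
  linear_combination hcount

/-- Barbier's theorem (t-ballot problem).  Lattice paths with unit steps right
`(1,0)` (encoded `true`) and up `(0,1)` (encoded `false`) from `(0,0)` to
`(k,n)` with `n > tk`, that never touch the line `y = tx` except at the origin,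
number `(n - tk)·C(n+k, n)/(n+k)`.  After `i` steps the path is at the point
`(x,y)` where `x` is the number of right-steps and `y` the number of up-steps
among the first `i` steps. -/
theorem card_lattice_paths_avoiding_line (t k n : ℕ) (ht : 2 ≤ t) (hn : t * k < n) :
    ((Finset.univ.filter (fun w : Fin (k + n) → Bool =>
        -- endpoint: exactly `k` right-steps (hence `n` up-steps)
        (Finset.univ.filter (fun i => w i = true)).card = k ∧
        -- never touch the line `y = tx` except at the origin
        ∀ i : ℕ, 1 ≤ i → i ≤ k + n →
          ((Finset.univ.filter (fun j : Fin (k + n) => (j : ℕ) < i ∧ w j = false)).card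
            ≠ t *
              (Finset.univ.filter (fun j : Fin (k + n) => (j : ℕ) < i ∧ w j = true)).card))).card
      : ℚ) =
      ((n : ℚ) - t * k) * (Nat.choose (n + k) n : ℚ) / (n + k) :=
  card_lattice_paths_avoiding_line_general t k n hn
end

section
/- Let (Y_i) be i.i.d. Bernoulli(p), S_n = Y_1 + ⋯ + Y_n, M(p) = sup_{n≥1} S_n/n, and let t ≥ 2 be an integer with p < 1/t. Then P(M(p) ≤ 1/t) = (1 − tp)/(1 − p) and P(M(p) = 1/t) = (1 − tp)p/(1 − p). -/
/-!
Put `W n = n - t * S n`, a walk with steps `1` and `1 - t`. Then `M ≤ 1/t` iff `W n ≥ 0` for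
all `n`, and `M = 1/t` iff moreover `W n = 0` for some `n ≥ 1`, up to the event where `1/t` is
approached but never attained, which is null because `S n / n → p < 1/t` almost surely.

By the cycle lemma exactly `max (W N) 0` of the `N` cyclic rotations of a word of length `N` keep
the walk strictly positive. Rotations preserve the product law, so
`P(W 1, …, W N > 0) = E[max (W N) 0] / N`, which tends to `E[W N] / N = 1 - t p` because
`P(W N ≤ 0) → 0`. A walk that is strictly positive up to time `N + 1` must start with the step `1`
and then stay nonnegative for `N` steps, so `P(W 1, …, W N ≥ 0) → (1 - t p)/(1 - p)`, and
`P(M = 1/t)` is the difference of the two limits.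
-/

open Finset MeasureTheory ProbabilityTheory Filter Topology

namespace BernoulliRunningMax

section CycleLemma

variable {x : ℕ → ℤ} {N : ℕ}

theorem sum_range_add_period (hx : Function.Periodic x N) (n : ℕ) :
    ∑ i ∈ range (n + N), x i = ∑ i ∈ range n, x i + ∑ i ∈ range N, x i := by
  induction n with
  | zero => simp
  | succ n ih => rw [add_right_comm, sum_range_succ, ih, hx, sum_range_succ]; ring

theorem sum_range_add_mul_period (hx : Function.Periodic x N) (n k : ℕ) :
    ∑ i ∈ range (n + N * k), x i = ∑ i ∈ range n, x i + k * ∑ i ∈ range N, x i := by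
  induction k with
  | zero => simp
  | succ k ih => rw [mul_add_one, ← add_assoc, sum_range_add_period hx, ih]; push_cast; ring

theorem sum_range_eq_mod_add_div (hx : Function.Periodic x N) (n : ℕ) :
    ∑ i ∈ range n, x i = ∑ i ∈ range (n % N), x i + (n / N : ℕ) * ∑ i ∈ range N, x i := by
  conv_lhs => rw [← Nat.mod_add_div n N]
  exact sum_range_add_mul_period hx _ _

theorem sum_range_shift_period (hx : Function.Periodic x N) (j : ℕ) :
    ∑ i ∈ range N, x (j + i) = ∑ i ∈ range N, x i := by
  have := sum_range_add_period hx j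
  rw [sum_range_add] at this
  omega

def IsRightRecord (x : ℕ → ℤ) (j : ℕ) : Prop :=
  ∀ n, j < n → ∑ i ∈ range j, x i < ∑ i ∈ range n, x i

theorem isRightRecord_iff (hx : Function.Periodic x N) (hN : 0 < N)
    (hpos : 0 < ∑ i ∈ range N, x i) (j : ℕ) :
    IsRightRecord x j ↔ ∀ n < N, 0 < ∑ i ∈ range (n + 1), x (j + i) := by
  have hshift : Function.Periodic (fun i => x (j + i)) N := fun i => by
    simp only [← add_assoc, hx (j + i)]
  constructor
  · intro h n hn
    have := h (j + (n + 1)) (by omega)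
    rw [sum_range_add] at this
    omega
  · intro h n hjn
    obtain ⟨r, rfl⟩ := Nat.exists_eq_add_of_lt hjn
    rw [show j + r + 1 = j + (r + 1) by ring, sum_range_add, lt_add_iff_pos_right,
      sum_range_eq_mod_add_div hshift, sum_range_shift_period hx]
    rcases Nat.eq_zero_or_pos ((r + 1) % N) with hmod | hmod
    · have : 0 < (r + 1) / N :=
        Nat.div_pos (Nat.le_of_dvd (by omega) (Nat.dvd_of_mod_eq_zero hmod)) hN
      rw [hmod, sum_range_zero, zero_add]
      positivity
    · have := h ((r + 1) % N - 1) (by have := Nat.mod_lt (r + 1) hN; omega)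
      rw [Nat.sub_add_cancel hmod] at this
      positivity

-- Take the last time the walk is `≤ v`: as steps are at most `1` the walk is `v` there, and this
-- time lies in the first period, since one period earlier the walk would be below its minimum.
theorem exists_isRightRecord_eq (hx : Function.Periodic x N) (hN : 0 < N) (hle : ∀ n, x n ≤ 1)
    {n₀ : ℕ} (hn₀ : ∀ n, ∑ i ∈ range n₀, x i ≤ ∑ i ∈ range n, x i) {v : ℤ}
    (hmv : ∑ i ∈ range n₀, x i ≤ v) (hvs : v < ∑ i ∈ range n₀, x i + ∑ i ∈ range N, x i) :
    ∃ j < N, IsRightRecord x j ∧ ∑ i ∈ range j, x i = v := by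
  set W : ℕ → ℤ := fun n => ∑ i ∈ range n, x i
  replace hn₀ : ∀ n, W n₀ ≤ W n := hn₀
  replace hmv : W n₀ ≤ v := hmv
  replace hvs : v < W n₀ + W N := hvs
  set m := W n₀
  set K := (v - m + 1).toNat
  have hbeyond (n : ℕ) (hn : (K + n₀) * N ≤ n) : v < W n := by
    have h1 : ((K : ℕ) : ℤ) ≤ (n / N : ℕ) := by
      exact_mod_cast (Nat.le_div_iff_mul_le hN).2 ((Nat.mul_le_mul_right N (by omega)).trans hn)
    have h2 := hn₀ (n % N)
    have h3 : 0 < W N := by omega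
    rw [show W n = W (n % N) + (n / N : ℕ) * W N from sum_range_eq_mod_add_div hx n]
    nlinarith [Int.self_le_toNat (v - m + 1)]
  set B := (K + n₀) * N
  set j := Nat.findGreatest (fun n => W n ≤ v) B
  have hjv : W j ≤ v :=
    Nat.findGreatest_spec (P := fun n => W n ≤ v) (m := n₀) (Nat.le_mul_of_pos_right _ hN |>.trans
      (Nat.mul_le_mul_right N (by omega))) hmv
  have hafter (n : ℕ) (hn : j < n) : v < W n := by
    rcases le_or_gt n B with h | h
    · exact lt_of_not_ge (Nat.findGreatest_is_greatest hn h)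
    · exact hbeyond n h.le
  have hWj : W j = v := by
    have := hafter (j + 1) (by omega)
    have : W (j + 1) = W j + x j := sum_range_succ x j
    linarith [hle j]
  refine ⟨j, ?_, fun n hn => hWj.trans_lt (hafter n hn), hWj⟩
  by_contra! h
  have := sum_range_add_period hx (j - N)
  rw [Nat.sub_add_cancel h] at this
  linarith [hn₀ (j - N)]

-- Records in the first period correspond to the values in `[m, m + s)`, where `m` is the minimum
-- of the walk and `s` its increment over a period.
open scoped Classical in
theorem card_isRightRecord (hx : Function.Periodic x N) (hN : 0 < N) (hle : ∀ n, x n ≤ 1)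
    (hpos : 0 < ∑ i ∈ range N, x i) :
    #{j ∈ range N | IsRightRecord x j} = (∑ i ∈ range N, x i).toNat := by
  set W : ℕ → ℤ := fun n => ∑ i ∈ range n, x i
  change #{j ∈ range N | IsRightRecord x j} = (W N).toNat
  obtain ⟨n₀, hn₀N, hn₀min⟩ := (range N).exists_min_image W (nonempty_range_iff.2 hN.ne')
  have hmin (n : ℕ) : W n₀ ≤ W n := by
    have := hn₀min (n % N) (mem_range.2 (Nat.mod_lt n hN))
    have : 0 ≤ ((n / N : ℕ) : ℤ) * W N := by positivity
    rw [show W n = W (n % N) + (n / N : ℕ) * W N from sum_range_eq_mod_add_div hx n]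
    linarith
  rw [show W N = W n₀ + W N - W n₀ by ring, ← Int.card_Ico]
  refine card_bij (fun j _ => W j) (fun j hj => ?_) (fun j hj j' hj' heq => ?_) fun v hv => ?_
  · obtain ⟨hjN, hrec⟩ := mem_filter.1 hj
    have : W j < W (n₀ + N) := hrec _ (by have := mem_range.1 hjN; omega)
    rw [show W (n₀ + N) = W n₀ + W N from sum_range_add_period hx n₀] at this
    exact mem_Ico.2 ⟨hmin j, this⟩
  · rcases lt_trichotomy j j' with h | h | h
    · exact absurd heq ((mem_filter.1 hj).2 j' h).ne
    · exact h
    · exact absurd heq ((mem_filter.1 hj').2 j h).ne'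
  · obtain ⟨hmv, hvs⟩ := mem_Ico.1 hv
    obtain ⟨j, hjN, hrec, hj⟩ := exists_isRightRecord_eq hx hN hle hmin hmv hvs
    exact ⟨j, mem_filter.2 ⟨mem_range.2 hjN, hrec⟩, hj⟩

-- The cycle lemma of Dvoretzky and Motzkin.
theorem card_shifts_partialSums_pos (hx : Function.Periodic x N) (hN : 0 < N)
    (hle : ∀ n, x n ≤ 1) :
    #{j ∈ range N | ∀ n < N, 0 < ∑ i ∈ range (n + 1), x (j + i)} =
      (∑ i ∈ range N, x i).toNat := by
  classical
  rcases le_or_gt (∑ i ∈ range N, x i) 0 with hnonpos | hpos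
  · rw [Int.toNat_of_nonpos hnonpos, card_eq_zero, filter_eq_empty_iff]
    intro j _ hj
    have := hj (N - 1) (by omega)
    rw [Nat.sub_add_cancel hN, sum_range_shift_period hx] at this
    omega
  · rw [← card_isRightRecord hx hN hle hpos]
    congr 1
    exact filter_congr fun j _ => (isRightRecord_iff hx hN hpos j).symm

end CycleLemma

section Words

variable {N : ℕ}

def wordWeight (p : ℝ) (ε : Fin N → Bool) : ℝ := ∏ i, if ε i then p else 1 - p

def numOnes (ε : Fin N → Bool) : ℕ := ∑ i, (ε i).toNat

theorem sum_words_succ {M : Type*} [AddCommMonoid M] (f : (Fin (N + 1) → Bool) → M) :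
    ∑ ε, f ε = ∑ δ, f (Fin.cons false δ) + ∑ δ, f (Fin.cons true δ) := by
  rw [← (Fin.consEquiv fun _ => Bool).sum_comp, Fintype.sum_prod_type, Fintype.sum_bool,
    add_comm]
  rfl

theorem wordWeight_cons (p : ℝ) (b : Bool) (δ : Fin N → Bool) :
    wordWeight p (Fin.cons b δ : Fin (N + 1) → Bool) =
      (if b then p else 1 - p) * wordWeight p δ := by
  simp [wordWeight, Fin.prod_univ_succ]

theorem numOnes_cons (b : Bool) (δ : Fin N → Bool) :
    numOnes (Fin.cons b δ : Fin (N + 1) → Bool) = b.toNat + numOnes δ := by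
  simp [numOnes, Fin.sum_univ_succ]

theorem numOnes_le (ε : Fin N → Bool) : numOnes ε ≤ N := by
  calc numOnes ε ≤ ∑ _i : Fin N, 1 := sum_le_sum fun i _ => Bool.toNat_le (ε i)
    _ = N := by simp

theorem wordWeight_nonneg {p : ℝ} (hp0 : 0 ≤ p) (hp1 : p ≤ 1) (ε : Fin N → Bool) :
    0 ≤ wordWeight p ε :=
  prod_nonneg fun i _ => by split_ifs <;> linarith

theorem wordWeight_comp_perm (p : ℝ) (ε : Fin N → Bool) (σ : Equiv.Perm (Fin N)) :
    wordWeight p (ε ∘ σ) = wordWeight p ε :=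
  Equiv.prod_comp σ fun i => if ε i then p else 1 - p

theorem sum_wordWeight_mul_comp_perm (p : ℝ) (f : (Fin N → Bool) → ℝ) (σ : Equiv.Perm (Fin N)) :
    ∑ ε, wordWeight p ε * f (ε ∘ σ) = ∑ ε, wordWeight p ε * f ε := by
  rw [← (σ.arrowCongr (Equiv.refl Bool)).sum_comp]
  refine sum_congr rfl fun ε _ => ?_
  have : σ.arrowCongr (Equiv.refl Bool) ε ∘ σ = ε := by ext; simp [Equiv.arrowCongr]
  rw [this, ← wordWeight_comp_perm p _ σ, this]

theorem sum_wordWeight (p : ℝ) : ∀ N, ∑ ε : Fin N → Bool, wordWeight p ε = 1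
  | 0 => by simp [wordWeight]
  | N + 1 => by
    simp only [sum_words_succ, wordWeight_cons, ← mul_sum, sum_wordWeight p N]
    simp

theorem sum_wordWeight_mul_numOnes (p : ℝ) :
    ∀ N, ∑ ε : Fin N → Bool, wordWeight p ε * numOnes ε = N * p
  | 0 => by simp [numOnes]
  | N + 1 => by
    simp only [sum_words_succ, wordWeight_cons, numOnes_cons, Nat.cast_add, mul_add,
      mul_assoc, ← mul_sum, sum_add_distrib, ← sum_mul, sum_wordWeight,
      sum_wordWeight_mul_numOnes p N]
    simp only [Bool.false_eq_true, ↓reduceIte, Bool.toNat_false, CharP.cast_eq_zero, mul_zero,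
      zero_add, Bool.toNat_true, Nat.cast_one, mul_one]
    ring

end Words

section Walk

variable {N : ℕ}

def prefixOnes (ε : Fin N → Bool) (n : ℕ) : ℕ :=
  ∑ i : Fin N, if (i : ℕ) < n then (ε i).toNat else 0

-- In terms of the walk `W n = n - t * prefixOnes ε n`: `W n ≥ 0` for `n ≤ N`, resp. `W n > 0`
-- for `0 < n ≤ N`.
def IsLax (t : ℕ) (ε : Fin N → Bool) : Prop := ∀ n ≤ N, t * prefixOnes ε n ≤ n

def IsStrict (t : ℕ) (ε : Fin N → Bool) : Prop := ∀ n ≤ N, 0 < n → t * prefixOnes ε n < n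

instance (t : ℕ) : DecidablePred (IsLax (N := N) t) := fun _ => by
  unfold IsLax; infer_instance

instance (t : ℕ) : DecidablePred (IsStrict (N := N) t) := fun _ => by
  unfold IsStrict; infer_instance

theorem prefixOnes_zero (ε : Fin N → Bool) : prefixOnes ε 0 = 0 := by
  simp [prefixOnes]

theorem prefixOnes_self (ε : Fin N → Bool) : prefixOnes ε N = numOnes ε := by
  simp [prefixOnes, numOnes]

theorem prefixOnes_cons_succ (b : Bool) (δ : Fin N → Bool) (n : ℕ) :
    prefixOnes (Fin.cons b δ : Fin (N + 1) → Bool) (n + 1) = b.toNat + prefixOnes δ n := by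
  simp [prefixOnes, Fin.sum_univ_succ]

theorem isStrict_cons_iff {t : ℕ} (ht : 0 < t) (b : Bool) (δ : Fin N → Bool) :
    IsStrict t (Fin.cons b δ : Fin (N + 1) → Bool) ↔ b = false ∧ IsLax t δ := by
  simp only [IsStrict, IsLax]
  constructor
  · intro h
    have hb : b = false := by
      have := h 1 (by omega) one_pos
      rw [prefixOnes_cons_succ, prefixOnes_zero] at this
      cases b <;> simp_all
    refine ⟨hb, fun n hn => ?_⟩
    have := h (n + 1) (by omega) n.succ_pos
    rw [prefixOnes_cons_succ, hb] at this
    simp only [Bool.toNat_false, zero_add] at this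
    omega
  · rintro ⟨rfl, h⟩ n hn hn0
    obtain ⟨k, rfl⟩ := Nat.exists_eq_add_of_le' hn0
    rw [prefixOnes_cons_succ]
    simp only [Bool.toNat_false, zero_add]
    have := h k (by omega)
    omega

theorem sum_isStrict_succ {t : ℕ} (ht : 0 < t) (p : ℝ) :
    ∑ ε : Fin (N + 1) → Bool with IsStrict t ε, wordWeight p ε =
      (1 - p) * ∑ δ : Fin N → Bool with IsLax t δ, wordWeight p δ := by
  simp only [sum_filter, sum_words_succ, isStrict_cons_iff ht, wordWeight_cons, mul_sum]
  simp

theorem sum_fin_ite_lt {M : Type*} [AddCommMonoid M] (f : ℕ → M) {n : ℕ} (hn : n ≤ N) :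
    ∑ i : Fin N, (if (i : ℕ) < n then f i else 0) = ∑ i ∈ range n, f i := by
  rw [Fin.sum_univ_eq_sum_range (fun i => if i < n then f i else 0), ← sum_filter]
  congr 1
  ext i
  simp only [mem_filter, mem_range]
  omega

theorem prefixOnes_eq_sum_range (ε : Fin (N + 1) → Bool) {n : ℕ} (hn : n ≤ N + 1) :
    prefixOnes ε n = ∑ i ∈ range n, (ε (Fin.ofNat (N + 1) i)).toNat := by
  rw [← sum_fin_ite_lt _ hn, prefixOnes]
  simp only [Fin.ofNat_val_eq_self]

theorem isStrict_comp_addLeft_iff (t : ℕ) (ε : Fin (N + 1) → Bool) (j : ℕ) :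
    IsStrict t (ε ∘ Equiv.addLeft (Fin.ofNat (N + 1) j)) ↔
      ∀ n < N + 1,
        0 < ∑ i ∈ range (n + 1), (1 - t * (ε (Fin.ofNat (N + 1) (j + i))).toNat : ℤ) := by
  have hrot (n : ℕ) (hn : n ≤ N + 1) :
      prefixOnes (ε ∘ Equiv.addLeft (Fin.ofNat (N + 1) j)) n =
        ∑ i ∈ range n, (ε (Fin.ofNat (N + 1) (j + i))).toNat := by
    rw [prefixOnes_eq_sum_range _ hn]
    refine sum_congr rfl fun i _ => ?_
    simp only [Function.comp_apply, Equiv.coe_addLeft]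
    congr 3
    ext
    simp [Fin.val_add]
  simp only [sum_sub_distrib, sum_const, card_range, nsmul_one, ← mul_sum, sub_pos]
  constructor
  · intro h n hn
    have := h (n + 1) (by omega) n.succ_pos
    rw [hrot _ (by omega)] at this
    exact_mod_cast this
  · intro h n hn hn0
    obtain ⟨k, rfl⟩ : ∃ k, n = k + 1 := ⟨n - 1, by omega⟩
    rw [hrot _ hn]
    exact_mod_cast h k (by omega)

theorem card_rotations_isStrict (t : ℕ) (ε : Fin (N + 1) → Bool) :
    #{j ∈ range (N + 1) | IsStrict t (ε ∘ Equiv.addLeft (Fin.ofNat (N + 1) j))} =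
      ((N + 1 : ℤ) - t * numOnes ε).toNat := by
  set x : ℕ → ℤ := fun i => 1 - t * (ε (Fin.ofNat (N + 1) i)).toNat
  have hx : Function.Periodic x (N + 1) := fun n => by
    simp only [x, show Fin.ofNat (N + 1) (n + (N + 1)) = Fin.ofNat (N + 1) n from
      Fin.ext (by simp)]
  have htotal : ∑ i ∈ range (N + 1), x i = (N + 1 : ℤ) - t * numOnes ε := by
    simp only [x, sum_sub_distrib, sum_const, card_range, nsmul_one, ← mul_sum, numOnes,
      ← Fin.sum_univ_eq_sum_range (fun i => ((ε (Fin.ofNat (N + 1) i)).toNat : ℤ)),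
      Fin.ofNat_val_eq_self]
    push_cast
    rfl
  rw [← htotal, ← card_shifts_partialSums_pos hx N.succ_pos fun n => sub_le_self _ (by positivity)]
  exact congrArg card (filter_congr fun j _ => isStrict_comp_addLeft_iff t ε j)

theorem mul_sum_isStrict (t : ℕ) (p : ℝ) :
    (N + 1 : ℝ) * ∑ ε : Fin (N + 1) → Bool with IsStrict t ε, wordWeight p ε =
      ∑ ε : Fin (N + 1) → Bool, wordWeight p ε * max ((N + 1 : ℝ) - t * numOnes ε) 0 := by
  have hcount (ε : Fin (N + 1) → Bool) : max ((N + 1 : ℝ) - t * numOnes ε) 0 =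
      ∑ j ∈ range (N + 1),
        if IsStrict t (ε ∘ Equiv.addLeft (Fin.ofNat (N + 1) j)) then 1 else 0 := by
    rw [sum_boole, card_rotations_isStrict]
    exact_mod_cast (congrArg (Int.cast : ℤ → ℝ) (Int.toNat_eq_max _)).symm
  calc (N + 1 : ℝ) * ∑ ε : Fin (N + 1) → Bool with IsStrict t ε, wordWeight p ε
      = ∑ j ∈ range (N + 1), ∑ ε, wordWeight p ε * if IsStrict t ε then 1 else 0 := by
        rw [sum_const, card_range, nsmul_eq_mul, sum_filter]
        simp only [mul_ite, mul_one, mul_zero]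
        push_cast
        rfl
    _ = ∑ j ∈ range (N + 1), ∑ ε, wordWeight p ε *
          if IsStrict t (ε ∘ Equiv.addLeft (Fin.ofNat (N + 1) j)) then 1 else 0 :=
        sum_congr rfl fun j _ => (sum_wordWeight_mul_comp_perm p _ _).symm
    _ = ∑ ε, wordWeight p ε * max ((N + 1 : ℝ) - t * numOnes ε) 0 := by
        rw [sum_comm]
        simp_rw [hcount, mul_sum]

theorem max_sub_mul_le {n t k : ℕ} (hk : k ≤ n) :
    max ((n : ℝ) - t * k) 0 ≤ (n - t * k) + n * t * if n ≤ t * k then 1 else 0 := by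
  split_ifs with h
  · have : (n : ℝ) ≤ t * k := by exact_mod_cast h
    have : (t * k : ℝ) ≤ n * t := by rw [mul_comm]; gcongr
    rw [max_eq_right (by linarith)]
    linarith
  · have : (t * k : ℝ) ≤ n := by exact_mod_cast (not_le.1 h).le
    rw [max_eq_left (by linarith)]
    simp

theorem sum_isStrict_bounds {p : ℝ} (hp0 : 0 ≤ p) (hp1 : p ≤ 1) (t : ℕ) :
    1 - t * p ≤ ∑ ε : Fin (N + 1) → Bool with IsStrict t ε, wordWeight p ε ∧
      ∑ ε : Fin (N + 1) → Bool with IsStrict t ε, wordWeight p ε ≤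
        1 - t * p + t * ∑ ε : Fin (N + 1) → Bool with N + 1 ≤ t * numOnes ε, wordWeight p ε := by
  set a : (Fin (N + 1) → Bool) → ℝ := fun ε => ((N + 1 : ℕ) : ℝ) - t * numOnes ε
  have hmean : ∑ ε, wordWeight p ε * a ε = (N + 1) * (1 - t * p) := by
    simp only [a, mul_sub, sum_sub_distrib, ← sum_mul, sum_wordWeight, mul_left_comm _ (t : ℝ),
      ← mul_sum, sum_wordWeight_mul_numOnes]
    push_cast
    ring
  have hN : (0 : ℝ) < N + 1 := by positivity
  have hw := wordWeight_nonneg hp0 hp1 (N := N + 1)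
  have key : (N + 1 : ℝ) * ∑ ε : Fin (N + 1) → Bool with IsStrict t ε, wordWeight p ε =
      ∑ ε, wordWeight p ε * max (a ε) 0 := by
    simpa [a] using mul_sum_isStrict (N := N) t p
  constructor
  · refine le_of_mul_le_mul_left ?_ hN
    rw [key, ← hmean]
    exact sum_le_sum fun ε _ => mul_le_mul_of_nonneg_left (le_max_left _ _) (hw ε)
  · refine le_of_mul_le_mul_left ?_ hN
    rw [key]
    calc ∑ ε, wordWeight p ε * max (a ε) 0
        ≤ ∑ ε, wordWeight p ε *
            (a ε + (N + 1 : ℕ) * t * if N + 1 ≤ t * numOnes ε then 1 else 0) :=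
          sum_le_sum fun ε _ => mul_le_mul_of_nonneg_left (max_sub_mul_le (numOnes_le ε)) (hw ε)
      _ = (N + 1) * (1 - t * p + t * ∑ ε with N + 1 ≤ t * numOnes ε, wordWeight p ε) := by
          simp only [mul_add, sum_add_distrib, hmean, sum_filter, mul_sum]
          congr 1
          refine sum_congr rfl fun ε _ => ?_
          split_ifs <;> push_cast <;> ring

end Walk

section Probability

variable {Ω : Type*} {Y : ℕ → Ω → ℝ} {N : ℕ}

noncomputable def wordOf (Y : ℕ → Ω → ℝ) (N : ℕ) (ω : Ω) : Fin N → Bool :=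
  fun i => decide (Y i ω = 1)

theorem setOf_wordOf_eq (ε : Fin N → Bool) :
    {ω | wordOf Y N ω = ε} = ⋂ i : Fin N, Y i ⁻¹' (if ε i then {1} else {1}ᶜ) := by
  ext ω
  simp only [wordOf, funext_iff, Set.mem_iInter]
  refine forall_congr' fun i => ?_
  cases ε i <;> simp

theorem prefixOnes_wordOf (h01 : ∀ i ω, Y i ω = 0 ∨ Y i ω = 1) {n : ℕ} (hn : n ≤ N) (ω : Ω) :
    (prefixOnes (wordOf Y N ω) n : ℝ) = ∑ i ∈ range n, Y i ω := by
  rw [← sum_fin_ite_lt _ hn, prefixOnes]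
  push_cast
  refine sum_congr rfl fun i _ => ?_
  rcases h01 i ω with h | h <;> simp [wordOf, h]

theorem isLax_wordOf_iff (h01 : ∀ i ω, Y i ω = 0 ∨ Y i ω = 1) (t : ℕ) (ω : Ω) :
    IsLax t (wordOf Y N ω) ↔ ∀ n ≤ N, t * ∑ i ∈ range n, Y i ω ≤ n := by
  refine forall₂_congr fun n hn => ?_
  rw [← prefixOnes_wordOf h01 hn]
  exact_mod_cast Iff.rfl

theorem isStrict_wordOf_iff (h01 : ∀ i ω, Y i ω = 0 ∨ Y i ω = 1) (t : ℕ) (ω : Ω) :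
    IsStrict t (wordOf Y N ω) ↔ ∀ n ≤ N, 0 < n → t * ∑ i ∈ range n, Y i ω < n := by
  refine forall₂_congr fun n hn => ?_
  rw [← prefixOnes_wordOf h01 hn]
  exact_mod_cast Iff.rfl

variable [MeasurableSpace Ω] {μ : Measure Ω} [IsProbabilityMeasure μ] {p : ℝ}

theorem measurableSet_ite_singleton_one (b : Bool) :
    MeasurableSet (if b then {1} else {1}ᶜ : Set ℝ) := by
  split_ifs
  exacts [measurableSet_singleton 1, (measurableSet_singleton 1).compl]

theorem measurable_wordOf (hmeas : ∀ i, Measurable (Y i)) : Measurable (wordOf Y N) :=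
  measurable_to_countable' fun ε => by
    change MeasurableSet {ω | wordOf Y N ω = ε}
    rw [setOf_wordOf_eq]
    exact MeasurableSet.iInter fun i => hmeas i (measurableSet_ite_singleton_one (ε i))

theorem measure_setOf_wordOf_eq (hmeas : ∀ i, Measurable (Y i)) (hindep : iIndepFun Y μ)
    (hbern : ∀ i, μ {ω | Y i ω = 1} = ENNReal.ofReal p) (hp0 : 0 ≤ p) (hp1 : p ≤ 1)
    (ε : Fin N → Bool) :
    μ {ω | wordOf Y N ω = ε} = ENNReal.ofReal (wordWeight p ε) := by
  have hfactor (i : Fin N) : μ (Y i ⁻¹' (if ε i then {1} else {1}ᶜ)) =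
      ENNReal.ofReal (if ε i then p else 1 - p) := by
    have hY1 : μ (Y i ⁻¹' {1}) = ENNReal.ofReal p := hbern i
    cases ε i
    · rw [if_neg Bool.false_ne_true, if_neg Bool.false_ne_true, Set.preimage_compl,
        prob_compl_eq_one_sub (hmeas i (measurableSet_singleton 1)), hY1,
        ENNReal.ofReal_sub _ hp0, ENNReal.ofReal_one]
    · simpa using hY1
  rw [setOf_wordOf_eq, wordWeight,
    ENNReal.ofReal_prod_of_nonneg fun i _ => by split_ifs <;> linarith]
  have := (hindep.precomp Fin.val_injective).measure_inter_preimage_eq_mul univ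
    (sets := fun i : Fin N => if ε i then {1} else {1}ᶜ)
    fun i _ => measurableSet_ite_singleton_one (ε i)
  simpa [hfactor] using this

theorem measure_setOf_wordOf (hmeas : ∀ i, Measurable (Y i)) (hindep : iIndepFun Y μ)
    (hbern : ∀ i, μ {ω | Y i ω = 1} = ENNReal.ofReal p) (hp0 : 0 ≤ p) (hp1 : p ≤ 1)
    (P : (Fin N → Bool) → Prop) [DecidablePred P] :
    μ {ω | P (wordOf Y N ω)} = ENNReal.ofReal (∑ ε with P ε, wordWeight p ε) := by
  rw [ENNReal.ofReal_sum_of_nonneg fun ε _ => wordWeight_nonneg hp0 hp1 ε]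
  simp_rw [← measure_setOf_wordOf_eq hmeas hindep hbern hp0 hp1]
  convert (sum_measure_preimage_singleton (μ := μ) {ε | P ε} fun ε _ =>
    measurable_wordOf hmeas (measurableSet_singleton ε)).symm using 2
  · ext ω
    simp
  · rfl

end Probability

section StrongLaw

variable {Ω : Type*} [MeasurableSpace Ω] {μ : Measure Ω}

theorem integral_of_zero_one {X : Ω → ℝ} (hX : Measurable X) (h01 : ∀ ω, X ω = 0 ∨ X ω = 1) :
    μ[X] = μ.real {ω | X ω = 1} := by
  have : X = Set.indicator {ω | X ω = 1} 1 := funext fun ω => by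
    rcases h01 ω with h | h <;> simp [h]
  conv_lhs => rw [this]
  exact integral_indicator_one (hX (measurableSet_singleton 1))

variable [IsProbabilityMeasure μ]

open scoped Classical in
theorem measure_preimage_of_zero_one {X : Ω → ℝ} (hX : Measurable X)
    (h01 : ∀ ω, X ω = 0 ∨ X ω = 1) (s : Set ℝ) :
    μ (X ⁻¹' s) = (if (1 : ℝ) ∈ s then μ {ω | X ω = 1} else 0) +
      if (0 : ℝ) ∈ s then 1 - μ {ω | X ω = 1} else 0 := by
  have hm : MeasurableSet {ω | X ω = 1} := hX (measurableSet_singleton 1)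
  have hpre (ω : Ω) : ω ∈ X ⁻¹' s ↔ (X ω = 1 ∧ (1 : ℝ) ∈ s) ∨ (X ω ≠ 1 ∧ (0 : ℝ) ∈ s) := by
    rcases h01 ω with h | h <;> simp [h]
  by_cases h1 : (1 : ℝ) ∈ s <;> by_cases h0 : (0 : ℝ) ∈ s
  · have : X ⁻¹' s = Set.univ := Set.eq_univ_of_forall fun ω => by simp [hpre, h1, h0, em]
    simp [this, h1, h0, add_tsub_cancel_of_le prob_le_one]
  · have : X ⁻¹' s = {ω | X ω = 1} := Set.ext fun ω => by simp [hpre, h1, h0]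
    simp [this, h1, h0]
  · have : X ⁻¹' s = {ω | X ω = 1}ᶜ := Set.ext fun ω => by simp [hpre, h1, h0]
    simp [this, h1, h0, prob_compl_eq_one_sub hm]
  · have : X ⁻¹' s = ∅ := Set.eq_empty_of_forall_notMem fun ω => by simp [hpre, h1, h0]
    simp [this, h1, h0]

theorem identDistrib_of_zero_one {X X' : Ω → ℝ} (hX : Measurable X) (hX' : Measurable X')
    (h01 : ∀ ω, X ω = 0 ∨ X ω = 1) (h01' : ∀ ω, X' ω = 0 ∨ X' ω = 1)
    (h : μ {ω | X ω = 1} = μ {ω | X' ω = 1}) : IdentDistrib X X' μ μ where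
  aemeasurable_fst := hX.aemeasurable
  aemeasurable_snd := hX'.aemeasurable
  map_eq := Measure.ext fun s hs => by
    rw [Measure.map_apply hX hs, Measure.map_apply hX' hs, measure_preimage_of_zero_one hX h01,
      measure_preimage_of_zero_one hX' h01', h]

variable {Y : ℕ → Ω → ℝ} {p : ℝ}

theorem ae_tendsto_average_of_zero_one (hmeas : ∀ i, Measurable (Y i)) (hindep : iIndepFun Y μ)
    (h01 : ∀ i ω, Y i ω = 0 ∨ Y i ω = 1) (hbern : ∀ i, μ {ω | Y i ω = 1} = ENNReal.ofReal p)
    (hp0 : 0 ≤ p) :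
    ∀ᵐ ω ∂μ, Tendsto (fun n : ℕ => (∑ i ∈ range n, Y i ω) / n) atTop (𝓝 p) := by
  have hint : Integrable (Y 0) μ := Integrable.of_bound (hmeas 0).aestronglyMeasurable 1
    (ae_of_all _ fun ω => by rcases h01 0 ω with h | h <;> simp [h])
  have hident (i : ℕ) : IdentDistrib (Y i) (Y 0) μ μ :=
    identDistrib_of_zero_one (hmeas i) (hmeas 0) (h01 i) (h01 0) ((hbern i).trans (hbern 0).symm)
  have hmean : μ[Y 0] = p := by
    rw [integral_of_zero_one (hmeas 0) (h01 0), measureReal_def, hbern, ENNReal.toReal_ofReal hp0]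
  simpa [hmean] using strong_law_ae_real Y hint (fun i j hij => hindep.indepFun hij) hident

theorem tendsto_measure_le_average_of_zero_one (hmeas : ∀ i, Measurable (Y i))
    (hindep : iIndepFun Y μ) (h01 : ∀ i ω, Y i ω = 0 ∨ Y i ω = 1)
    (hbern : ∀ i, μ {ω | Y i ω = 1} = ENNReal.ofReal p) (hp0 : 0 ≤ p) {c : ℝ} (hc : p < c) :
    Tendsto (fun n : ℕ => μ {ω | c ≤ (∑ i ∈ range n, Y i ω) / n}) atTop (𝓝 0) := by
  have hconv := tendstoInMeasure_iff_dist.1 (tendstoInMeasure_of_tendsto_ae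
    (fun n => (Finset.measurable_sum _ fun i _ => hmeas i).div_const _ |>.aestronglyMeasurable)
    (ae_tendsto_average_of_zero_one hmeas hindep h01 hbern hp0)) (c - p) (sub_pos.2 hc)
  refine tendsto_of_tendsto_of_tendsto_of_le_of_le tendsto_const_nhds hconv (fun _ => zero_le)
    fun n => measure_mono fun ω hω => ?_
  change c - p ≤ dist _ _
  rw [Real.dist_eq]
  exact (sub_le_sub_right hω p).trans (le_abs_self _)

end StrongLaw

section RunningMax

theorem iSup_lt_of_tendsto {a : ℕ → ℝ} {c l : ℝ} (ha : ∀ n, a n < c)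
    (hl : Tendsto a atTop (𝓝 l)) (hlc : l < c) : ⨆ n, a n < c := by
  obtain ⟨K, hK⟩ := eventually_atTop.1 (hl.eventually (gt_mem_nhds (left_lt_add_div_two.2 hlc)))
  obtain ⟨m, -, hm⟩ := (range (K + 1)).exists_max_image a ⟨0, mem_range.2 K.succ_pos⟩
  refine lt_of_le_of_lt (ciSup_le fun n => ?_) (max_lt (add_div_two_lt_right.2 hlc) (ha m))
  rcases le_or_gt n K with h | h
  · exact (hm n (mem_range.2 (Nat.lt_succ_of_le h))).trans (le_max_right _ _)
  · exact (hK n h.le).le.trans (le_max_left _ _)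

variable {Ω : Type*} {Y : ℕ → Ω → ℝ}

noncomputable def runningMax (Y : ℕ → Ω → ℝ) (ω : Ω) : ℝ :=
  ⨆ n : ℕ, (∑ i ∈ range (n + 1), Y i ω) / (n + 1)

theorem runningMax_le_iff (h01 : ∀ i ω, Y i ω = 0 ∨ Y i ω = 1) (ω : Ω) (c : ℝ) :
    runningMax Y ω ≤ c ↔ ∀ n : ℕ, (∑ i ∈ range (n + 1), Y i ω) / (n + 1) ≤ c := by
  refine ciSup_le_iff ⟨1, ?_⟩
  rintro _ ⟨n, rfl⟩
  rw [div_le_one (by positivity)]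
  calc ∑ i ∈ range (n + 1), Y i ω ≤ ∑ _i ∈ range (n + 1), (1 : ℝ) :=
        sum_le_sum fun i _ => by rcases h01 i ω with h | h <;> simp [h]
    _ = n + 1 := by simp

theorem runningMax_le_inv_iff (h01 : ∀ i ω, Y i ω = 0 ∨ Y i ω = 1) {t : ℕ} (ht : 0 < t)
    (ω : Ω) : runningMax Y ω ≤ 1 / t ↔ ∀ N, IsLax t (wordOf Y N ω) := by
  have ht' : (0 : ℝ) < t := by exact_mod_cast ht
  have hdiv (n : ℕ) : (∑ i ∈ range (n + 1), Y i ω) / (n + 1) ≤ 1 / t ↔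
      t * ∑ i ∈ range (n + 1), Y i ω ≤ (n + 1 : ℕ) := by
    rw [div_le_div_iff₀ (by positivity) ht']
    push_cast
    constructor <;> intro h <;> linarith
  simp only [runningMax_le_iff h01, isLax_wordOf_iff h01, hdiv]
  constructor
  · intro h N n _
    cases n with
    | zero => simp
    | succ k => exact h k
  · exact fun h n => h (n + 1) (n + 1) le_rfl

end RunningMax

section Main

variable {Ω : Type*} {Y : ℕ → Ω → ℝ} {t : ℕ}

theorem forall_isStrict_wordOf_iff (h01 : ∀ i ω, Y i ω = 0 ∨ Y i ω = 1) (ht : 0 < t) (ω : Ω) :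
    (∀ N, IsStrict t (wordOf Y (N + 1) ω)) ↔
      ∀ n : ℕ, (∑ i ∈ range (n + 1), Y i ω) / (n + 1) < 1 / t := by
  have ht' : (0 : ℝ) < t := by exact_mod_cast ht
  have hdiv (n : ℕ) : (∑ i ∈ range (n + 1), Y i ω) / (n + 1) < 1 / t ↔
      t * ∑ i ∈ range (n + 1), Y i ω < (n + 1 : ℕ) := by
    rw [div_lt_div_iff₀ (by positivity) ht']
    push_cast
    constructor <;> intro h <;> linarith
  simp only [isStrict_wordOf_iff h01, hdiv]
  constructor
  · exact fun h n => h n (n + 1) le_rfl n.succ_pos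
  · intro h N n _ hn
    obtain ⟨k, rfl⟩ : ∃ k, n = k + 1 := ⟨n - 1, by omega⟩
    exact h k

theorem runningMax_eq_inv_of_not_forall_isStrict (h01 : ∀ i ω, Y i ω = 0 ∨ Y i ω = 1)
    (ht : 0 < t) {ω : Ω} (hle : runningMax Y ω ≤ 1 / t)
    (hstrict : ¬ ∀ N, IsStrict t (wordOf Y (N + 1) ω)) : runningMax Y ω = 1 / t := by
  simp only [forall_isStrict_wordOf_iff h01 ht, not_forall, not_lt] at hstrict
  obtain ⟨n, hn⟩ := hstrict
  exact hle.antisymm (hn.trans ((runningMax_le_iff h01 ω _).1 le_rfl n))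

theorem runningMax_lt_inv_of_forall_isStrict (h01 : ∀ i ω, Y i ω = 0 ∨ Y i ω = 1) (ht : 0 < t)
    {p : ℝ} (hp : p < 1 / t) {ω : Ω} (hstrict : ∀ N, IsStrict t (wordOf Y (N + 1) ω))
    (hlim : Tendsto (fun n : ℕ => (∑ i ∈ range n, Y i ω) / n) atTop (𝓝 p)) :
    runningMax Y ω < 1 / t := by
  refine iSup_lt_of_tendsto ((forall_isStrict_wordOf_iff h01 ht ω).1 hstrict) ?_ hp
  convert hlim.comp (tendsto_add_atTop_nat 1) using 2
  simp

theorem setOf_runningMax_le_inv (h01 : ∀ i ω, Y i ω = 0 ∨ Y i ω = 1) (ht : 0 < t) :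
    {ω | runningMax Y ω ≤ 1 / t} = ⋂ N, {ω | IsLax t (wordOf Y N ω)} := by
  ext ω
  simp only [Set.mem_iInter]
  exact runningMax_le_inv_iff h01 ht ω

theorem lt_one_of_lt_one_div {p : ℝ} (ht : 0 < t) (hp : p < 1 / t) : p < 1 :=
  hp.trans_le (by rw [div_le_one (by positivity)]; exact_mod_cast ht)

variable [MeasurableSpace Ω] {μ : Measure Ω} [IsProbabilityMeasure μ] {p : ℝ}

theorem measure_iInter_eq_of_tendsto {s : ℕ → Set Ω} (hs : ∀ n, MeasurableSet (s n))
    (hanti : Antitone s) {a : ENNReal} (h : Tendsto (fun n => μ (s n)) atTop (𝓝 a)) :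
    μ (⋂ n, s n) = a :=
  tendsto_nhds_unique (tendsto_measure_iInter_atTop (fun n => (hs n).nullMeasurableSet) hanti
    ⟨0, measure_ne_top μ _⟩) h

theorem tendsto_sum_isStrict (hmeas : ∀ i, Measurable (Y i)) (hindep : iIndepFun Y μ)
    (h01 : ∀ i ω, Y i ω = 0 ∨ Y i ω = 1) (hbern : ∀ i, μ {ω | Y i ω = 1} = ENNReal.ofReal p)
    (hp0 : 0 ≤ p) (ht : 0 < t) (hp : p < 1 / t) :
    Tendsto (fun N => ∑ ε : Fin (N + 1) → Bool with IsStrict t ε, wordWeight p ε) atTop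
      (𝓝 (1 - t * p)) := by
  have hp1 := (lt_one_of_lt_one_div ht hp).le
  set B : ℕ → ℝ := fun N => ∑ ε : Fin (N + 1) → Bool with N + 1 ≤ t * numOnes ε, wordWeight p ε
  have hB_le (N : ℕ) : B N ≤
      (μ {ω | 1 / t ≤ (∑ i ∈ range (N + 1), Y i ω) / (N + 1 : ℕ)}).toReal := by
    rw [← ENNReal.ofReal_le_iff_le_toReal (measure_ne_top μ _),
      ← measure_setOf_wordOf hmeas hindep hbern hp0 hp1]
    refine measure_mono fun ω hω => ?_
    have hω : ((N + 1 : ℕ) : ℝ) ≤ t * numOnes (wordOf Y (N + 1) ω) := by exact_mod_cast hω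
    rw [← prefixOnes_self, prefixOnes_wordOf h01 le_rfl] at hω
    change 1 / (t : ℝ) ≤ _
    rw [div_le_div_iff₀ (by positivity) (by positivity)]
    linarith
  have hB : Tendsto B atTop (𝓝 0) := by
    have hmeas_lim := (ENNReal.tendsto_toReal ENNReal.zero_ne_top).comp
      ((tendsto_measure_le_average_of_zero_one hmeas hindep h01 hbern hp0 hp).comp
        (tendsto_add_atTop_nat 1))
    exact tendsto_of_tendsto_of_tendsto_of_le_of_le tendsto_const_nhds hmeas_lim
      (fun N => sum_nonneg fun ε _ => wordWeight_nonneg hp0 hp1 ε) hB_le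
  have hupper : Tendsto (fun N => 1 - t * p + t * B N) atTop (𝓝 (1 - t * p)) := by
    simpa using (hB.const_mul (t : ℝ)).const_add (1 - t * p)
  exact tendsto_of_tendsto_of_tendsto_of_le_of_le tendsto_const_nhds hupper
    (fun N => (sum_isStrict_bounds hp0 hp1 t).1) fun N => (sum_isStrict_bounds hp0 hp1 t).2

theorem measure_iInter_isStrict (hmeas : ∀ i, Measurable (Y i)) (hindep : iIndepFun Y μ)
    (h01 : ∀ i ω, Y i ω = 0 ∨ Y i ω = 1) (hbern : ∀ i, μ {ω | Y i ω = 1} = ENNReal.ofReal p)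
    (hp0 : 0 ≤ p) (ht : 0 < t) (hp : p < 1 / t) :
    μ (⋂ N, {ω | IsStrict t (wordOf Y (N + 1) ω)}) = ENNReal.ofReal (1 - t * p) := by
  have hp1 := (lt_one_of_lt_one_div ht hp).le
  refine measure_iInter_eq_of_tendsto
    (fun N => measurable_wordOf hmeas (Set.toFinite {ε | IsStrict t ε}).measurableSet)
    (fun N N' hNN' ω hω => ?_) ?_
  · replace hω : IsStrict t (wordOf Y (N' + 1) ω) := hω
    show IsStrict t (wordOf Y (N + 1) ω)
    rw [isStrict_wordOf_iff h01] at hω ⊢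
    exact fun n hn => hω n (by omega)
  · show Tendsto (fun N => μ {ω | IsStrict t (wordOf Y (N + 1) ω)}) atTop _
    simp only [measure_setOf_wordOf hmeas hindep hbern hp0 hp1]
    exact (ENNReal.continuous_ofReal.tendsto _).comp
      (tendsto_sum_isStrict hmeas hindep h01 hbern hp0 ht hp)

theorem measure_iInter_isLax (hmeas : ∀ i, Measurable (Y i)) (hindep : iIndepFun Y μ)
    (h01 : ∀ i ω, Y i ω = 0 ∨ Y i ω = 1) (hbern : ∀ i, μ {ω | Y i ω = 1} = ENNReal.ofReal p)
    (hp0 : 0 ≤ p) (ht : 0 < t) (hp : p < 1 / t) :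
    μ (⋂ N, {ω | IsLax t (wordOf Y N ω)}) = ENNReal.ofReal ((1 - t * p) / (1 - p)) := by
  have hp1 := lt_one_of_lt_one_div ht hp
  refine measure_iInter_eq_of_tendsto
    (fun N => measurable_wordOf hmeas (Set.toFinite {ε | IsLax t ε}).measurableSet)
    (fun N N' hNN' ω hω => ?_) ?_
  · replace hω : IsLax t (wordOf Y N' ω) := hω
    show IsLax t (wordOf Y N ω)
    rw [isLax_wordOf_iff h01] at hω ⊢
    exact fun n hn => hω n (by omega)
  · show Tendsto (fun N => μ {ω | IsLax t (wordOf Y N ω)}) atTop _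
    simp only [measure_setOf_wordOf hmeas hindep hbern hp0 hp1.le]
    refine (ENNReal.continuous_ofReal.tendsto _).comp
      (((tendsto_sum_isStrict hmeas hindep h01 hbern hp0 ht hp).div_const (1 - p)).congr
        fun N => ?_)
    rw [sum_isStrict_succ ht, mul_div_cancel_left₀ _ (sub_ne_zero.2 hp1.ne')]

theorem measure_setOf_runningMax_le_inv (hmeas : ∀ i, Measurable (Y i))
    (hindep : iIndepFun Y μ) (h01 : ∀ i ω, Y i ω = 0 ∨ Y i ω = 1)
    (hbern : ∀ i, μ {ω | Y i ω = 1} = ENNReal.ofReal p) (hp0 : 0 ≤ p) (ht : 0 < t)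
    (hp : p < 1 / t) :
    μ {ω | runningMax Y ω ≤ 1 / t} = ENNReal.ofReal ((1 - t * p) / (1 - p)) := by
  rw [setOf_runningMax_le_inv h01 ht, measure_iInter_isLax hmeas hindep h01 hbern hp0 ht hp]

theorem measure_setOf_runningMax_eq_inv_eq_diff (hmeas : ∀ i, Measurable (Y i))
    (hindep : iIndepFun Y μ) (h01 : ∀ i ω, Y i ω = 0 ∨ Y i ω = 1)
    (hbern : ∀ i, μ {ω | Y i ω = 1} = ENNReal.ofReal p) (hp0 : 0 ≤ p) (ht : 0 < t)
    (hp : p < 1 / t) :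
    μ {ω | runningMax Y ω = 1 / t} =
      μ ({ω | runningMax Y ω ≤ 1 / t} \ ⋂ N, {ω | IsStrict t (wordOf Y (N + 1) ω)}) := by
  set Z := {ω | ¬ Tendsto (fun n : ℕ => (∑ i ∈ range n, Y i ω) / n) atTop (𝓝 p)}
  have hZ : μ Z = 0 := ae_iff.1 (ae_tendsto_average_of_zero_one hmeas hindep h01 hbern hp0)
  have hcover : {ω | runningMax Y ω = 1 / t} ⊆
      ({ω | runningMax Y ω ≤ 1 / t} \ ⋂ N, {ω | IsStrict t (wordOf Y (N + 1) ω)}) ∪ Z := by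
    intro ω hω
    by_cases hlim : Tendsto (fun n : ℕ => (∑ i ∈ range n, Y i ω) / n) atTop (𝓝 p)
    · refine Or.inl ⟨le_of_eq hω, fun hS => ?_⟩
      replace hS : ∀ N, IsStrict t (wordOf Y (N + 1) ω) := by simpa using hS
      exact (runningMax_lt_inv_of_forall_isStrict h01 ht hp hS hlim).ne hω
    · exact Or.inr hlim
  refine le_antisymm ?_ (measure_mono fun ω ⟨hL, hS⟩ =>
    runningMax_eq_inv_of_not_forall_isStrict h01 ht hL (by simpa using hS))
  calc μ {ω | runningMax Y ω = 1 / t} ≤ _ := measure_mono hcover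
    _ ≤ _ := measure_union_le _ _
    _ = _ := by rw [hZ, add_zero]

theorem measure_setOf_runningMax_eq_inv (hmeas : ∀ i, Measurable (Y i)) (hindep : iIndepFun Y μ)
    (h01 : ∀ i ω, Y i ω = 0 ∨ Y i ω = 1) (hbern : ∀ i, μ {ω | Y i ω = 1} = ENNReal.ofReal p)
    (hp0 : 0 ≤ p) (ht : 0 < t) (hp : p < 1 / t) :
    μ {ω | runningMax Y ω = 1 / t} = ENNReal.ofReal ((1 - t * p) * p / (1 - p)) := by
  have htp : 0 ≤ 1 - t * p := by
    have := (lt_div_iff₀ (by positivity : (0 : ℝ) < t)).1 hp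
    linarith
  have hsub : ⋂ N, {ω | IsStrict t (wordOf Y (N + 1) ω)} ⊆ {ω | runningMax Y ω ≤ 1 / t} :=
    fun ω hω => (runningMax_le_iff h01 ω _).2 fun n =>
      ((forall_isStrict_wordOf_iff h01 ht ω).1 (by simpa using hω) n).le
  have hmeasS : MeasurableSet (⋂ N, {ω | IsStrict t (wordOf Y (N + 1) ω)}) :=
    MeasurableSet.iInter fun N =>
      measurable_wordOf hmeas (Set.toFinite {ε | IsStrict t ε}).measurableSet
  rw [measure_setOf_runningMax_eq_inv_eq_diff hmeas hindep h01 hbern hp0 ht hp,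
    measure_sdiff hsub hmeasS.nullMeasurableSet (measure_ne_top μ _),
    measure_setOf_runningMax_le_inv hmeas hindep h01 hbern hp0 ht hp,
    measure_iInter_isStrict hmeas hindep h01 hbern hp0 ht hp, ← ENNReal.ofReal_sub _ htp]
  congr 1
  field_simp [(sub_pos.2 (lt_one_of_lt_one_div ht hp)).ne']
  ring

end Main

end BernoulliRunningMax

open BernoulliRunningMax

theorem bernoulli_running_max_at_inv_t_general {Ω : Type*} [MeasurableSpace Ω]
    (μ : Measure Ω) [IsProbabilityMeasure μ] (p : ℝ) (t : ℕ)
    (hp0 : 0 < p) (hp : p < 1 / t)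
    (Y : ℕ → Ω → ℝ) (hmeas : ∀ i, Measurable (Y i))
    (hindep : iIndepFun Y μ)
    (h01 : ∀ i ω, Y i ω = 0 ∨ Y i ω = 1)
    (hbern : ∀ i, μ {ω | Y i ω = 1} = ENNReal.ofReal p)
    (M : Ω → ℝ)
    (hM : ∀ ω, M ω = ⨆ n : ℕ, (∑ i ∈ Finset.range (n + 1), Y i ω) / (n + 1)) :
    μ {ω | M ω ≤ 1 / t} = ENNReal.ofReal ((1 - t * p) / (1 - p)) ∧
    μ {ω | M ω = 1 / t} = ENNReal.ofReal ((1 - t * p) * p / (1 - p)) := by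
  have ht : 0 < t := Nat.pos_of_ne_zero fun h => by
    rw [h, Nat.cast_zero, div_zero] at hp
    exact hp.not_gt hp0
  obtain rfl : M = runningMax Y := funext hM
  exact ⟨measure_setOf_runningMax_le_inv hmeas hindep h01 hbern hp0.le ht hp,
    measure_setOf_runningMax_eq_inv hmeas hindep h01 hbern hp0.le ht hp⟩

/-- For i.i.d. Bernoulli(p) variables `Y_i` and an integer `t ≥ 2` with
`p < 1/t`, letting `M = sup_{n≥1} (Y_1 + ⋯ + Y_n)/n`, we have
`P(M ≤ 1/t) = (1 − tp)/(1 − p)` and `P(M = 1/t) = (1 − tp)p/(1 − p)`. -/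
theorem bernoulli_running_max_at_inv_t {Ω : Type*} [MeasurableSpace Ω]
    (μ : Measure Ω) [IsProbabilityMeasure μ] (p : ℝ) (t : ℕ) (ht : 2 ≤ t)
    (hp0 : 0 < p) (hp : p < 1 / t)
    (Y : ℕ → Ω → ℝ) (hmeas : ∀ i, Measurable (Y i))
    (hindep : iIndepFun Y μ)
    (h01 : ∀ i ω, Y i ω = 0 ∨ Y i ω = 1)
    (hbern : ∀ i, μ {ω | Y i ω = 1} = ENNReal.ofReal p)
    (M : Ω → ℝ)
    (hM : ∀ ω, M ω = ⨆ n : ℕ, (∑ i ∈ Finset.range (n + 1), Y i ω) / (n + 1)) :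
    μ {ω | M ω ≤ 1 / t} = ENNReal.ofReal ((1 - t * p) / (1 - p)) ∧
    μ {ω | M ω = 1 / t} = ENNReal.ofReal ((1 - t * p) * p / (1 - p)) :=
  bernoulli_running_max_at_inv_t_general μ p t hp0 hp Y hmeas hindep h01 hbern M hM
end

section
/- Let (Y_i) be i.i.d. Bernoulli(p) with 0 < p < (t−1)/t for an integer t ≥ 2, S_n = Y_1+⋯+Y_n, and M(p) = sup_{n≥1} S_n/n. Define R_t(p) = p·T_t(q p^{t−1}) where q = 1−p and T_t is the t-ary tree function. Then P(M(p) ≤ (t−1)/t) = 1 − R_t(p). -/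
open MeasureTheory ProbabilityTheory

/-- The `t`-ary tree function `T_t(z) = Σ_{n≥0} C(nt,n) z^n/(n(t−1)+1)`. -/
noncomputable def treeFun (t : ℕ) (z : ℝ) : ℝ :=
  ∑' n : ℕ, (Nat.choose (n * t) n : ℝ) * z ^ n / ((n : ℝ) * ((t : ℝ) - 1) + 1)

/-- `R_t(p) = p·T_t(q p^{t−1})` with `q = 1 − p`. -/
noncomputable def Rt (t : ℕ) (p : ℝ) : ℝ := p * treeFun t ((1 - p) * p ^ (t - 1))

/-!
Write `W_j = t S_j - (t - 1) j` for the walk with steps `+1` (where `Y_i = 1`) and `1 - t`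
(where `Y_i = 0`); then `M ≤ (t - 1)/t` says that `W` never becomes positive. As `W` climbs one
unit at a time, it becomes positive exactly when it first hits `1`, at some time `n`, and then
`n = kt + 1` with `k` down-steps. By the cycle lemma exactly one of the `n` rotations of a step
sequence with sum `1` is a first-passage path, so there are
`C(kt+1, k)/(kt+1) = C(kt, k)/(k(t-1)+1)` first-passage paths of length `kt + 1`, each of
probability `p^{k(t-1)+1} q^k`. Summing over `k` gives `P(M > (t-1)/t) = p T_t(q p^{t-1}) = R_t(p)`.
-/

open Finset

namespace BernoulliFirstPassage

noncomputable def treeFunTerm (t : ℕ) (z : ℝ) (k : ℕ) : ℝ :=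
  (Nat.choose (k * t) k : ℝ) * z ^ k / ((k : ℝ) * ((t : ℝ) - 1) + 1)

theorem treeFun_eq_tsum (t : ℕ) (z : ℝ) : treeFun t z = ∑' k, treeFunTerm t z k := rfl

theorem treeFunTerm_nonneg {t : ℕ} (ht : 0 < t) {z : ℝ} (hz : 0 ≤ z) (k : ℕ) :
    0 ≤ treeFunTerm t z k := by
  have : (1 : ℝ) ≤ t := by exact_mod_cast ht
  unfold treeFunTerm
  positivity

theorem Rt_nonneg {t : ℕ} (ht : 0 < t) {p : ℝ} (hp0 : 0 ≤ p) (hp1 : p ≤ 1) : 0 ≤ Rt t p :=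
  mul_nonneg hp0 <| treeFun_eq_tsum t _ ▸
    tsum_nonneg (treeFunTerm_nonneg ht (mul_nonneg (by linarith) (by positivity)))

def IsFirstPassageTime (W : ℕ → ℤ) (n : ℕ) : Prop :=
  (∀ j, 0 < j → j < n → W j ≤ 0) ∧ W n = 1

theorem IsFirstPassageTime.eq {W : ℕ → ℤ} {m n : ℕ} (hm : IsFirstPassageTime W m)
    (hn : IsFirstPassageTime W n) (hm0 : 0 < m) (hn0 : 0 < n) : m = n := by
  rcases lt_trichotomy m n with h | h | h
  · linarith [hn.1 m hm0 h, hm.2]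
  · exact h
  · linarith [hm.1 n hn0 h, hn.2]

theorem isFirstPassageTime_congr {W W' : ℕ → ℤ} {n : ℕ} (h : ∀ j ≤ n, W j = W' j) :
    IsFirstPassageTime W n ↔ IsFirstPassageTime W' n := by
  simp only [IsFirstPassageTime, h n le_rfl]
  exact and_congr_left' (forall₂_congr fun j _ => forall_congr' fun hjn => by rw [h j hjn.le])

theorem exists_pos_iff_exists_isFirstPassageTime {W : ℕ → ℤ} (h0 : W 0 ≤ 0)
    (hstep : ∀ j, W (j + 1) ≤ W j + 1) :
    (∃ j, 0 < W j) ↔ ∃ m, IsFirstPassageTime W (m + 1) := by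
  classical
  refine ⟨fun hex => ?_, fun ⟨m, hm⟩ => ⟨m + 1, by linarith [hm.2]⟩⟩
  obtain ⟨m, hm⟩ : ∃ m, Nat.find hex = m + 1 :=
    Nat.exists_eq_succ_of_ne_zero fun h => by linarith [h ▸ Nat.find_spec hex]
  have hbefore : ∀ j < m + 1, W j ≤ 0 := fun j hj => not_lt.1 (Nat.find_min hex (hm ▸ hj))
  refine ⟨m, fun j _ hj => hbefore j hj, ?_⟩
  linarith [hm ▸ Nat.find_spec hex, hstep m, hbefore m m.lt_succ_self]

section CycleLemma

variable {n : ℕ}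

def prefixSum (a : ZMod n → ℤ) (j : ℕ) : ℤ := ∑ i ∈ range j, a (i : ℕ)

theorem prefixSum_add (a : ZMod n → ℤ) (j k : ℕ) :
    prefixSum a (j + k) = prefixSum a j + ∑ i ∈ range k, a ((j + i : ℕ) : ZMod n) := by
  simp only [prefixSum, sum_range_add]

theorem sum_range_natCast_add [NeZero n] (a : ZMod n → ℤ) (j : ℕ) :
    ∑ i ∈ range n, a ((j + i : ℕ) : ZMod n) = prefixSum a n := by
  induction j with
  | zero => simp [prefixSum]
  | succ j ih =>
    have hshift := (sum_range_succ' (fun i => a ((j + i : ℕ) : ZMod n)) n).symm.trans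
      (sum_range_succ (fun i => a ((j + i : ℕ) : ZMod n)) n)
    simp only [Nat.cast_add j n, ZMod.natCast_self, add_zero, ← add_assoc] at hshift
    simp only [Nat.add_right_comm j 1, ← ih]
    linarith

theorem prefixSum_add_period [NeZero n] (a : ZMod n → ℤ) (j : ℕ) :
    prefixSum a (j + n) = prefixSum a j + prefixSum a n := by
  rw [prefixSum_add, sum_range_natCast_add]

theorem prefixSum_rotate [NeZero n] (a : ZMod n → ℤ) (r : ZMod n) (j : ℕ) :
    prefixSum (fun i => a (i + r)) j = prefixSum a (r.val + j) - prefixSum a r.val := by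
  rw [prefixSum_add, add_sub_cancel_left, prefixSum]
  simp only [Nat.cast_add, ZMod.natCast_zmod_val, add_comm]

/-- The cycle lemma goes through `tilt`: when `prefixSum a n = 1` it is `n`-periodic, its values
at `0, …, n - 1` are distinct modulo `n`, and rotating `a` by `r` gives a first passage exactly
when `r` is the strict maximum of `tilt a` on `0, …, n - 1`. -/
def tilt (a : ZMod n → ℤ) (j : ℕ) : ℤ := n * prefixSum a j - j

theorem tilt_add_period [NeZero n] {a : ZMod n → ℤ} (h : prefixSum a n = 1) (j : ℕ) :
    tilt a (j + n) = tilt a j := by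
  simp only [tilt, prefixSum_add_period, h, Nat.cast_add]
  ring

theorem tilt_eq_tilt_val [NeZero n] {a : ZMod n → ℤ} (h : prefixSum a n = 1) (j : ℕ) :
    tilt a j = tilt a (j : ZMod n).val := by
  rw [ZMod.val_natCast]
  induction j using Nat.strong_induction_on with
  | _ j ih =>
    rcases lt_or_ge j n with hj | hj
    · rw [Nat.mod_eq_of_lt hj]
    · obtain ⟨i, rfl⟩ := Nat.exists_eq_add_of_le' hj
      rw [tilt_add_period h, Nat.add_mod_right, ih i (Nat.lt_add_of_pos_right (NeZero.pos n))]

theorem prefixSum_le_iff_tilt_lt (a : ZMod n → ℤ) {j k : ℕ} (hjk : j < k) (hkj : k < j + n) :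
    prefixSum a k ≤ prefixSum a j ↔ tilt a k < tilt a j := by
  have hn : (k : ℤ) - j < n := by omega
  have hk : (j : ℤ) < k := by exact_mod_cast hjk
  simp only [tilt]
  constructor
  · intro hle
    nlinarith
  · intro hlt
    by_contra! hgt
    nlinarith

theorem tilt_val_injective [NeZero n] (a : ZMod n → ℤ) :
    Function.Injective fun x : ZMod n => tilt a x.val := by
  intro x y hxy
  have hdvd : (n : ℤ) ∣ (x.val : ℤ) - y.val :=
    ⟨prefixSum a x.val - prefixSum a y.val, by simp only [tilt] at hxy; linarith⟩
  have hlt : |(x.val : ℤ) - y.val| < n := by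
    have := x.val_lt; have := y.val_lt
    rw [abs_lt]; constructor <;> omega
  exact ZMod.val_injective n
    (by exact_mod_cast sub_eq_zero.1 (Int.eq_zero_of_abs_lt_dvd hdvd hlt))

theorem isFirstPassageTime_rotate_iff [NeZero n] {a : ZMod n → ℤ} (h : prefixSum a n = 1)
    (r : ZMod n) : IsFirstPassageTime (prefixSum fun i => a (i + r)) n ↔
      ∀ x ≠ r, tilt a x.val < tilt a r.val := by
  have hend : prefixSum (fun i => a (i + r)) n = 1 := by
    rw [prefixSum_rotate, prefixSum_add_period, h, add_sub_cancel_left]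
  have hstep : ∀ j, 0 < j → j < n →
      (prefixSum (fun i => a (i + r)) j ≤ 0 ↔ tilt a (r.val + j) < tilt a r.val) := by
    intro j hj0 hjn
    rw [prefixSum_rotate, sub_nonpos, prefixSum_le_iff_tilt_lt a (by omega) (by omega)]
  simp only [IsFirstPassageTime, hend, and_true]
  constructor
  · intro hfirst x hx
    have hpos : 0 < (x - r).val :=
      Nat.pos_of_ne_zero ((ZMod.val_ne_zero _).2 (sub_ne_zero.2 hx))
    have := (hstep _ hpos (ZMod.val_lt _)).1 (hfirst _ hpos (ZMod.val_lt _))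
    rwa [tilt_eq_tilt_val h, Nat.cast_add, ZMod.natCast_zmod_val, ZMod.natCast_zmod_val,
      add_sub_cancel] at this
  · intro hmax j hj0 hjn
    rw [hstep j hj0 hjn, tilt_eq_tilt_val h (r.val + j)]
    apply hmax
    rw [Nat.cast_add, ZMod.natCast_zmod_val, Ne, add_eq_left, ZMod.natCast_eq_zero_iff]
    exact Nat.not_dvd_of_pos_of_lt hj0 hjn

theorem existsUnique_isFirstPassageTime_rotate [NeZero n] {a : ZMod n → ℤ}
    (h : prefixSum a n = 1) :
    ∃! r : ZMod n, IsFirstPassageTime (prefixSum fun i => a (i + r)) n := by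
  simp only [isFirstPassageTime_rotate_iff h]
  obtain ⟨r, -, hr⟩ := exists_max_image univ (fun x : ZMod n => tilt a x.val) univ_nonempty
  refine ⟨r, fun x hx => (hr x (mem_univ x)).lt_of_ne fun he => hx (tilt_val_injective a he),
    fun s hs => ?_⟩
  by_contra hsr
  exact (hs r (Ne.symm hsr)).not_ge (hr s (mem_univ s))

theorem prefixSum_eq_sum [NeZero n] (a : ZMod n → ℤ) : prefixSum a n = ∑ x, a x :=
  sum_nbij' Nat.cast ZMod.val (by simp) (by simp [ZMod.val_lt])
    (fun i hi => ZMod.val_cast_of_lt (mem_range.1 hi)) (fun x _ => ZMod.natCast_zmod_val x)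
    (fun _ _ => rfl)

end CycleLemma

section Counting

variable {t n : ℕ}

def steps (t : ℕ) (D : Finset (ZMod n)) (i : ZMod n) : ℤ := if i ∈ D then 1 - t else 1

open scoped Classical in
noncomputable def firstPassageSets (t n : ℕ) [NeZero n] : Finset (Finset (ZMod n)) :=
  {D | IsFirstPassageTime (prefixSum (steps t D)) n}

theorem mem_firstPassageSets [NeZero n] {D : Finset (ZMod n)} :
    D ∈ firstPassageSets t n ↔ IsFirstPassageTime (prefixSum (steps t D)) n := by
  simp [firstPassageSets]

theorem prefixSum_steps [NeZero n] (D : Finset (ZMod n)) :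
    prefixSum (steps t D) n = n - t * #D := by
  have hstep : ∀ x, steps t D x = 1 - if x ∈ D then (t : ℤ) else 0 := by
    intro x; unfold steps; split_ifs <;> ring
  simp only [prefixSum_eq_sum, hstep, sum_sub_distrib, sum_ite_mem, univ_inter]
  simp [mul_comm]

theorem steps_map_symm_addRight (D : Finset (ZMod n)) (r : ZMod n) :
    steps t (D.map (Equiv.addRight r).symm.toEmbedding) = fun i => steps t D (i + r) := by
  ext i
  simp [steps, mem_map_equiv]

theorem card_eq_of_mem_firstPassageSets [NeZero n] {D : Finset (ZMod n)}
    (hD : D ∈ firstPassageSets t n) : n = t * #D + 1 := by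
  have h := (mem_firstPassageSets.1 hD).2
  rw [prefixSum_steps] at h
  zify
  linarith

theorem firstPassageSets_eq_empty [NeZero n] (hn : ¬ t ∣ n - 1) :
    firstPassageSets t n = ∅ :=
  eq_empty_of_forall_notMem fun D hD =>
    hn ⟨#D, by have := card_eq_of_mem_firstPassageSets hD; omega⟩

theorem card_of_mem_firstPassageSets_mul_add_one (ht : 0 < t) {k : ℕ}
    {D : Finset (ZMod (k * t + 1))} (hD : D ∈ firstPassageSets t (k * t + 1)) : #D = k := by
  have h : k * t + 1 = t * #D + 1 := card_eq_of_mem_firstPassageSets hD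
  exact Nat.eq_of_mul_eq_mul_left ht (by linarith)

theorem prefixSum_steps_mul_add_one {k : ℕ} {E : Finset (ZMod (k * t + 1))} (hE : #E = k) :
    prefixSum (steps t E) (k * t + 1) = 1 := by
  rw [prefixSum_steps, hE]
  push_cast
  ring

theorem map_symm_addRight_mem_firstPassageSets_iff [NeZero n] (E : Finset (ZMod n))
    (r : ZMod n) :
    E.map (Equiv.addRight r).symm.toEmbedding ∈ firstPassageSets t n ↔
      IsFirstPassageTime (prefixSum fun i => steps t E (i + r)) n := by
  rw [mem_firstPassageSets, steps_map_symm_addRight]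

/-- `(D, r) ↦ D + r` is a bijection from `firstPassageSets × ZMod n` onto the `k`-subsets: by the
cycle lemma each `k`-subset has exactly one rotation that is a first passage. -/
theorem card_firstPassageSets_mul (ht : 0 < t) (k : ℕ) :
    #(firstPassageSets t (k * t + 1)) * (k * t + 1) = (k * t + 1).choose k := by
  set n := k * t + 1
  have hbij : #(firstPassageSets t n ×ˢ (univ : Finset (ZMod n))) =
      #(powersetCard k (univ : Finset (ZMod n))) := by
    refine card_bij (fun x _ => x.1.map (Equiv.addRight x.2).toEmbedding) ?_ ?_ ?_
    · rintro ⟨D, r⟩ hx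
      rw [mem_powersetCard, card_map]
      exact ⟨subset_univ _, card_of_mem_firstPassageSets_mul_add_one ht (mem_product.1 hx).1⟩
    · rintro ⟨D, r⟩ hx ⟨D', r'⟩ hx' (he : D.map _ = D'.map _)
      rw [mem_product] at hx hx'
      set E := D.map (Equiv.addRight r).toEmbedding
      have hD : E.map (Equiv.addRight r).symm.toEmbedding = D :=
        (Equiv.addRight r).finsetCongr.symm_apply_apply D
      have hD' : E.map (Equiv.addRight r').symm.toEmbedding = D' := by
        rw [he]
        exact (Equiv.addRight r').finsetCongr.symm_apply_apply D'
      have hE : #E = k := by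
        rw [card_map]
        exact card_of_mem_firstPassageSets_mul_add_one ht hx.1
      obtain ⟨r₀, -, huniq⟩ :=
        existsUnique_isFirstPassageTime_rotate (prefixSum_steps_mul_add_one hE)
      have hr : r = r' :=
        (huniq r ((map_symm_addRight_mem_firstPassageSets_iff E r).1 (hD ▸ hx.1))).trans
          (huniq r' ((map_symm_addRight_mem_firstPassageSets_iff E r').1 (hD' ▸ hx'.1))).symm
      subst hr
      exact Prod.ext (map_injective _ he) rfl
    · intro E hE
      obtain ⟨r, hr, -⟩ := existsUnique_isFirstPassageTime_rotate
        (prefixSum_steps_mul_add_one (mem_powersetCard.1 hE).2)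
      exact ⟨(E.map (Equiv.addRight r).symm.toEmbedding, r),
        mem_product.2 ⟨(map_symm_addRight_mem_firstPassageSets_iff E r).2 hr, mem_univ r⟩,
        (Equiv.addRight r).finsetCongr.apply_symm_apply E⟩
  simpa [card_product, ZMod.card] using hbij

theorem mul_add_one_sub_self {t : ℕ} (ht : 0 < t) (k : ℕ) :
    k * t + 1 - k = k * (t - 1) + 1 := by
  have := Nat.le_mul_of_pos_right k ht
  rw [Nat.mul_sub_one]
  omega

theorem card_firstPassageSets (ht : 0 < t) (k : ℕ) :
    #(firstPassageSets t (k * t + 1)) * (k * (t - 1) + 1) = (k * t).choose k := by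
  apply Nat.eq_of_mul_eq_mul_right (Nat.add_one_pos (k * t))
  rw [Nat.choose_mul_succ_eq, ← card_firstPassageSets_mul ht, mul_add_one_sub_self ht]
  ring

end Counting

section Walk

variable {t n : ℕ}

noncomputable def walk (t : ℕ) (y : ℕ → ℝ) (j : ℕ) : ℤ :=
  ∑ i ∈ range j, if y i = 1 then 1 else 1 - (t : ℤ)

theorem walk_succ_le (t : ℕ) (y : ℕ → ℝ) (j : ℕ) :
    walk t y (j + 1) ≤ walk t y j + 1 := by
  simp only [walk, sum_range_succ]
  split_ifs <;> omega

theorem walk_cast {y : ℕ → ℝ} (hy : ∀ i, y i = 0 ∨ y i = 1) (j : ℕ) :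
    (walk t y j : ℝ) = t * ∑ i ∈ range j, y i - (t - 1) * j := by
  have hstep : ∀ i, ((if y i = 1 then 1 else 1 - (t : ℤ) : ℤ) : ℝ) = t * y i - (t - 1) := by
    intro i
    rcases hy i with h | h <;> simp [h]
  simp only [walk, Int.cast_sum, hstep, sum_sub_distrib, ← mul_sum, sum_const, card_range,
    nsmul_eq_mul]
  ring

theorem iSup_mean_le_iff_walk_nonpos (ht : 0 < t) {y : ℕ → ℝ}
    (hy : ∀ i, y i = 0 ∨ y i = 1) :
    (⨆ m : ℕ, (∑ i ∈ range (m + 1), y i) / (m + 1)) ≤ ((t : ℝ) - 1) / t ↔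
      ∀ j, walk t y j ≤ 0 := by
  have hbdd : BddAbove (Set.range fun m : ℕ => (∑ i ∈ range (m + 1), y i) / (m + 1)) := by
    refine ⟨1, Set.forall_mem_range.2 fun m => div_le_one_of_le₀ ?_ (by positivity)⟩
    calc ∑ i ∈ range (m + 1), y i ≤ ∑ i ∈ range (m + 1), (1 : ℝ) :=
          sum_le_sum fun i _ => by rcases hy i with h | h <;> simp [h]
      _ = m + 1 := by simp
  have hmean : ∀ m : ℕ, (∑ i ∈ range (m + 1), y i) / (m + 1) ≤ ((t : ℝ) - 1) / t ↔
      walk t y (m + 1) ≤ 0 := by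
    intro m
    rw [div_le_div_iff₀ (by positivity) (by exact_mod_cast ht), ← Int.cast_nonpos (R := ℝ),
      walk_cast hy]
    push_cast
    constructor <;> intro h <;> linarith
  rw [ciSup_le_iff hbdd]
  simp only [hmean]
  exact ⟨fun h j => j.casesOn (by simp [walk]) fun m => h m, fun h m => h (m + 1)⟩

noncomputable def downSteps (y : ℕ → ℝ) (n : ℕ) [NeZero n] : Finset (ZMod n) :=
  {i | y i.val ≠ 1}

theorem prefixSum_steps_downSteps [NeZero n] (y : ℕ → ℝ) {j : ℕ} (hj : j ≤ n) :
    prefixSum (steps t (downSteps y n)) j = walk t y j := by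
  refine sum_congr rfl fun i hi => ?_
  have hval : (i : ZMod n).val = i := ZMod.val_cast_of_lt ((mem_range.1 hi).trans_le hj)
  by_cases h : y i = 1 <;> simp [steps, downSteps, hval, h]

theorem downSteps_mem_firstPassageSets_iff [NeZero n] (y : ℕ → ℝ) :
    downSteps y n ∈ firstPassageSets t n ↔ IsFirstPassageTime (walk t y) n := by
  rw [mem_firstPassageSets]
  exact isFirstPassageTime_congr fun j hj => prefixSum_steps_downSteps y hj

end Walk

section Probability

variable {Ω : Type*} {Y : ℕ → Ω → ℝ} {t n : ℕ}

theorem downSteps_preimage_singleton [NeZero n] (D : Finset (ZMod n)) :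
    (fun ω => downSteps (Y · ω) n) ⁻¹' {D} =
      ⋂ i : ZMod n, Y i.val ⁻¹' (if i ∈ D then {1}ᶜ else {1}) := by
  ext ω
  simp only [Set.mem_preimage, Set.mem_singleton_iff, Set.mem_iInter, Finset.ext_iff, downSteps,
    mem_filter, mem_univ, true_and]
  refine forall_congr' fun i => ?_
  split_ifs with h <;> simp [h]

theorem setOf_isFirstPassageTime_walk [NeZero n] :
    {ω | IsFirstPassageTime (walk t (Y · ω)) n} =
      (fun ω => downSteps (Y · ω) n) ⁻¹' ↑(firstPassageSets t n) := by
  ext ω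
  exact (downSteps_mem_firstPassageSets_iff _).symm

theorem setOf_exists_walk_pos : {ω | ∃ j, 0 < walk t (Y · ω) j} =
    ⋃ m, {ω | IsFirstPassageTime (walk t (Y · ω)) (m + 1)} := by
  ext ω
  rw [Set.mem_iUnion]
  exact exists_pos_iff_exists_isFirstPassageTime (by simp [walk]) (walk_succ_le t (Y · ω))

variable [MeasurableSpace Ω] {μ : Measure Ω} {p : ℝ}

theorem measurableSet_downSteps_preimage [NeZero n] (hmeas : ∀ i, Measurable (Y i))
    (D : Finset (ZMod n)) : MeasurableSet ((fun ω => downSteps (Y · ω) n) ⁻¹' {D}) := by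
  rw [downSteps_preimage_singleton]
  exact MeasurableSet.iInter fun i => hmeas _ (by split_ifs <;> measurability)

theorem measure_downSteps_preimage [IsProbabilityMeasure μ] [NeZero n]
    (hmeas : ∀ i, Measurable (Y i)) (hindep : iIndepFun Y μ)
    (hbern : ∀ i, μ {ω | Y i ω = 1} = ENNReal.ofReal p) (hp : 0 ≤ p) (D : Finset (ZMod n)) :
    μ ((fun ω => downSteps (Y · ω) n) ⁻¹' {D}) =
      ENNReal.ofReal p ^ (n - #D) * ENNReal.ofReal (1 - p) ^ #D := by
  have hone : ∀ i, μ (Y i ⁻¹' {1}) = ENNReal.ofReal p := hbern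
  have hzero : ∀ i, μ (Y i ⁻¹' {1}ᶜ) = ENNReal.ofReal (1 - p) := fun i => by
    rw [Set.preimage_compl, prob_compl_eq_one_sub (hmeas i (measurableSet_singleton 1)),
      hone, ENNReal.ofReal_sub 1 hp, ENNReal.ofReal_one]
  have hfactor : ∀ i : ZMod n, μ (Y i.val ⁻¹' if i ∈ D then {1}ᶜ else {1}) =
      if i ∈ D then ENNReal.ofReal (1 - p) else ENNReal.ofReal p := fun i => by
    split_ifs <;> simp only [hzero, hone]
  rw [downSteps_preimage_singleton, (hindep.precomp (ZMod.val_injective n)).meas_iInter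
    fun i => ⟨_, by split_ifs <;> measurability, rfl⟩]
  simp only [hfactor]
  rw [← prod_mul_prod_compl D, prod_congr rfl fun i hi => if_pos hi,
    prod_congr rfl fun i hi => if_neg (mem_compl.1 hi), prod_const, prod_const, card_compl,
    ZMod.card, mul_comm]

theorem measurableSet_isFirstPassageTime_walk [NeZero n] (hmeas : ∀ i, Measurable (Y i)) :
    MeasurableSet {ω | IsFirstPassageTime (walk t (Y · ω)) n} := by
  rw [setOf_isFirstPassageTime_walk, ← Set.biUnion_preimage_singleton]
  exact (firstPassageSets t n).measurableSet_biUnion fun D _ =>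
    measurableSet_downSteps_preimage hmeas D

theorem measure_isFirstPassageTime_walk [IsProbabilityMeasure μ] [NeZero n]
    (hmeas : ∀ i, Measurable (Y i)) (hindep : iIndepFun Y μ)
    (hbern : ∀ i, μ {ω | Y i ω = 1} = ENNReal.ofReal p) (hp : 0 ≤ p) :
    μ {ω | IsFirstPassageTime (walk t (Y · ω)) n} =
      ∑ D ∈ firstPassageSets t n,
        ENNReal.ofReal p ^ (n - #D) * ENNReal.ofReal (1 - p) ^ #D := by
  rw [setOf_isFirstPassageTime_walk,
    ← sum_measure_preimage_singleton _ fun D _ => measurableSet_downSteps_preimage hmeas D]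
  exact sum_congr rfl fun D _ => measure_downSteps_preimage hmeas hindep hbern hp D

theorem measure_isFirstPassageTime_walk_mul_add_one [IsProbabilityMeasure μ] (ht : 0 < t)
    (hmeas : ∀ i, Measurable (Y i)) (hindep : iIndepFun Y μ)
    (hbern : ∀ i, μ {ω | Y i ω = 1} = ENNReal.ofReal p) (hp0 : 0 ≤ p) (hp1 : p ≤ 1)
    (k : ℕ) :
    μ {ω | IsFirstPassageTime (walk t (Y · ω)) (k * t + 1)} =
      ENNReal.ofReal (p * treeFunTerm t ((1 - p) * p ^ (t - 1)) k) := by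
  have hcard : ((#(firstPassageSets t (k * t + 1)) : ℕ) : ℝ) * (k * ((t : ℝ) - 1) + 1) =
      (k * t).choose k := by
    rw [← card_firstPassageSets ht k]
    push_cast [Nat.cast_sub (show 1 ≤ t from ht)]
    ring
  rw [measure_isFirstPassageTime_walk hmeas hindep hbern hp0,
    sum_congr rfl fun D hD => by rw [card_of_mem_firstPassageSets_mul_add_one ht hD], sum_const,
    nsmul_eq_mul, ← ENNReal.ofReal_pow hp0, ← ENNReal.ofReal_pow (by linarith),
    ← ENNReal.ofReal_mul (by positivity), ← ENNReal.ofReal_natCast,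
    ← ENNReal.ofReal_mul (by positivity), mul_add_one_sub_self ht, treeFunTerm, ← hcard]
  congr 1
  have hden : (0 : ℝ) < k * ((t : ℝ) - 1) + 1 := by
    have : (1 : ℝ) ≤ t := by exact_mod_cast ht
    positivity
  rw [mul_pow, ← pow_mul, pow_succ, mul_comm (t - 1) k]
  field_simp

theorem measurableSet_exists_walk_pos (hmeas : ∀ i, Measurable (Y i)) :
    MeasurableSet {ω | ∃ j, 0 < walk t (Y · ω) j} := by
  rw [setOf_exists_walk_pos]
  exact .iUnion fun m => measurableSet_isFirstPassageTime_walk hmeas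

theorem measure_exists_walk_pos_eq_tsum [IsProbabilityMeasure μ] (ht : 0 < t)
    (hmeas : ∀ i, Measurable (Y i)) (hindep : iIndepFun Y μ)
    (hbern : ∀ i, μ {ω | Y i ω = 1} = ENNReal.ofReal p) (hp : 0 ≤ p) :
    μ {ω | ∃ j, 0 < walk t (Y · ω) j} =
      ∑' k, μ {ω | IsFirstPassageTime (walk t (Y · ω)) (k * t + 1)} := by
  set F := fun m => {ω | IsFirstPassageTime (walk t (Y · ω)) (m + 1)}
  have hdisj : Pairwise (Function.onFun Disjoint F) := fun m m' hne =>
    Set.disjoint_left.2 fun ω h h' => hne (Nat.succ_injective (h.eq h' m.succ_pos m'.succ_pos))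
  have hsupp : Function.support (fun m => μ (F m)) ⊆ Set.range (· * t) := by
    intro m hm
    by_contra hm'
    have hdvd : ¬ t ∣ m + 1 - 1 := fun ⟨k, hk⟩ =>
      hm' ⟨k, by rw [Nat.add_sub_cancel] at hk; rw [hk, mul_comm]⟩
    exact hm (by simp only [F, measure_isFirstPassageTime_walk hmeas hindep hbern hp,
      firstPassageSets_eq_empty hdvd, sum_empty])
  rw [setOf_exists_walk_pos,
    measure_iUnion hdisj fun m => measurableSet_isFirstPassageTime_walk hmeas,
    ← (mul_left_injective₀ ht.ne').tsum_eq hsupp]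

theorem measure_exists_walk_pos [IsProbabilityMeasure μ] (ht : 0 < t)
    (hmeas : ∀ i, Measurable (Y i)) (hindep : iIndepFun Y μ)
    (hbern : ∀ i, μ {ω | Y i ω = 1} = ENNReal.ofReal p) (hp0 : 0 ≤ p) (hp1 : p ≤ 1) :
    μ {ω | ∃ j, 0 < walk t (Y · ω) j} = ENNReal.ofReal (Rt t p) := by
  have hsum := measure_exists_walk_pos_eq_tsum ht hmeas hindep hbern hp0
  simp only [measure_isFirstPassageTime_walk_mul_add_one ht hmeas hindep hbern hp0 hp1] at hsum
  have hnonneg : ∀ k, 0 ≤ p * treeFunTerm t ((1 - p) * p ^ (t - 1)) k := fun k =>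
    mul_nonneg hp0 (treeFunTerm_nonneg ht (mul_nonneg (by linarith) (by positivity)) k)
  have hsummable := (ENNReal.summable_toReal (hsum ▸ measure_ne_top μ _)).congr
    fun k => ENNReal.toReal_ofReal (hnonneg k)
  rw [hsum, ← ENNReal.ofReal_tsum_of_nonneg hnonneg hsummable, Rt, treeFun_eq_tsum,
    tsum_mul_left]

end Probability

end BernoulliFirstPassage

open BernoulliFirstPassage

theorem bernoulli_running_max_le_t_ratio_general {Ω : Type*} [MeasurableSpace Ω]
    (μ : Measure Ω) [IsProbabilityMeasure μ] (p : ℝ) (t : ℕ) (ht : 2 ≤ t)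
    (hp0 : 0 < p)
    (Y : ℕ → Ω → ℝ) (hmeas : ∀ i, Measurable (Y i))
    (hindep : iIndepFun Y μ)
    (h01 : ∀ i ω, Y i ω = 0 ∨ Y i ω = 1)
    (hbern : ∀ i, μ {ω | Y i ω = 1} = ENNReal.ofReal p)
    (M : Ω → ℝ)
    (hM : ∀ ω, M ω = ⨆ n : ℕ, (∑ i ∈ Finset.range (n + 1), Y i ω) / (n + 1)) :
    μ {ω | M ω ≤ ((t : ℝ) - 1) / t} = ENNReal.ofReal (1 - Rt t p) := by
  have ht0 : 0 < t := by omega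
  have hp1 : p ≤ 1 := ENNReal.ofReal_le_one.1 (hbern 0 ▸ prob_le_one)
  have hevent : {ω | M ω ≤ ((t : ℝ) - 1) / t} = {ω | ∃ j, 0 < walk t (Y · ω) j}ᶜ := by
    ext ω
    simp only [Set.mem_ofPred_eq, Set.mem_compl_iff, not_exists, not_lt, hM]
    exact iSup_mean_le_iff_walk_nonpos ht0 (h01 · ω)
  rw [hevent, prob_compl_eq_one_sub (measurableSet_exists_walk_pos hmeas),
    measure_exists_walk_pos ht0 hmeas hindep hbern hp0.le hp1, ← ENNReal.ofReal_one,
    ← ENNReal.ofReal_sub _ (Rt_nonneg ht0 hp0.le hp1)]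

/-- For i.i.d. Bernoulli(p) variables `Y_i` with `0 < p < (t−1)/t` for an
integer `t ≥ 2`, and `M = sup_{n≥1} (Y_1 + ⋯ + Y_n)/n`, we have
`P(M ≤ (t−1)/t) = 1 − R_t(p)`. -/
theorem bernoulli_running_max_le_t_ratio {Ω : Type*} [MeasurableSpace Ω]
    (μ : Measure Ω) [IsProbabilityMeasure μ] (p : ℝ) (t : ℕ) (ht : 2 ≤ t)
    (hp0 : 0 < p) (hp : p < ((t : ℝ) - 1) / t)
    (Y : ℕ → Ω → ℝ) (hmeas : ∀ i, Measurable (Y i))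
    (hindep : iIndepFun Y μ)
    (h01 : ∀ i ω, Y i ω = 0 ∨ Y i ω = 1)
    (hbern : ∀ i, μ {ω | Y i ω = 1} = ENNReal.ofReal p)
    (M : Ω → ℝ)
    (hM : ∀ ω, M ω = ⨆ n : ℕ, (∑ i ∈ Finset.range (n + 1), Y i ω) / (n + 1)) :
    μ {ω | M ω ≤ ((t : ℝ) - 1) / t} = ENNReal.ofReal (1 - Rt t p) :=
  bernoulli_running_max_le_t_ratio_general μ p t ht hp0 Y hmeas hindep h01 hbern M hM
end

section
/- Let (Y_i) be i.i.d. Bernoulli(p) with 0 < p < (t−1)/t for an integer t ≥ 2, and let m = b(t−1) − r ≥ 1 for nonnegative integers r, b. Set M_{r,b}(p) = sup_{n≥1}(r + S_n)/(r + b + n) where S_n = Y_1+⋯+Y_n, and R_t(p) = p·T_t((1−p)p^{t−1}). Then P(M_{r,b}(p) ≤ (t−1)/t) = 1 − R_t(p)^{m+1}. -/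
open MeasureTheory ProbabilityTheory

/-!
Encode `Y i = 1` as an up-step `+1` and `Y i = 0` as a down-step `-s`, where `s = t - 1`. Then
`(r + S_n) / (r + b + n) ≤ (t - 1) / t` says exactly that this walk is at height at most `m` after
`n` steps, so the complementary event is that the walk ever reaches `m + 1`. Since the walk moves up
by single steps, reaching `m + 1` means completing a first passage to `m + 1`, and such a first
passage splits uniquely into `m + 1` first passages to `1`. The probability is therefore
`U ^ (m + 1)`, where `U` is the total probability of the first passages to `1`. By the cycle lemma,
exactly one of the `(s + 1) d + 1` rotations of a word with `d` down-steps and height `1` is a first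
passage, so `C((s + 1) d, d) / (s d + 1)` first passages to `1` have `d` down-steps. Each of them
has probability `p ^ (s d + 1) (1 - p) ^ d`, and summing gives `U = R_t(p)`.
-/

open scoped ENNReal

namespace SkipFreeWalk

def step (s : ℕ) (b : Bool) : ℤ := if b then 1 else -s

def height (s : ℕ) (l : List Bool) : ℤ := (l.map (step s)).sum

variable {s : ℕ}

@[simp] lemma height_nil : height s [] = 0 := rfl

lemma height_cons (b : Bool) (l : List Bool) : height s (b :: l) = step s b + height s l :=
  List.sum_cons

@[simp] lemma height_append (l l' : List Bool) : height s (l ++ l') = height s l + height s l' := by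
  simp [height]

lemma step_le_one (b : Bool) : step s b ≤ 1 := by
  cases b <;> simp [step]

lemma height_eq_count (l : List Bool) : height s l = l.count true - s * l.count false := by
  induction l with
  | nil => rfl
  | cons b l ih =>
    rw [height_cons, ih, List.count_cons, List.count_cons]
    cases b <;> simp only [step, ↓reduceIte, BEq.rfl, beq_true, beq_false, Bool.not_true,
      Bool.false_eq_true, add_zero, Nat.cast_add, Nat.cast_one] <;> ring

lemma height_rotate (l : List Bool) (j : ℕ) : height s (l.rotate j) = height s l := by
  simp only [height_eq_count, (l.rotate_perm j).count_eq]

lemma height_take_succ_le (l : List Bool) (i : ℕ) :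
    height s (l.take (i + 1)) ≤ height s (l.take i) + 1 := by
  rw [List.take_add_one, height_append]
  rcases l[i]? with _ | b
  · simp
  · simpa [height] using step_le_one b

lemma exists_first_hit {v : ℕ → ℤ} (hv : ∀ i, v (i + 1) ≤ v i + 1) {k : ℤ}
    (h0 : v 0 ≤ k) {n : ℕ} (hn : k ≤ v n) : ∃ i ≤ n, v i = k ∧ ∀ j < i, v j < k := by
  classical
  have hex : ∃ i, k ≤ v i := ⟨n, hn⟩
  refine ⟨Nat.find hex, Nat.find_min' hex hn, ?_, fun j hj => not_le.1 (Nat.find_min hex hj)⟩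
  rcases h : Nat.find hex with _ | i
  · exact le_antisymm (h ▸ h0) (h ▸ Nat.find_spec hex)
  · have hlt : v i < k := not_le.1 (Nat.find_min hex (by omega))
    have := hv i
    have := h ▸ Nat.find_spec hex
    omega

def firstPassage (s k : ℕ) : Set (List Bool) :=
  {l | height s l = k ∧ ∀ i < l.length, height s (l.take i) < k}

lemma eq_of_mem_firstPassage_of_prefix {k : ℕ} {l l' c : List Bool} (hl : l ∈ firstPassage s k)
    (hl' : l' ∈ firstPassage s k) (h : l <+: c) (h' : l' <+: c) : l = l' := by
  wlog hle : l.length ≤ l'.length generalizing l l'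
  · exact (this hl' hl h' h (by omega)).symm
  have hpre := List.prefix_of_prefix_length_le h h' hle
  refine hpre.eq_of_length (le_antisymm hle (not_lt.1 fun hlt => ?_))
  have := hl'.2 _ hlt
  rw [← List.prefix_iff_eq_take.1 hpre, hl.1] at this
  exact this.false

lemma append_mem_firstPassage {j k : ℕ} {a b : List Bool} (ha : a ∈ firstPassage s j)
    (hb : b ∈ firstPassage s k) : a ++ b ∈ firstPassage s (j + k) := by
  refine ⟨by simp [ha.1, hb.1], fun i hi => ?_⟩
  rw [List.take_append, height_append]
  rcases lt_or_ge i a.length with h | h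
  · rw [Nat.sub_eq_zero_of_le h.le, List.take_zero, height_nil, add_zero]
    have := ha.2 i h
    omega
  · rw [List.take_of_length_le h, ha.1]
    have := hb.2 (i - a.length) (by rw [List.length_append] at hi; omega)
    omega

lemma exists_append_eq_of_mem_firstPassage_add {j k : ℕ} {c : List Bool}
    (hc : c ∈ firstPassage s (j + k)) :
    ∃ a ∈ firstPassage s j, ∃ b ∈ firstPassage s k, a ++ b = c := by
  obtain ⟨i, hi, hij, hmin⟩ := exists_first_hit (v := fun i => height s (c.take i))
    (height_take_succ_le c) (k := j) (by simp) (n := c.length) (by simp [hc.1])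
  refine ⟨c.take i, ⟨hij, fun i' hi' => ?_⟩, c.drop i, ⟨?_, fun i' hi' => ?_⟩,
    c.take_append_drop i⟩
  · simp only [List.length_take] at hi'
    rw [List.take_take, min_eq_left (by omega)]
    exact hmin i' (by omega)
  · have := height_append (s := s) (c.take i) (c.drop i)
    rw [c.take_append_drop, hc.1] at this
    omega
  · have h := hc.2 (i + i') (by rw [List.length_drop] at hi'; omega)
    rw [List.take_add, height_append] at h
    omega

noncomputable def firstPassageAppendEquiv (j k : ℕ) :
    firstPassage s j × firstPassage s k ≃ firstPassage s (j + k) :=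
  Equiv.ofBijective (fun x => ⟨x.1.1 ++ x.2.1, append_mem_firstPassage x.1.2 x.2.2⟩) <| by
    refine ⟨fun ⟨a, b⟩ ⟨a', b'⟩ h => ?_, fun ⟨c, hc⟩ => ?_⟩
    · have hc : a.1 ++ b.1 = a'.1 ++ b'.1 := congrArg Subtype.val h
      have ha : a.1 = a'.1 := eq_of_mem_firstPassage_of_prefix a.2 a'.2
        (List.prefix_append a.1 b.1) (hc ▸ List.prefix_append a'.1 b'.1)
      rw [ha, List.append_cancel_left_eq] at hc
      exact Prod.ext (Subtype.ext ha) (Subtype.ext hc)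
    · obtain ⟨a, ha, b, hb, rfl⟩ := exists_append_eq_of_mem_firstPassage_add hc
      exact ⟨(⟨a, ha⟩, ⟨b, hb⟩), rfl⟩

noncomputable def weight (P Q : ℝ≥0∞) (l : List Bool) : ℝ≥0∞ :=
  P ^ l.count true * Q ^ l.count false

lemma weight_append (P Q : ℝ≥0∞) (l l' : List Bool) :
    weight P Q (l ++ l') = weight P Q l * weight P Q l' := by
  simp only [weight, List.count_append, pow_add]
  ring

noncomputable def passageWeight (s : ℕ) (P Q : ℝ≥0∞) (k : ℕ) : ℝ≥0∞ :=
  ∑' l : firstPassage s k, weight P Q l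

lemma passageWeight_add (P Q : ℝ≥0∞) (j k : ℕ) :
    passageWeight s P Q (j + k) = passageWeight s P Q j * passageWeight s P Q k := by
  rw [passageWeight, ← (firstPassageAppendEquiv j k).tsum_eq, ENNReal.tsum_prod',
    passageWeight, passageWeight, ← ENNReal.tsum_mul_right]
  simp only [← ENNReal.tsum_mul_left]
  exact tsum_congr fun a => tsum_congr fun b => weight_append P Q a.1 b.1

lemma passageWeight_succ_eq_pow (P Q : ℝ≥0∞) (m : ℕ) :
    passageWeight s P Q (m + 1) = passageWeight s P Q 1 ^ (m + 1) := by
  induction m with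
  | zero => simp
  | succ m ih => rw [passageWeight_add, ih, ← pow_succ]

lemma height_take_rotate_of_le {l : List Bool} {j i : ℕ} (h : j + i ≤ l.length) :
    height s ((l.rotate j).take i) = height s (l.take (j + i)) - height s (l.take j) := by
  rw [List.rotate_eq_drop_append_take (by omega),
    List.take_append_of_le_length (by rw [List.length_drop]; omega),
    List.take_add, height_append]
  ring

lemma height_take_rotate_of_ge {l : List Bool} {j i : ℕ} (hj : j ≤ l.length)
    (hi : i ≤ l.length) (h : l.length ≤ j + i) :
    height s ((l.rotate j).take i) =
      height s l - height s (l.take j) + height s (l.take (j + i - l.length)) := by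
  have hdrop : height s (l.drop j) = height s l - height s (l.take j) := by
    have := height_append (s := s) (l.take j) (l.drop j)
    rw [l.take_append_drop] at this
    linarith
  rw [List.rotate_eq_drop_append_take hj, List.take_append, height_append,
    List.take_of_length_le (by rw [List.length_drop]; omega), hdrop, List.take_take,
    List.length_drop, min_eq_left (by omega), show i - (l.length - j) = j + i - l.length by omega]

lemma existsUnique_leftmost_argmax (v : ℕ → ℤ) {N : ℕ} (hN : 0 < N) :
    ∃! j, j < N ∧ (∀ i < j, v i < v j) ∧ ∀ i, j ≤ i → i < N → v i ≤ v j := by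
  classical
  have hex : ∃ j, j < N ∧ ∀ i < N, v i ≤ v j := by
    obtain ⟨j, hj, hmax⟩ := (Finset.range N).exists_max_image v ⟨0, by simpa using hN⟩
    exact ⟨j, by simpa using hj, fun i hi => hmax i (by simpa using hi)⟩
  set J := Nat.find hex
  obtain ⟨hJN, hJmax⟩ : J < N ∧ ∀ i < N, v i ≤ v J := Nat.find_spec hex
  have hJfirst : ∀ i < J, v i < v J := fun i hi => not_le.1 fun hle =>
    Nat.find_min hex hi ⟨by omega, fun i' hi' => (hJmax i' hi').trans hle⟩
  refine ⟨J, ⟨hJN, hJfirst, fun i _ hi => hJmax i hi⟩, fun j ⟨hjN, hlt, hle⟩ => ?_⟩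
  rcases lt_trichotomy j J with h | h | h
  · exact absurd (hle J h.le hJN) (not_le.2 (hJfirst j h))
  · exact h
  · exact absurd (hlt J h) (not_lt.2 (hJmax j hjN))

lemma rotate_mem_firstPassage_one_iff {l : List Bool} (hl : height s l = 1) {j : ℕ}
    (hj : j < l.length) :
    l.rotate j ∈ firstPassage s 1 ↔
      (∀ i < j, height s (l.take i) < height s (l.take j)) ∧
        ∀ i, j ≤ i → i < l.length → height s (l.take i) ≤ height s (l.take j) := by
  simp only [firstPassage, Set.mem_ofPred_eq, height_rotate, hl, List.length_rotate, Nat.cast_one,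
    true_and]
  constructor
  · intro h
    refine ⟨fun i hi => ?_, fun i hji hi => ?_⟩
    · have := h (l.length - j + i) (by omega)
      rw [height_take_rotate_of_ge hj.le (by omega) (by omega), hl,
        show j + (l.length - j + i) - l.length = i by omega] at this
      omega
    · have := h (i - j) (by omega)
      rw [height_take_rotate_of_le (by omega), show j + (i - j) = i by omega] at this
      omega
  · rintro ⟨hbefore, hafter⟩ i hi
    rcases lt_or_ge (j + i) l.length with h | h
    · rw [height_take_rotate_of_le h.le]
      linarith [hafter (j + i) (by omega) h]
    · rw [height_take_rotate_of_ge hj.le hi.le h, hl]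
      linarith [hbefore (j + i - l.length) (by omega)]

-- The cycle lemma of Dvoretzky and Motzkin.
lemma existsUnique_rotate_mem_firstPassage_one {l : List Bool} (hl : height s l = 1) :
    ∃! j, j < l.length ∧ l.rotate j ∈ firstPassage s 1 := by
  have hlen : 0 < l.length := List.length_pos_iff.2 (by rintro rfl; simp at hl)
  obtain ⟨j, ⟨hj, hjmax⟩, huniq⟩ :=
    existsUnique_leftmost_argmax (fun i => height s (l.take i)) hlen
  exact ⟨j, ⟨hj, (rotate_mem_firstPassage_one_iff hl hj).2 hjmax⟩,
    fun j' ⟨hj', hj'mem⟩ =>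
      huniq j' ⟨hj', (rotate_mem_firstPassage_one_iff hl hj').1 hj'mem⟩⟩

def listsWithFalses (N d : ℕ) : Set (List Bool) := {l | l.length = N ∧ l.count false = d}

lemma listsWithFalses_finite (N d : ℕ) : (listsWithFalses N d).Finite :=
  (List.finite_length_eq Bool N).subset fun _ hl => hl.1

lemma listsWithFalses_succ_succ (N d : ℕ) :
    listsWithFalses (N + 1) (d + 1) =
      List.cons true '' listsWithFalses N (d + 1) ∪ List.cons false '' listsWithFalses N d := by
  ext (_ | ⟨_ | _, l⟩) <;> simp [listsWithFalses]

lemma listsWithFalses_succ_zero (N : ℕ) :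
    listsWithFalses (N + 1) 0 = List.cons true '' listsWithFalses N 0 := by
  ext (_ | ⟨_ | _, l⟩) <;> simp [listsWithFalses]

lemma ncard_listsWithFalses (N d : ℕ) : (listsWithFalses N d).ncard = N.choose d := by
  induction N generalizing d with
  | zero =>
    rcases d with _ | d
    · rw [show listsWithFalses 0 0 = {[]} by ext (_ | _) <;> simp [listsWithFalses]]
      simp
    · rw [show listsWithFalses 0 (d + 1) = ∅ by ext (_ | _) <;> simp [listsWithFalses]]
      simp
  | succ N ih =>
    rcases d with _ | d
    · rw [listsWithFalses_succ_zero, Set.ncard_image_of_injective _ List.cons_injective, ih]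
      simp
    · rw [listsWithFalses_succ_succ, Set.ncard_union_eq ?_ ((listsWithFalses_finite _ _).image _)
        ((listsWithFalses_finite _ _).image _), Set.ncard_image_of_injective _ List.cons_injective,
        Set.ncard_image_of_injective _ List.cons_injective, ih, ih, Nat.choose_succ_succ, add_comm]
      simp [Set.disjoint_left]

lemma height_eq_one_iff {l : List Bool} {d : ℕ} (hd : l.count false = d) :
    height s l = 1 ↔ l.length = (s + 1) * d + 1 := by
  have := List.count_true_add_count_false l
  rw [height_eq_count, hd, ← Nat.cast_inj (R := ℤ)]
  rw [hd, ← Nat.cast_inj (R := ℤ)] at this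
  push_cast at this ⊢
  constructor <;> intro h <;> linarith

def firstPassageOneWithFalses (s d : ℕ) : Set (List Bool) :=
  {l | l ∈ firstPassage s 1 ∧ l.count false = d}

lemma rotate_mem_listsWithFalses {l : List Bool} {d : ℕ}
    (hl : l ∈ firstPassageOneWithFalses s d) (j : ℕ) :
    l.rotate j ∈ listsWithFalses ((s + 1) * d + 1) d :=
  ⟨by rw [List.length_rotate, ← height_eq_one_iff hl.2]; exact_mod_cast hl.1.1,
    by rw [(l.rotate_perm j).count_eq]; exact hl.2⟩

lemma bijective_rotate_firstPassageOneWithFalses (d : ℕ) :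
    Function.Bijective fun x : Fin ((s + 1) * d + 1) × firstPassageOneWithFalses s d =>
      (⟨x.2.1.rotate ((s + 1) * d + 1 - x.1), rotate_mem_listsWithFalses x.2.2 _⟩ :
        listsWithFalses ((s + 1) * d + 1) d) := by
  set N := (s + 1) * d + 1
  have hlen {l : List Bool} (hl : l ∈ firstPassageOneWithFalses s d) : l.length = N :=
    (height_eq_one_iff hl.2).1 (by exact_mod_cast hl.1.1)
  have rotate_back {l : List Bool} (hl : l.length = N) {j : ℕ} (hj : j ≤ N) :
      (l.rotate (N - j)).rotate j = l := by
    rw [List.rotate_rotate, Nat.sub_add_cancel hj, ← hl, List.rotate_length]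
  refine ⟨fun ⟨j, l⟩ ⟨j', l'⟩ h => ?_, fun ⟨L, hL⟩ => ?_⟩
  · have hL : l.1.rotate (N - j) = l'.1.rotate (N - j') := congrArg Subtype.val h
    have hback : (l.1.rotate (N - j)).rotate j = l.1 := rotate_back (hlen l.2) j.2.le
    have hback' : (l.1.rotate (N - j)).rotate j' = l'.1 := hL ▸ rotate_back (hlen l'.2) j'.2.le
    have hheight : height s (l.1.rotate (N - j)) = 1 := by
      rw [height_rotate]; exact_mod_cast l.2.1.1
    have hjj : j = j' := Fin.ext <| (existsUnique_rotate_mem_firstPassage_one hheight).unique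
      ⟨by rw [List.length_rotate, hlen l.2]; exact j.2, by rw [hback]; exact l.2.1⟩
      ⟨by rw [List.length_rotate, hlen l.2]; exact j'.2, by rw [hback']; exact l'.2.1⟩
    subst hjj
    exact Prod.ext rfl (Subtype.ext (hback.symm.trans hback'))
  · obtain ⟨hLN, hLd⟩ : L.length = N ∧ L.count false = d := hL
    obtain ⟨J, hJ, hJmem⟩ :=
      (existsUnique_rotate_mem_firstPassage_one ((height_eq_one_iff hLd).2 hLN)).exists
    refine ⟨(⟨J, by omega⟩, ⟨L.rotate J, hJmem, by rw [(L.rotate_perm J).count_eq, hLd]⟩),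
      Subtype.ext (show (L.rotate J).rotate (N - J) = L from ?_)⟩
    rw [List.rotate_rotate, Nat.add_sub_cancel' (hLN ▸ hJ.le), ← hLN, List.rotate_length]

lemma mul_ncard_firstPassageOneWithFalses (d : ℕ) :
    (s * d + 1) * (firstPassageOneWithFalses s d).ncard = ((s + 1) * d).choose d := by
  have hcycle : ((s + 1) * d + 1) * (firstPassageOneWithFalses s d).ncard =
      ((s + 1) * d + 1).choose d := by
    rw [← ncard_listsWithFalses, ← Nat.card_coe_set_eq, ← Nat.card_coe_set_eq,
      ← Nat.card_eq_of_bijective _ (bijective_rotate_firstPassageOneWithFalses d), Nat.card_prod]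
    simp
  have hchoose := Nat.choose_mul_succ_eq ((s + 1) * d) d
  rw [← hcycle, show (s + 1) * d + 1 - d = s * d + 1 by rw [add_mul]; omega] at hchoose
  refine Nat.eq_of_mul_eq_mul_left (Nat.succ_pos ((s + 1) * d)) ?_
  linarith

lemma count_true_of_mem_firstPassage_one {l : List Bool} (hl : l ∈ firstPassage s 1) :
    l.count true = s * l.count false + 1 := by
  have := hl.1
  rw [height_eq_count] at this
  omega

lemma firstPassageOneWithFalses_finite (d : ℕ) : (firstPassageOneWithFalses s d).Finite :=
  (listsWithFalses_finite _ d).subset fun _ hl => by simpa using rotate_mem_listsWithFalses hl 0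

lemma passageWeight_one (P Q : ℝ≥0∞) :
    passageWeight s P Q 1 =
      ∑' d : ℕ,
        ((firstPassageOneWithFalses s d).ncard : ℝ≥0∞) * (P ^ (s * d + 1) * Q ^ d) := by
  rw [passageWeight, ← ENNReal.tsum_fiberwise _ fun l : firstPassage s 1 => l.1.count false]
  refine tsum_congr fun d => ?_
  have hweight (l : (fun l : firstPassage s 1 => l.1.count false) ⁻¹' {d}) :
      weight P Q l.1.1 = P ^ (s * d + 1) * Q ^ d := by
    obtain ⟨⟨l, hl⟩, hd : l.count false = d⟩ := l
    rw [weight, count_true_of_mem_firstPassage_one hl, hd]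
  have hcard : ((fun l : firstPassage s 1 => l.1.count false) ⁻¹' {d}).encard =
      (firstPassageOneWithFalses s d).encard :=
    Set.encard_congr <|
      Equiv.subtypeSubtypeEquivSubtypeInter (· ∈ firstPassage s 1) (·.count false = d)
  rw [tsum_congr hweight, ENNReal.tsum_set_const, hcard,
    ← (firstPassageOneWithFalses_finite d).cast_ncard_eq]
  rfl

section Probability

variable {Ω : Type*} {Y : ℕ → Ω → ℝ}

noncomputable def outcomes (Y : ℕ → Ω → ℝ) (ω : Ω) (n : ℕ) : List Bool :=
  (List.range n).map fun i => decide (Y i ω = 1)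

@[simp] lemma length_outcomes (ω : Ω) (n : ℕ) : (outcomes Y ω n).length = n := by
  simp [outcomes]

lemma outcomes_succ (ω : Ω) (n : ℕ) :
    outcomes Y ω (n + 1) = outcomes Y ω n ++ [decide (Y n ω = 1)] := by
  simp [outcomes, List.range_succ]

lemma take_outcomes (ω : Ω) {i n : ℕ} (h : i ≤ n) :
    (outcomes Y ω n).take i = outcomes Y ω i := by
  simp [outcomes, ← List.map_take, List.take_range, min_eq_left h]

def cylinder (Y : ℕ → Ω → ℝ) (l : List Bool) : Set Ω := {ω | outcomes Y ω l.length = l}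

lemma prefix_outcomes_of_mem_cylinder {l : List Bool} {ω : Ω} (hω : ω ∈ cylinder Y l)
    {n : ℕ} (hn : l.length ≤ n) : l <+: outcomes Y ω n := by
  rw [List.prefix_iff_eq_take, take_outcomes ω hn]
  exact hω.symm

lemma cylinder_eq_iInter (Y : ℕ → Ω → ℝ) (l : List Bool) :
    cylinder Y l =
      ⋂ i ∈ Finset.range l.length, Y i ⁻¹' {x | decide (x = 1) = l.getD i false} := by
  ext ω
  simp +contextual [cylinder, outcomes, List.ext_getElem_iff]

lemma prod_range_getD_eq_weight (P Q : ℝ≥0∞) (l : List Bool) :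
    ∏ i ∈ Finset.range l.length, (if l.getD i false then P else Q) = weight P Q l := by
  induction l with
  | nil => simp [weight]
  | cons b l ih =>
    rw [List.length_cons, Finset.prod_range_succ']
    simp only [List.getD_cons_succ, List.getD_cons_zero, ih]
    rw [weight, weight, List.count_cons, List.count_cons]
    cases b <;> simp only [BEq.rfl, ↓reduceIte, beq_true, beq_false, Bool.not_true,
      Bool.false_eq_true, add_zero, pow_succ] <;> ring

lemma setOf_decide_eq {α : Type*} [DecidableEq α] (a : α) (b : Bool) :
    {x | decide (x = a) = b} = if b then {a} else {a}ᶜ := by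
  cases b <;> ext <;> simp

lemma measurableSet_setOf_decide_eq {α : Type*} [DecidableEq α] [MeasurableSpace α]
    [MeasurableSingletonClass α] (a : α) (b : Bool) : MeasurableSet {x | decide (x = a) = b} := by
  rw [setOf_decide_eq]
  split_ifs
  exacts [measurableSet_singleton a, (measurableSet_singleton a).compl]

variable [MeasurableSpace Ω] (μ : Measure Ω) [IsProbabilityMeasure μ] {p : ℝ}

lemma measure_cylinder (hp0 : 0 ≤ p) (hmeas : ∀ i, Measurable (Y i)) (hindep : iIndepFun Y μ)
    (hbern : ∀ i, μ {ω | Y i ω = 1} = ENNReal.ofReal p) (l : List Bool) :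
    μ (cylinder Y l) = weight (ENNReal.ofReal p) (ENNReal.ofReal (1 - p)) l := by
  have hprob (i : ℕ) (b : Bool) : μ (Y i ⁻¹' {x | decide (x = 1) = b}) =
      if b then ENNReal.ofReal p else ENNReal.ofReal (1 - p) := by
    have h1 : μ (Y i ⁻¹' {1}) = ENNReal.ofReal p := hbern i
    cases b
    · rw [setOf_decide_eq, if_neg Bool.false_ne_true, Set.preimage_compl,
        prob_compl_eq_one_sub (hmeas i (measurableSet_singleton 1)), h1,
        ENNReal.ofReal_sub _ hp0, ENNReal.ofReal_one]
      rfl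
    · simpa [setOf_decide_eq] using h1
  rw [cylinder_eq_iInter,
    hindep.measure_inter_preimage_eq_mul _ fun i _ => measurableSet_setOf_decide_eq _ _]
  simp only [hprob, prod_range_getD_eq_weight]

omit [MeasurableSpace Ω] in
lemma setOf_exists_le_height_outcomes (k : ℕ) :
    {ω | ∃ n, (k : ℤ) ≤ height s (outcomes Y ω n)} =
      ⋃ l : firstPassage s k, cylinder Y l := by
  ext ω
  simp only [Set.mem_ofPred_eq, Set.mem_iUnion]
  constructor
  · rintro ⟨n, hn⟩
    have hstep (i : ℕ) : height s (outcomes Y ω (i + 1)) ≤ height s (outcomes Y ω i) + 1 := by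
      simpa [outcomes_succ, height] using step_le_one (decide (Y i ω = 1))
    obtain ⟨i, -, hi, hfirst⟩ := exists_first_hit hstep (by simp [outcomes]) hn
    refine ⟨⟨outcomes Y ω i, hi, fun j hj => ?_⟩, by simp [cylinder]⟩
    rw [take_outcomes ω (by simpa using hj.le)]
    exact hfirst j (by simpa using hj)
  · rintro ⟨⟨l, hl⟩, hω⟩
    exact ⟨l.length, by rw [hω, hl.1]⟩

lemma measurableSet_cylinder (hmeas : ∀ i, Measurable (Y i)) (l : List Bool) :
    MeasurableSet (cylinder Y l) := by
  rw [cylinder_eq_iInter]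
  exact Finset.measurableSet_biInter _ fun i _ => hmeas i (measurableSet_setOf_decide_eq _ _)

lemma measurableSet_setOf_exists_le_height_outcomes (hmeas : ∀ i, Measurable (Y i)) (k : ℕ) :
    MeasurableSet {ω | ∃ n, (k : ℤ) ≤ height s (outcomes Y ω n)} := by
  rw [setOf_exists_le_height_outcomes]
  exact MeasurableSet.iUnion fun l => measurableSet_cylinder hmeas _

lemma measure_exists_le_height_outcomes (hp0 : 0 ≤ p) (hmeas : ∀ i, Measurable (Y i))
    (hindep : iIndepFun Y μ) (hbern : ∀ i, μ {ω | Y i ω = 1} = ENNReal.ofReal p) (k : ℕ) :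
    μ {ω | ∃ n, (k : ℤ) ≤ height s (outcomes Y ω n)} =
      passageWeight s (ENNReal.ofReal p) (ENNReal.ofReal (1 - p)) k := by
  have hdisj : Pairwise (Function.onFun Disjoint fun l : firstPassage s k => cylinder Y l.1) := by
    refine fun l l' hne => Set.disjoint_left.2 fun ω hω hω' => hne (Subtype.ext ?_)
    exact eq_of_mem_firstPassage_of_prefix l.2 l'.2
      (prefix_outcomes_of_mem_cylinder hω (le_max_left l.1.length l'.1.length))
      (prefix_outcomes_of_mem_cylinder hω' (le_max_right l.1.length l'.1.length))
  rw [setOf_exists_le_height_outcomes, measure_iUnion hdisj fun l => measurableSet_cylinder hmeas _]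
  exact tsum_congr fun l => measure_cylinder μ hp0 hmeas hindep hbern l

end Probability

end SkipFreeWalk

open SkipFreeWalk

lemma Rt_succ_eq_tsum (s : ℕ) (p : ℝ) :
    Rt (s + 1) p =
      ∑' d : ℕ,
        ((firstPassageOneWithFalses s d).ncard : ℝ) * (p ^ (s * d + 1) * (1 - p) ^ d) := by
  rw [Rt, treeFun, ← tsum_mul_left]
  refine tsum_congr fun d => ?_
  have hchoose :
      ((d * (s + 1)).choose d : ℝ) = (s * d + 1) * (firstPassageOneWithFalses s d).ncard := by
    rw [mul_comm d, ← mul_ncard_firstPassageOneWithFalses]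
    push_cast
    ring
  rw [hchoose, mul_pow, ← pow_mul, Nat.add_sub_cancel]
  have hden : (d : ℝ) * (((s + 1 : ℕ) : ℝ) - 1) + 1 = s * d + 1 := by push_cast; ring
  rw [hden]
  field_simp
  ring

lemma natCast_mul_pow_mul_pow_nonneg {s : ℕ} {p : ℝ} (hp0 : 0 ≤ p) (hp1 : p ≤ 1)
    (c d : ℕ) :
    0 ≤ (c : ℝ) * (p ^ (s * d + 1) * (1 - p) ^ d) := by
  have : 0 ≤ 1 - p := by linarith
  positivity

lemma Rt_succ_nonneg (s : ℕ) {p : ℝ} (hp0 : 0 ≤ p) (hp1 : p ≤ 1) : 0 ≤ Rt (s + 1) p := by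
  rw [Rt_succ_eq_tsum]
  exact tsum_nonneg fun d => natCast_mul_pow_mul_pow_nonneg hp0 hp1 _ d

lemma passageWeight_one_eq_ofReal_Rt (s : ℕ) {p : ℝ} (hp0 : 0 ≤ p) (hp1 : p ≤ 1)
    (hfin : passageWeight s (ENNReal.ofReal p) (ENNReal.ofReal (1 - p)) 1 ≠ ⊤) :
    passageWeight s (ENNReal.ofReal p) (ENNReal.ofReal (1 - p)) 1 =
      ENNReal.ofReal (Rt (s + 1) p) := by
  have hterm (d : ℕ) : ((firstPassageOneWithFalses s d).ncard : ℝ≥0∞) *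
      (ENNReal.ofReal p ^ (s * d + 1) * ENNReal.ofReal (1 - p) ^ d) =
      ENNReal.ofReal ((firstPassageOneWithFalses s d).ncard * (p ^ (s * d + 1) * (1 - p) ^ d)) := by
    rw [ENNReal.ofReal_mul (Nat.cast_nonneg _), ENNReal.ofReal_mul (pow_nonneg hp0 _),
      ENNReal.ofReal_pow hp0, ENNReal.ofReal_pow (by linarith), ENNReal.ofReal_natCast]
  rw [passageWeight_one, tsum_congr hterm] at hfin ⊢
  have hsum := (ENNReal.summable_toReal hfin).congr fun d =>
    ENNReal.toReal_ofReal (natCast_mul_pow_mul_pow_nonneg hp0 hp1 _ d)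
  rw [Rt_succ_eq_tsum,
    ENNReal.ofReal_tsum_of_nonneg (fun d => natCast_mul_pow_mul_pow_nonneg hp0 hp1 _ d) hsum]

section Probability

variable {Ω : Type*} {Y : ℕ → Ω → ℝ} {s : ℕ}

lemma cast_height_outcomes (h01 : ∀ i ω, Y i ω = 0 ∨ Y i ω = 1) (ω : Ω) (n : ℕ) :
    (height s (outcomes Y ω n) : ℝ) = (s + 1) * ∑ i ∈ Finset.range n, Y i ω - s * n := by
  induction n with
  | zero => simp [outcomes]
  | succ n ih =>
    have hlast : (height s [decide (Y n ω = 1)] : ℝ) = (s + 1) * Y n ω - s := by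
      rcases h01 n ω with h | h <;> simp [h, height, step]
    rw [outcomes_succ, height_append, Int.cast_add, ih, hlast, Finset.sum_range_succ]
    push_cast
    ring

lemma ratio_le_iff_height_outcomes_le (h01 : ∀ i ω, Y i ω = 0 ∨ Y i ω = 1) {r b m : ℕ}
    (hm : b * s = r + m) (ω : Ω) (n : ℕ) :
    ((r : ℝ) + ∑ i ∈ Finset.range (n + 1), Y i ω) / ((r : ℝ) + b + (n + 1)) ≤
        s / (s + 1) ↔ height s (outcomes Y ω (n + 1)) ≤ m := by
  have hmR : (b : ℝ) * s = r + m := by exact_mod_cast hm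
  rw [div_le_div_iff₀ (by positivity) (by positivity), ← Int.cast_le (R := ℝ),
    cast_height_outcomes h01]
  push_cast
  constructor <;> intro h <;> linarith

lemma bddAbove_range_ratio (h01 : ∀ i ω, Y i ω = 0 ∨ Y i ω = 1) (r b : ℕ) (ω : Ω) :
    BddAbove (Set.range fun n : ℕ =>
      ((r : ℝ) + ∑ i ∈ Finset.range (n + 1), Y i ω) / ((r : ℝ) + b + (n + 1))) := by
  refine ⟨1, Set.forall_mem_range.2 fun n => div_le_one_of_le₀ ?_ (by positivity)⟩
  have : ∑ i ∈ Finset.range (n + 1), Y i ω ≤ ∑ i ∈ Finset.range (n + 1), (1 : ℝ) :=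
    Finset.sum_le_sum fun i _ => by rcases h01 i ω with h | h <;> simp [h]
  simp only [Finset.sum_const, Finset.card_range, nsmul_eq_mul, mul_one] at this
  push_cast at this
  linarith [(b.cast_nonneg : (0 : ℝ) ≤ b)]

lemma iSup_ratio_le_iff (h01 : ∀ i ω, Y i ω = 0 ∨ Y i ω = 1) {r b m : ℕ}
    (hm : b * s = r + m) (ω : Ω) :
    (⨆ n : ℕ, ((r : ℝ) + ∑ i ∈ Finset.range (n + 1), Y i ω) / ((r : ℝ) + b + (n + 1)))
        ≤ s / (s + 1) ↔ ¬ ∃ n, ((m + 1 : ℕ) : ℤ) ≤ height s (outcomes Y ω n) := by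
  simp only [ciSup_le_iff (bddAbove_range_ratio h01 r b ω), ratio_le_iff_height_outcomes_le h01 hm,
    not_exists, not_le, Nat.cast_succ, Int.lt_add_one_iff]
  refine ⟨fun h n => ?_, fun h n => h (n + 1)⟩
  rcases n with _ | n
  · simp [outcomes]
  · exact h n

end Probability

theorem bernoulli_shifted_running_max_le_t_ratio_general {Ω : Type*} [MeasurableSpace Ω]
    (μ : Measure Ω) [IsProbabilityMeasure μ] (p : ℝ) (t r b m : ℕ)
    (hp0 : 0 < p)
    (hm : b * (t - 1) = r + m) (hm1 : 1 ≤ m)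
    (Y : ℕ → Ω → ℝ) (hmeas : ∀ i, Measurable (Y i))
    (hindep : iIndepFun Y μ)
    (h01 : ∀ i ω, Y i ω = 0 ∨ Y i ω = 1)
    (hbern : ∀ i, μ {ω | Y i ω = 1} = ENNReal.ofReal p)
    (M : Ω → ℝ)
    (hM : ∀ ω, M ω = ⨆ n : ℕ,
      ((r : ℝ) + ∑ i ∈ Finset.range (n + 1), Y i ω) / ((r : ℝ) + b + (n + 1))) :
    μ {ω | M ω ≤ ((t : ℝ) - 1) / t} = ENNReal.ofReal (1 - Rt t p ^ (m + 1)) := by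
  -- `t = 0` would force `r + m = 0`.
  obtain ⟨s, rfl⟩ : ∃ s, t = s + 1 := ⟨t - 1, by cases t <;> simp at hm ⊢; omega⟩
  rw [Nat.add_sub_cancel] at hm
  have hp1 : p ≤ 1 := ENNReal.ofReal_le_one.1 (hbern 0 ▸ prob_le_one)
  have hevent : {ω | M ω ≤ (((s + 1 : ℕ) : ℝ) - 1) / (s + 1 : ℕ)} =
      {ω | ∃ n, ((m + 1 : ℕ) : ℤ) ≤ height s (outcomes Y ω n)}ᶜ := by
    ext ω
    rw [Set.mem_ofPred_eq, hM, Nat.cast_succ, add_sub_cancel_right, iSup_ratio_le_iff h01 hm]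
    rfl
  have hpassage := measure_exists_le_height_outcomes μ hp0.le hmeas hindep hbern (s := s)
  have hfin : passageWeight s (ENNReal.ofReal p) (ENNReal.ofReal (1 - p)) 1 ≠ ⊤ :=
    hpassage 1 ▸ measure_ne_top μ _
  have hRt := Rt_succ_nonneg s hp0.le hp1
  rw [hevent, prob_compl_eq_one_sub (measurableSet_setOf_exists_le_height_outcomes hmeas _),
    hpassage, passageWeight_succ_eq_pow, passageWeight_one_eq_ofReal_Rt s hp0.le hp1 hfin,
    ← ENNReal.ofReal_pow hRt, ENNReal.ofReal_sub _ (pow_nonneg hRt _), ENNReal.ofReal_one]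

/-- For i.i.d. Bernoulli(p) variables `Y_i` with `0 < p < (t−1)/t` for an
integer `t ≥ 2`, nonnegative integers `r, b` with `m = b(t−1) − r ≥ 1`, and
`M_{r,b} = sup_{n≥1} (r + Y_1 + ⋯ + Y_n)/(r + b + n)`, we have
`P(M_{r,b} ≤ (t−1)/t) = 1 − R_t(p)^{m+1}`. -/
theorem bernoulli_shifted_running_max_le_t_ratio {Ω : Type*} [MeasurableSpace Ω]
    (μ : Measure Ω) [IsProbabilityMeasure μ] (p : ℝ) (t r b m : ℕ) (ht : 2 ≤ t)
    (hp0 : 0 < p) (hp : p < ((t : ℝ) - 1) / t)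
    (hm : b * (t - 1) = r + m) (hm1 : 1 ≤ m)
    (Y : ℕ → Ω → ℝ) (hmeas : ∀ i, Measurable (Y i))
    (hindep : iIndepFun Y μ)
    (h01 : ∀ i ω, Y i ω = 0 ∨ Y i ω = 1)
    (hbern : ∀ i, μ {ω | Y i ω = 1} = ENNReal.ofReal p)
    (M : Ω → ℝ)
    (hM : ∀ ω, M ω = ⨆ n : ℕ,
      ((r : ℝ) + ∑ i ∈ Finset.range (n + 1), Y i ω) / ((r : ℝ) + b + (n + 1))) :
    μ {ω | M ω ≤ ((t : ℝ) - 1) / t} = ENNReal.ofReal (1 - Rt t p ^ (m + 1)) :=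
  bernoulli_shifted_running_max_le_t_ratio_general μ p t r b m hp0 hm hm1 Y hmeas hindep h01 hbern M
    hM
end

section
/- For 0 < p < 1 and integer t ≥ 2 with p ≥ (t−1)/t, one has R_t(p) = p·T_t((1−p)p^{t−1}) = 1. -/
set_option maxHeartbeats 1000000
open Finset Filter
open scoped ENNReal NNReal Topology

noncomputable def Ra (t n r : ℕ) : ℝ :=
  if n = 0 then 1 else r * (Nat.choose (t*n+r) n) / (t*n+r)

lemma Ra_zero (t r : ℕ) : Ra t 0 r = 1 := by simp [Ra]

lemma Ra_succ_zero (t n : ℕ) : Ra t (n+1) 0 = 0 := by simp [Ra]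

lemma Ra_succ (t n r : ℕ) :
    Ra t (n+1) r = r * (Nat.choose (t*(n+1)+r) (n+1)) / (t*(n+1)+r) := by
  simp [Ra]

lemma Ra_eq_of_pos (t n r : ℕ) (hr : 0 < r) :
    Ra t n r = r * (Nat.choose (t*n+r) n) / (t*n+r) := by
  rcases n with _ | n
  · have hr' : (r:ℝ) ≠ 0 := by positivity
    simp [Ra, hr']
  · simp [Ra]

private lemma aux_alg (A B C N n r t : ℝ) (hn : 0 < n+1) (hN : 0 < N) (hNe : N = t*(n+1)+r)
    (h1 : (N+1)*C = A*(n+1)) (h2 : B*(n+1) = C*(N-n)) :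
    (r+1)*A/(N+1) = r*B/N + (r+t)*C/N := by
  have hn' : (n+1) ≠ 0 := ne_of_gt hn
  have h1' : A = (N+1)*C/(n+1) := by field_simp; linarith
  have h2' : B = C*(N-n)/(n+1) := by field_simp; linarith
  subst hNe
  rw [h1', h2']
  have : (0:ℝ) < t*(n+1)+r+1 := by linarith
  field_simp
  ring

lemma Ra_rec (t n r : ℕ) (ht : 1 ≤ t) :
    Ra t (n+1) (r+1) = Ra t (n+1) r + Ra t n (r+t) := by
  have hT : n + 1 ≤ t*(n+1)+r := by nlinarith
  rw [Ra_succ, Ra_succ, Ra_eq_of_pos _ _ _ (by omega),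
      show t*(n+1)+(r+1) = (t*(n+1)+r)+1 from by omega,
      show t*n+(r+t) = t*(n+1)+r from by ring]
  have h1 := congrArg (Nat.cast (R := ℝ)) (Nat.add_one_mul_choose_eq (t*(n+1)+r) n)
  have h2 := congrArg (Nat.cast (R := ℝ)) (Nat.choose_succ_right_eq (t*(n+1)+r) n)
  rw [Nat.cast_mul, Nat.cast_mul, Nat.cast_sub (le_trans (Nat.le_succ n) hT)] at h2
  have hcast : ((t*(n+1)+r : ℕ) : ℝ) = (t:ℝ)*((n:ℝ)+1)+r := by push_cast; ring
  have hpos : (0:ℝ) < ((t*(n+1)+r : ℕ) : ℝ) := by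
    rw [hcast]; have : (1:ℝ) ≤ t := by exact_mod_cast ht
    nlinarith [Nat.cast_nonneg (α := ℝ) n, Nat.cast_nonneg (α := ℝ) r]
  have := aux_alg (Nat.choose (t*(n+1)+r+1) (n+1)) (Nat.choose (t*(n+1)+r) (n+1))
      (Nat.choose (t*(n+1)+r) n) ((t*(n+1)+r : ℕ) : ℝ) n r t
      (by positivity) hpos (by rw [hcast]) (by push_cast at h1 ⊢; linarith) (by push_cast at h2 ⊢; linarith)
  push_cast at this ⊢
  convert this using 2 <;> push_cast <;> ring

noncomputable def Pa (t m r : ℕ) : ℝ :=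
  ∑ n ∈ Finset.range (m+1), (-1:ℝ)^(m+n) * Ra t n r * (Nat.choose ((t-1)*n + r) (m-n))

lemma Pa_zero (t r : ℕ) : Pa t 0 r = 1 := by
  simp [Pa, Ra_zero]

lemma Pa_succ_zero (t m : ℕ) : Pa t (m+1) 0 = 0 := by
  unfold Pa
  apply Finset.sum_eq_zero
  intro n hn
  rcases n with _ | k
  · norm_num [Ra_zero, Nat.choose_eq_zero_of_lt (Nat.succ_pos m)]
  · simp [Ra_succ_zero]

lemma Pa_rec (t M r : ℕ) (ht : 1 ≤ t) :
    Pa t (M+1) (r+1) = Pa t (M+1) r - Pa t M r + Pa t M (r+t) := by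
  have key : ∀ n, Ra t n (r+1) = Ra t n r + (if n = 0 then 0 else Ra t (n-1) (r+t)) := by
    intro n
    rcases n with _ | k
    · simp [Ra_zero]
    · simp only [if_neg (Nat.succ_ne_zero k), Nat.add_sub_cancel]
      exact Ra_rec t k r ht
  have split : Pa t (M+1) (r+1)
      = (∑ n ∈ Finset.range (M+2), (-1:ℝ)^(M+1+n) * Ra t n r * (Nat.choose ((t-1)*n + (r+1)) (M+1-n)))
        + ∑ n ∈ Finset.range (M+2), (-1:ℝ)^(M+1+n) * (if n = 0 then 0 else Ra t (n-1) (r+t)) * (Nat.choose ((t-1)*n + (r+1)) (M+1-n)) := by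
    rw [Pa, ← Finset.sum_add_distrib]
    apply Finset.sum_congr rfl
    intro n _
    rw [key n]; ring
  have hB : (∑ n ∈ Finset.range (M+2), (-1:ℝ)^(M+1+n) * (if n = 0 then 0 else Ra t (n-1) (r+t)) * (Nat.choose ((t-1)*n + (r+1)) (M+1-n)))
      = Pa t M (r+t) := by
    rw [Finset.sum_range_succ', Pa]
    have hc : ∀ x ∈ Finset.range (M+1),
        (-1:ℝ)^(M+1+(x+1)) * (if x+1 = 0 then (0:ℝ) else Ra t (x+1-1) (r+t)) * (Nat.choose ((t-1)*(x+1) + (r+1)) (M+1-(x+1)))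
        = (-1:ℝ)^(M+x) * Ra t x (r+t) * (Nat.choose ((t-1)*x + (r+t)) (M-x)) := by
      intro x _
      rw [if_neg (Nat.succ_ne_zero x), Nat.add_sub_cancel,
        show (t-1)*(x+1) + (r+1) = (t-1)*x + (r+t) from by rw [Nat.mul_add, Nat.mul_one]; omega,
        show M+1-(x+1) = M-x from by omega,
        show (-1:ℝ)^(M+1+(x+1)) = (-1:ℝ)^(M+x) from by
          rw [show M+1+(x+1) = (M+x)+2 from by omega, pow_add]; norm_num]
    rw [Finset.sum_congr rfl hc]
    simp
  have hA : (∑ n ∈ Finset.range (M+2), (-1:ℝ)^(M+1+n) * Ra t n r * (Nat.choose ((t-1)*n + (r+1)) (M+1-n)))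
      = Pa t (M+1) r - Pa t M r := by
    have pascal : ∀ n ∈ Finset.range (M+1),
        (-1:ℝ)^(M+1+n) * Ra t n r * (Nat.choose ((t-1)*n + (r+1)) (M+1-n))
        = (-1:ℝ)^(M+1+n) * Ra t n r * (Nat.choose ((t-1)*n + r) (M-n))
          + (-1:ℝ)^(M+1+n) * Ra t n r * (Nat.choose ((t-1)*n + r) (M+1-n)) := by
      intro n hn
      have hnM : n ≤ M := by simpa using Nat.lt_succ_iff.mp (Finset.mem_range.mp hn)
      have hnat : Nat.choose ((t-1)*n + (r+1)) (M+1-n)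
          = Nat.choose ((t-1)*n + r) (M-n) + Nat.choose ((t-1)*n + r) (M+1-n) := by
        conv_lhs => rw [show M+1-n = (M-n)+1 from by omega,
          show (t-1)*n + (r+1) = ((t-1)*n + r) + 1 from by omega]
        rw [Nat.choose_succ_succ]
        congr 2
        omega
      rw [hnat]
      push_cast
      ring
    rw [Finset.sum_range_succ, Finset.sum_congr rfl pascal, Finset.sum_add_distrib]
    have t1 : (∑ n ∈ Finset.range (M+1), (-1:ℝ)^(M+1+n) * Ra t n r * (Nat.choose ((t-1)*n + r) (M-n)))
        = - Pa t M r := by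
      rw [Pa, ← Finset.sum_neg_distrib]
      apply Finset.sum_congr rfl
      intro n _
      rw [show (-1:ℝ)^(M+1+n) = -(-1:ℝ)^(M+n) from by
        rw [show M+1+n = (M+n)+1 from by omega, pow_succ]; ring]
      ring
    have t2 : Pa t (M+1) r
        = (∑ n ∈ Finset.range (M+1), (-1:ℝ)^(M+1+n) * Ra t n r * (Nat.choose ((t-1)*n + r) (M+1-n)))
          + (-1:ℝ)^(M+1+(M+1)) * Ra t (M+1) r * (Nat.choose ((t-1)*(M+1) + (r+1)) (M+1-(M+1))) := by
      rw [Pa, Finset.sum_range_succ]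
      congr 1
      rw [Nat.sub_self, Nat.choose_zero_right, Nat.choose_zero_right]
    rw [t1, t2]
    ring
  rw [split, hA, hB]

lemma Pa_eq (t : ℕ) (ht : 1 ≤ t) : ∀ m r, Pa t m r = if m = 0 then 1 else 0 := by
  intro m
  induction m with
  | zero => intro r; simp [Pa_zero]
  | succ M ihM =>
    intro r
    induction r with
    | zero => simp [Pa_succ_zero]
    | succ r ihr =>
      rw [Pa_rec t M r ht, ihr, ihM r, ihM (r+t)]
      simp

noncomputable def aa (t n : ℕ) : ℝ := (Nat.choose (t*n) n : ℝ) / (((t-1)*n + 1 : ℕ) : ℝ)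

lemma aa_nonneg (t n : ℕ) : 0 ≤ aa t n := by unfold aa; positivity

lemma aa_zero (t : ℕ) : aa t 0 = 1 := by simp [aa]

lemma Ra_one_eq_aa (t n : ℕ) (ht : 1 ≤ t) : Ra t n 1 = aa t n := by
  rcases Nat.eq_zero_or_pos n with rfl | hpos
  · simp [Ra_zero, aa_zero]
  have hn : n ≤ t*n := Nat.le_mul_of_pos_left n (by omega)
  have e : t*n + 1 - n = (t-1)*n + 1 := by
    rw [Nat.sub_one_mul]
    omega
  have key : Nat.choose (t*n+1) n * ((t-1)*n + 1) = Nat.choose (t*n) n * (t*n+1) := by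
    calc Nat.choose (t*n+1) n * ((t-1)*n + 1) = Nat.choose (t*n+1) n * (t*n+1-n) := by rw [e]
      _ = Nat.choose (t*n+1) (n+1) * (n+1) := (Nat.choose_succ_right_eq (t*n+1) n).symm
      _ = (t*n+1) * Nat.choose (t*n) n := (Nat.add_one_mul_choose_eq (t*n) n).symm
      _ = Nat.choose (t*n) n * (t*n+1) := by ring
  rw [Ra_eq_of_pos _ _ _ one_pos, aa]
  have h2 : (0:ℝ) < (((t-1)*n + 1 : ℕ) : ℝ) := by positivity
  have h1 : (0:ℝ) < (t:ℝ)*(n:ℝ)+(1:ℕ) := by positivity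
  rw [div_eq_div_iff (ne_of_gt h1) (ne_of_gt h2)]
  have keyR := congrArg (Nat.cast (R := ℝ)) key
  push_cast at keyR ⊢
  linear_combination keyR

lemma key_coeff (t m : ℕ) (ht : 1 ≤ t) :
    ∑ n ∈ Finset.range (m+1), (-1:ℝ)^(m+n) * aa t n * (Nat.choose ((t-1)*n + 1) (m-n))
      = if m = 0 then 1 else 0 := by
  rw [← Pa_eq t ht m 1, Pa]
  apply Finset.sum_congr rfl
  intro n _
  rw [Ra_one_eq_aa t n ht]

lemma treeFun_eq (t : ℕ) (ht : 1 ≤ t) (z : ℝ) : treeFun t z = ∑' n, aa t n * z^n := by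
  unfold treeFun
  apply tsum_congr
  intro n
  rw [aa, mul_comm n t]
  have h : (((t-1)*n + 1 : ℕ) : ℝ) = (n:ℝ) * ((t:ℝ)-1) + 1 := by
    push_cast [Nat.cast_sub ht]
    ring
  rw [h]
  ring

noncomputable def zc (t : ℕ) : ℝ := (1 - ((t:ℝ)-1)/t) * (((t:ℝ)-1)/t)^(t-1)

lemma pc_bounds (t : ℕ) (ht : 2 ≤ t) : 0 < ((t:ℝ)-1)/t ∧ ((t:ℝ)-1)/t < 1 := by
  have h1 : (2:ℝ) ≤ t := by exact_mod_cast ht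
  constructor
  · apply div_pos <;> linarith
  · rw [div_lt_one (by linarith)]
    linarith

lemma zc_pos (t : ℕ) (ht : 2 ≤ t) : 0 < zc t := by
  obtain ⟨h1, h2⟩ := pc_bounds t ht
  unfold zc
  have : 0 < 1 - ((t:ℝ)-1)/t := by linarith
  positivity

lemma zc_lt_one (t : ℕ) (ht : 2 ≤ t) : zc t < 1 := by
  obtain ⟨h1, h2⟩ := pc_bounds t ht
  unfold zc
  have hp : (((t:ℝ)-1)/t)^(t-1) ≤ 1 := pow_le_one₀ (le_of_lt h1) (le_of_lt h2)
  have h3 : 0 < 1 - ((t:ℝ)-1)/t := by linarith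
  nlinarith

lemma choose_term_le_one (N k : ℕ) (hk : k ≤ N) (x : ℝ) (hx0 : 0 ≤ x) (hx1 : x ≤ 1) :
    (Nat.choose N k : ℝ) * x^k * (1-x)^(N-k) ≤ 1 := by
  have h := add_pow x (1-x) N
  have hterm : ∀ i ∈ Finset.range (N+1), 0 ≤ x ^ i * (1-x) ^ (N - i) * (Nat.choose N i : ℝ) := by
    intro i _
    have : 0 ≤ 1 - x := by linarith
    positivity
  have hle := Finset.single_le_sum hterm (Finset.mem_range.mpr (Nat.lt_succ_of_le hk))
  rw [← h] at hle
  simp only [add_sub_cancel, one_pow] at hle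
  linarith [hle]

lemma choose_zc_le_one (t n : ℕ) (ht : 2 ≤ t) : (Nat.choose (t*n) n : ℝ) * (zc t)^n ≤ 1 := by
  obtain ⟨h1, h2⟩ := pc_bounds t ht
  have hk : n ≤ t*n := Nat.le_mul_of_pos_left n (by omega)
  have h := choose_term_le_one (t*n) n hk (1 - ((t:ℝ)-1)/t) (by linarith) (by linarith)
  have e1 : (1:ℝ) - (1 - ((t:ℝ)-1)/t) = ((t:ℝ)-1)/t := by ring
  rw [e1] at h
  have e3 : (t-1)*n = t*n - n := Nat.sub_one_mul t n
  have e2 : (zc t)^n = (1 - ((t:ℝ)-1)/t)^n * (((t:ℝ)-1)/t)^(t*n-n) := by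
    rw [zc, mul_pow, ← pow_mul, e3]
  rw [e2, ← mul_assoc]
  exact h

lemma aa_zc_le_one (t n : ℕ) (ht : 2 ≤ t) : aa t n * (zc t)^n ≤ 1 := by
  have h1 : aa t n ≤ (Nat.choose (t*n) n : ℝ) := by
    rw [aa]
    apply div_le_self (by positivity)
    exact_mod_cast Nat.le_add_left 1 ((t-1)*n)
  calc aa t n * (zc t)^n ≤ (Nat.choose (t*n) n : ℝ) * (zc t)^n :=
        mul_le_mul_of_nonneg_right h1 (pow_nonneg (le_of_lt (zc_pos t ht)) n)
    _ ≤ 1 := choose_zc_le_one t n ht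

lemma summable_aa (t : ℕ) (ht : 2 ≤ t) {y : ℝ} (hy0 : 0 ≤ y) (hy : y < zc t) :
    Summable (fun n => aa t n * y^n) := by
  have hzc := zc_pos t ht
  have hg : Summable (fun n : ℕ => (y / zc t)^n) :=
    summable_geometric_of_lt_one (by positivity) (by rw [div_lt_one hzc]; linarith)
  refine Summable.of_nonneg_of_le (fun n => by have := aa_nonneg t n; positivity) (fun n => ?_) hg
  have e : aa t n * y^n = (aa t n * (zc t)^n) * (y/zc t)^n := by
    rw [div_pow]
    field_simp
  rw [e]
  have h2 : (0:ℝ) ≤ (y/zc t)^n := by positivity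
  nlinarith [aa_zc_le_one t n ht, h2]

noncomputable def FS (t : ℕ) : FormalMultilinearSeries ℝ ℝ ℝ :=
  FormalMultilinearSeries.ofScalars ℝ (aa t)

lemma FS_radius (t : ℕ) (ht : 2 ≤ t) : ENNReal.ofReal (zc t) ≤ (FS t).radius := by
  have hzc := zc_pos t ht
  rw [show ENNReal.ofReal (zc t) = ((zc t).toNNReal : ENNReal) from rfl]
  apply FormalMultilinearSeries.le_radius_of_bound _ 1
  intro n
  have hn : ‖FS t n‖ = |aa t n| := by
    rw [FS, FormalMultilinearSeries.ofScalars_norm]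
    exact Real.norm_eq_abs _
  rw [hn, abs_of_nonneg (aa_nonneg t n), Real.coe_toNNReal _ (le_of_lt hzc)]
  exact aa_zc_le_one t n ht

lemma FS_sum_eq (t : ℕ) (z : ℝ) : (FS t).sum z = ∑' n, aa t n * z^n := by
  unfold FormalMultilinearSeries.sum
  apply tsum_congr
  intro n
  rw [FS, FormalMultilinearSeries.ofScalars_apply_eq, smul_eq_mul]

lemma analyticAt_S (t : ℕ) (ht : 2 ≤ t) {x : ℝ} (hx : |x| < zc t) :
    AnalyticAt ℝ (fun z => ∑' n, aa t n * z^n) x := by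
  have hzc := zc_pos t ht
  have hrad : (0:ENNReal) < (FS t).radius :=
    lt_of_lt_of_le (by simp [ENNReal.ofReal_pos, hzc]) (FS_radius t ht)
  have hball := (FS t).hasFPowerSeriesOnBall hrad
  have hmem : x ∈ Metric.eball (0:ℝ) (FS t).radius := by
    rw [mem_eball_zero_iff]
    calc ‖x‖ₑ = ENNReal.ofReal |x| := by
          rw [← Real.enorm_eq_ofReal_abs]
      _ < ENNReal.ofReal (zc t) := (ENNReal.ofReal_lt_ofReal_iff hzc).mpr hx
      _ ≤ (FS t).radius := FS_radius t ht
  have := hball.analyticAt_of_mem hmem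
  have hfe : (FS t).sum = (fun z => ∑' n, aa t n * z^n) := funext (FS_sum_eq t)
  rwa [hfe] at this

lemma zf_hasDeriv (t : ℕ) (ht : 2 ≤ t) (p : ℝ) :
    HasDerivAt (fun x : ℝ => (1 - x) * x ^ (t-1))
      (-(p^(t-1)) + (1-p) * (((t:ℝ)-1) * p^(t-2))) p := by
  have h1 : HasDerivAt (fun x : ℝ => 1 - x) (-1) p := by
    simpa using (hasDerivAt_id p).const_sub 1
  have h2 : HasDerivAt (fun x : ℝ => x ^ (t-1)) (((t:ℝ)-1) * p^(t-2)) p := by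
    have := hasDerivAt_pow (t-1) p
    have e1 : ((t-1 : ℕ) : ℝ) = (t:ℝ)-1 := by
      push_cast [Nat.cast_sub (by omega : 1 ≤ t)]; ring
    have e2 : t - 1 - 1 = t - 2 := by omega
    rwa [e1, e2] at this
  have : HasDerivAt (fun x : ℝ => (1 - x) * x ^ (t-1)) _ p := h1.mul h2
  convert this using 1
  ring

lemma zf_strictAnti (t : ℕ) (ht : 2 ≤ t) :
    StrictAntiOn (fun x : ℝ => (1 - x) * x ^ (t-1)) (Set.Icc (((t:ℝ)-1)/t) 1) := by
  obtain ⟨hpc0, hpc1⟩ := pc_bounds t ht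
  apply strictAntiOn_of_deriv_neg (convex_Icc _ _)
  · fun_prop
  · intro p hp
    rw [interior_Icc] at hp
    obtain ⟨hp1, hp2⟩ := hp
    rw [(zf_hasDeriv t ht p).deriv]
    have hp0 : 0 < p := lt_trans hpc0 hp1
    have ht2 : (2:ℝ) ≤ t := by exact_mod_cast ht
    have hpow : 0 < p^(t-2) := pow_pos hp0 _
    have e : -(p^(t-1)) + (1-p) * (((t:ℝ)-1) * p^(t-2)) = p^(t-2) * (((t:ℝ)-1) - t*p) := by
      have : p^(t-1) = p^(t-2) * p := by
        rw [← pow_succ]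
        congr 1
        omega
      rw [this]
      ring
    rw [e]
    have : ((t:ℝ)-1) - t*p < 0 := by
      rw [div_lt_iff₀ (by linarith : (0:ℝ) < t)] at hp1
      linarith
    exact mul_neg_of_pos_of_neg hpow this

lemma zf_mem (t : ℕ) (ht : 2 ≤ t) {p : ℝ} (hp : ((t:ℝ)-1)/t < p) (hp1 : p < 1) :
    0 < (1-p) * p^(t-1) ∧ (1-p) * p^(t-1) < zc t := by
  obtain ⟨hpc0, hpc1⟩ := pc_bounds t ht
  have hp0 : 0 < p := lt_trans hpc0 hp
  constructor
  · have : 0 < 1 - p := by linarith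
    positivity
  · have := zf_strictAnti t ht (Set.mem_Icc.mpr ⟨le_refl _, le_of_lt hpc1⟩)
      (Set.mem_Icc.mpr ⟨le_of_lt hp, le_of_lt hp1⟩) hp
    simpa [zc] using this

lemma Rt_eq_tsum (t : ℕ) (ht : 2 ≤ t) (p : ℝ) :
    Rt t p = p * ∑' n, aa t n * ((1-p) * p^(t-1))^n := by
  rw [Rt, treeFun_eq t (by omega)]

lemma analyticOn_Rt (t : ℕ) (ht : 2 ≤ t) :
    AnalyticOnNhd ℝ (fun p => Rt t p) (Set.Ioo (((t:ℝ)-1)/t) 1) := by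
  intro p hp
  obtain ⟨hp1, hp2⟩ := hp
  have hfe : (fun p : ℝ => Rt t p)
      = fun p : ℝ => p * (fun z => ∑' n, aa t n * z^n) ((1-p) * p^(t-1)) := by
    funext x
    exact Rt_eq_tsum t ht x
  rw [hfe]
  have h1 : AnalyticAt ℝ (fun x : ℝ => (1-x)*x^(t-1)) p :=
    (analyticAt_const.sub analyticAt_id).mul (analyticAt_id.pow _)
  have h2 : AnalyticAt ℝ (fun z => ∑' n, aa t n * z^n) ((fun x : ℝ => (1-x)*x^(t-1)) p) := by
    show AnalyticAt ℝ (fun z => ∑' n, aa t n * z^n) ((1-p)*p^(t-1))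
    obtain ⟨hz0, hz1⟩ := zf_mem t ht hp1 hp2
    exact analyticAt_S t ht (by rw [abs_of_pos hz0]; exact hz1)
  have h3 : AnalyticAt ℝ ((fun z => ∑' n, aa t n * z^n) ∘ (fun x : ℝ => (1-x)*x^(t-1))) p :=
    AnalyticAt.comp (g := fun z => ∑' n, aa t n * z^n)
      (f := fun x : ℝ => (1-x)*x^(t-1)) (x := p) h2 h1
  exact analyticAt_id.mul h3

lemma near_one (t : ℕ) (ht : 2 ≤ t) {q : ℝ} (hq0 : 0 < q) (hq : q < zc t / 2^t) :
    ∑' n, aa t n * q^n * (1-q)^((t-1)*n+1) = 1 := by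
  have hzc := zc_pos t ht
  have h2t : (0:ℝ) < 2^t := by positivity
  have hqzc : q < zc t := by
    calc q < zc t / 2^t := hq
      _ ≤ zc t / 2 := by
          apply div_le_div_of_nonneg_left (le_of_lt hzc) (by norm_num)
          calc (2:ℝ) = 2^1 := (pow_one 2).symm
            _ ≤ 2^t := pow_le_pow_right₀ (by norm_num) (by omega)
      _ < zc t := by linarith
  have hq1 : q < 1 := lt_trans hqzc (zc_lt_one t ht)
  have hy : q * (1+q)^(t-1) < zc t := by
    have h1 : (1+q)^(t-1) ≤ 2^(t-1) := pow_le_pow_left₀ (by linarith) (by linarith) _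
    have h2 : (2:ℝ)^t = 2^(t-1) * 2 := by
      rw [← pow_succ]
      congr 1
      omega
    have h3 : q * (1+q)^(t-1) ≤ q * 2^(t-1) := by nlinarith [pow_pos (show (0:ℝ) < 1+q by linarith) (t-1)]
    have h4 : q * 2^(t-1) < (zc t / 2^t) * 2^(t-1) := by
      apply mul_lt_mul_of_pos_right hq (by positivity)
    have h5 : (zc t / 2^t) * 2^(t-1) = zc t / 2 := by
      rw [h2]
      field_simp
    linarith
  have hy0 : (0:ℝ) ≤ q * (1+q)^(t-1) := by positivity
  set F : ℕ × ℕ → ℝ :=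
    fun x => aa t x.1 * (Nat.choose ((t-1)*x.1+1) x.2) * (-1)^x.2 * q^(x.1+x.2) with hF
  set G : ℕ × ℕ → ℝ :=
    fun x => aa t x.1 * (Nat.choose ((t-1)*x.1+1) x.2) * q^(x.1+x.2) with hG
  have hGnonneg : ∀ x, 0 ≤ G x := by
    intro x
    have := aa_nonneg t x.1
    positivity
  have habs : ∀ x, ‖F x‖ = G x := by
    intro x
    rw [hF, hG]
    simp only [Real.norm_eq_abs, abs_mul, abs_pow, abs_neg, abs_one, one_pow, mul_one,
      abs_of_nonneg (aa_nonneg t x.1), abs_of_nonneg (le_of_lt hq0),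
      Nat.abs_cast]
  have hrowG : ∀ n : ℕ, Summable (fun j => G (n, j)) := by
    intro n
    apply summable_of_ne_finset_zero (s := Finset.range ((t-1)*n+2))
    intro j hj
    have : ((t-1)*n+1) < j := by
      simp only [Finset.mem_range] at hj
      omega
    simp [hG, Nat.choose_eq_zero_of_lt this]
  have hrowF : ∀ n : ℕ, Summable (fun j => F (n, j)) := by
    intro n
    apply summable_of_ne_finset_zero (s := Finset.range ((t-1)*n+2))
    intro j hj
    have : ((t-1)*n+1) < j := by
      simp only [Finset.mem_range] at hj
      omega
    simp [hF, Nat.choose_eq_zero_of_lt this]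
  have hGrow : ∀ n : ℕ, ∑' j, G (n, j) = aa t n * q^n * (1+q)^((t-1)*n+1) := by
    intro n
    rw [tsum_eq_sum (s := Finset.range ((t-1)*n+2)) (by
      intro j hj
      have : ((t-1)*n+1) < j := by
        simp only [Finset.mem_range] at hj
        omega
      simp [hG, Nat.choose_eq_zero_of_lt this])]
    have hap := add_pow q 1 ((t-1)*n+1)
    simp only [one_pow, mul_one] at hap
    calc ∑ j ∈ Finset.range ((t-1)*n+2), G (n, j)
        = aa t n * q^n * ∑ j ∈ Finset.range ((t-1)*n+1+1), q^j * (Nat.choose ((t-1)*n+1) j : ℝ) := by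
          rw [Finset.mul_sum]
          apply Finset.sum_congr rfl
          intro j _
          rw [hG]
          simp only []
          rw [pow_add]
          ring
      _ = aa t n * q^n * (q+1)^((t-1)*n+1) := by rw [← hap]
      _ = aa t n * q^n * (1+q)^((t-1)*n+1) := by rw [add_comm q 1]
  have hFrow : ∀ n : ℕ, ∑' j, F (n, j) = aa t n * q^n * (1-q)^((t-1)*n+1) := by
    intro n
    rw [tsum_eq_sum (s := Finset.range ((t-1)*n+2)) (by
      intro j hj
      have : ((t-1)*n+1) < j := by
        simp only [Finset.mem_range] at hj
        omega
      simp [hF, Nat.choose_eq_zero_of_lt this])]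
    have hap := add_pow (-q) 1 ((t-1)*n+1)
    simp only [one_pow, mul_one] at hap
    calc ∑ j ∈ Finset.range ((t-1)*n+2), F (n, j)
        = aa t n * q^n * ∑ j ∈ Finset.range ((t-1)*n+1+1), (-q)^j * (Nat.choose ((t-1)*n+1) j : ℝ) := by
          rw [Finset.mul_sum]
          apply Finset.sum_congr rfl
          intro j _
          rw [hF]
          simp only []
          rw [pow_add, neg_pow]
          ring
      _ = aa t n * q^n * (-q+1)^((t-1)*n+1) := by rw [← hap]
      _ = aa t n * q^n * (1-q)^((t-1)*n+1) := by
          congr 1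
          rw [show (-q+1) = 1-q from by ring]
  have hGsum : Summable G := by
    rw [summable_prod_of_nonneg hGnonneg]
    refine ⟨hrowG, ?_⟩
    have hcols : (fun n => ∑' j, G (n, j))
        = fun n => (1+q) * (aa t n * (q * (1+q)^(t-1))^n) := by
      funext n
      rw [hGrow n, mul_pow, ← pow_mul]
      rw [show (1+q)^((t-1)*n+1) = (1+q)^((t-1)*n) * (1+q) from by rw [pow_succ]]
      ring
    rw [hcols]
    exact (summable_aa t ht hy0 hy).mul_left (1+q)
  have hFsum : Summable F :=
    Summable.of_norm_bounded hGsum (fun x => le_of_eq (habs x))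
  have step1 : ∑' n, aa t n * q^n * (1-q)^((t-1)*n+1) = ∑' (x : ℕ × ℕ), F x := by
    rw [Summable.tsum_prod' hFsum hrowF]
    exact (tsum_congr hFrow).symm
  have step2 : ∑' (x : ℕ × ℕ), F x = ∑' m, ∑ kl ∈ Finset.HasAntidiagonal.antidiagonal m, F kl := by
    conv_rhs => congr; ext; rw [← Finset.sum_finset_coe, ← tsum_fintype (L := SummationFilter.unconditional _)]
    rw [← Finset.HasAntidiagonal.sigmaAntidiagonalEquivProd.tsum_eq F]
    exact Summable.tsum_sigma' (fun m => (hasSum_fintype _).summable)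
      (Finset.HasAntidiagonal.sigmaAntidiagonalEquivProd.summable_iff.mpr hFsum)
  have step3 : ∀ m : ℕ, ∑ kl ∈ Finset.HasAntidiagonal.antidiagonal m, F kl = if m = 0 then 1 else 0 := by
    intro m
    rw [Finset.Nat.sum_antidiagonal_eq_sum_range_succ_mk]
    have hterm : ∀ n ∈ Finset.range (m+1),
        F (n, m-n) = q^m * ((-1:ℝ)^(m+n) * aa t n * (Nat.choose ((t-1)*n+1) (m-n))) := by
      intro n hn
      have hnm : n ≤ m := Nat.lt_succ_iff.mp (Finset.mem_range.mp hn)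
      rw [hF]
      simp only []
      rw [show n + (m-n) = m from by omega,
        show (-1:ℝ)^(m-n) = (-1:ℝ)^(m+n) from by
          rw [show m+n = (m-n)+2*n from by omega, pow_add, pow_mul]
          norm_num]
      ring
    rw [Finset.sum_congr rfl hterm, ← Finset.mul_sum, key_coeff t m (by omega)]
    rcases Nat.eq_zero_or_pos m with rfl | hm
    · simp
    · rw [if_neg (Nat.pos_iff_ne_zero.mp hm)]
      exact mul_zero _
  rw [step1, step2]
  rw [tsum_congr step3]
  exact tsum_ite_eq 0 1

lemma Rt_near_one (t : ℕ) (ht : 2 ≤ t) {q : ℝ} (hq0 : 0 < q) (hq : q < zc t / 2^t) :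
    Rt t (1-q) = 1 := by
  rw [Rt_eq_tsum t ht, show (1:ℝ) - (1-q) = q from by ring, ← tsum_mul_left]
  refine Eq.trans ?_ (near_one t ht hq0 hq)
  apply tsum_congr
  intro n
  rw [mul_pow, ← pow_mul]
  rw [show (1-q)^((t-1)*n+1) = (1-q)^((t-1)*n) * (1-q) from by rw [pow_succ]]
  ring

lemma Rt_eqOn (t : ℕ) (ht : 2 ≤ t) {p : ℝ}
    (hp : ((t:ℝ)-1)/t < p) (hp1 : p < 1) : Rt t p = 1 := by
  obtain ⟨hpc0, hpc1⟩ := pc_bounds t ht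
  have hzc := zc_pos t ht
  have h2t : (0:ℝ) < 2^t := by positivity
  set q₀ : ℝ := min (zc t / 2^t) (1 - ((t:ℝ)-1)/t) with hq₀
  have hq₀pos : 0 < q₀ := lt_min (by positivity) (by linarith)
  have hq₀le : q₀ ≤ zc t / 2^t := min_le_left _ _
  have hq₀le2 : q₀ ≤ 1 - ((t:ℝ)-1)/t := min_le_right _ _
  set z₀ : ℝ := 1 - q₀/2 with hz₀
  have hz₀mem : z₀ ∈ Set.Ioo (((t:ℝ)-1)/t) 1 := by
    constructor
    · rw [hz₀]; linarith
    · rw [hz₀]; linarith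
  have hev : (fun p => Rt t p) =ᶠ[nhds z₀] (fun _ => (1:ℝ)) := by
    have hopen : Set.Ioo (1 - q₀) 1 ∈ nhds z₀ := by
      apply IsOpen.mem_nhds isOpen_Ioo
      constructor
      · rw [hz₀]; linarith
      · rw [hz₀]; linarith
    filter_upwards [hopen] with x hx
    obtain ⟨hx1, hx2⟩ := hx
    have : Rt t (1 - (1 - x)) = 1 :=
      Rt_near_one t ht (by linarith) (by linarith [hq₀le])
    simpa using this
  have := AnalyticOnNhd.eqOn_of_preconnected_of_eventuallyEq
    (analyticOn_Rt t ht) analyticOnNhd_const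
    (isPreconnected_Ioo (a := ((t:ℝ)-1)/t) (b := 1)) hz₀mem hev
  exact this (Set.mem_Ioo.mpr ⟨hp, hp1⟩)

lemma tsum_at_zc (t : ℕ) (ht : 2 ≤ t) :
    Summable (fun n => aa t n * (zc t)^n) ∧
      ∑' n, aa t n * (zc t)^n = (t:ℝ)/((t:ℝ)-1) := by
  obtain ⟨hpc0, hpc1⟩ := pc_bounds t ht
  have hzc := zc_pos t ht
  have htR : (2:ℝ) ≤ t := by exact_mod_cast ht
  have hinv : (t:ℝ)/((t:ℝ)-1) = 1/(((t:ℝ)-1)/t) := by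
    rw [one_div_div]
  -- tsum identity inside the interval
  have hS : ∀ p : ℝ, ((t:ℝ)-1)/t < p → p < 1 →
      ∑' n, aa t n * ((1-p)*p^(t-1))^n = 1/p := by
    intro p h1 h2
    have hp0 : 0 < p := lt_trans hpc0 h1
    have := Rt_eqOn t ht h1 h2
    rw [Rt_eq_tsum t ht] at this
    field_simp
    linarith [this]
  -- partial sums at zc bounded
  have hpart : ∀ N : ℕ, ∑ n ∈ Finset.range N, aa t n * (zc t)^n ≤ (t:ℝ)/((t:ℝ)-1) := by
    intro N
    have hcont : Tendsto (fun p : ℝ => ∑ n ∈ Finset.range N, aa t n * ((1-p)*p^(t-1))^n)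
        (nhdsWithin (((t:ℝ)-1)/t) (Set.Ioi (((t:ℝ)-1)/t)))
        (nhds (∑ n ∈ Finset.range N, aa t n * (zc t)^n)) := by
      apply Filter.Tendsto.mono_left _ nhdsWithin_le_nhds
      have : Continuous (fun p : ℝ => ∑ n ∈ Finset.range N, aa t n * ((1-p)*p^(t-1))^n) := by
        fun_prop
      have h := this.tendsto (((t:ℝ)-1)/t)
      convert h using 2
      rfl
    apply le_of_tendsto hcont
    have hlt1 : ∀ᶠ p in nhdsWithin (((t:ℝ)-1)/t) (Set.Ioi (((t:ℝ)-1)/t)), p < 1 :=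
      eventually_nhdsWithin_of_eventually_nhds (eventually_lt_nhds hpc1)
    filter_upwards [hlt1, self_mem_nhdsWithin] with p hp1 hp2
    have hgt : ((t:ℝ)-1)/t < p := hp2
    obtain ⟨hz0, hz1⟩ := zf_mem t ht hgt hp1
    have hsum := summable_aa t ht (le_of_lt hz0) hz1
    have hle : ∑ n ∈ Finset.range N, aa t n * ((1-p)*p^(t-1))^n
        ≤ ∑' n, aa t n * ((1-p)*p^(t-1))^n :=
      Summable.sum_le_tsum _ (fun n _ => by have := aa_nonneg t n; positivity) hsum
    rw [hS p hgt hp1] at hle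
    calc ∑ n ∈ Finset.range N, aa t n * ((1-p)*p^(t-1))^n ≤ 1/p := hle
      _ ≤ 1/(((t:ℝ)-1)/t) := by
          apply one_div_le_one_div_of_le hpc0 (le_of_lt hgt)
      _ = (t:ℝ)/((t:ℝ)-1) := hinv.symm
  have hnn : ∀ n, 0 ≤ aa t n * (zc t)^n := fun n => by
    have := aa_nonneg t n
    positivity
  have hsummable : Summable (fun n => aa t n * (zc t)^n) :=
    summable_of_sum_range_le hnn hpart
  refine ⟨hsummable, le_antisymm (Real.tsum_le_of_sum_range_le hnn hpart) ?_⟩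
  -- lower bound
  have hlow : ∀ p : ℝ, ((t:ℝ)-1)/t < p → p < 1 → 1/p ≤ ∑' n, aa t n * (zc t)^n := by
    intro p h1 h2
    rw [← hS p h1 h2]
    obtain ⟨hz0, hz1⟩ := zf_mem t ht h1 h2
    apply Summable.tsum_le_tsum _ (summable_aa t ht (le_of_lt hz0) hz1) hsummable
    intro n
    apply mul_le_mul_of_nonneg_left _ (aa_nonneg t n)
    exact pow_le_pow_left₀ (le_of_lt hz0) (le_of_lt hz1) n
  have htends : Tendsto (fun p : ℝ => 1/p)
      (nhdsWithin (((t:ℝ)-1)/t) (Set.Ioi (((t:ℝ)-1)/t)))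
      (nhds ((t:ℝ)/((t:ℝ)-1))) := by
    rw [hinv]
    apply Filter.Tendsto.mono_left _ nhdsWithin_le_nhds
    exact Filter.Tendsto.div tendsto_const_nhds tendsto_id (ne_of_gt hpc0)
  apply le_of_tendsto htends
  have hlt1 : ∀ᶠ p in nhdsWithin (((t:ℝ)-1)/t) (Set.Ioi (((t:ℝ)-1)/t)), p < 1 :=
    eventually_nhdsWithin_of_eventually_nhds (eventually_lt_nhds hpc1)
  filter_upwards [hlt1, self_mem_nhdsWithin] with p hp1 hp2
  exact hlow p hp2 hp1

/-- If `(t−1)/t ≤ p < 1` for an integer `t ≥ 2`, then `R_t(p) = 1`. -/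
theorem Rt_eq_one_of_ge (t : ℕ) (p : ℝ) (ht : 2 ≤ t)
    (hp : ((t : ℝ) - 1) / t ≤ p) (hp1 : p < 1) :
    Rt t p = 1 := by
  rcases eq_or_lt_of_le hp with heq | hlt
  · obtain ⟨hpc0, hpc1⟩ := pc_bounds t ht
    obtain ⟨hsummable, hval⟩ := tsum_at_zc t ht
    subst heq
    rw [Rt_eq_tsum t ht]
    have hzf : (1 - ((t:ℝ)-1)/t) * (((t:ℝ)-1)/t)^(t-1) = zc t := rfl
    rw [hzf, hval]
    have htR : (2:ℝ) ≤ t := by exact_mod_cast ht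
    rw [div_mul_div_comm]
    rw [div_eq_one_iff_eq (by nlinarith : (↑t:ℝ) * (↑t - 1) ≠ 0)]
    ring
  · exact Rt_eqOn t ht hlt hp1
end

section
/- In Pólya's urn with parameters r, b ≥ 1 and d ≥ 1, letting S_n be the number of red draws in the first n draws, the conditional joint law satisfies P(Y_1 = y_1, …, Y_n = y_n) = B(r/d + s_n, n + b/d − s_n)/B(r/d, b/d) for any (y_1,…,y_n) ∈ {0,1}^n with s_n = y_1 + ⋯ + y_n, where Y_i are the red-ball indicators. -/
/-!
Conditionally on the urn's history, each draw is red with probability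
`(α + s)/(α + β + j)`, where `α = r/d`, `β = b/d` and `s` is the number of reds so far.
Since `B(a + 1, b) = a/(a + b) · B(a, b)` and `B(a, b + 1) = b/(a + b) · B(a, b)`, multiplying
by this factor turns `B(α + s, j + β − s)` into the Beta value after one more draw, so the
product telescopes to `B(α + s_n, n + β − s_n)/B(α, β)`.
-/

noncomputable def Betafn (a b : ℝ) : ℝ :=
  ∫ x in (0:ℝ)..1, x ^ (a - 1) * (1 - x) ^ (b - 1)

open Finset

section Beta

variable {a b : ℝ}

theorem Betafn_eq_Gamma (ha : 0 < a) (hb : 0 < b) :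
    Betafn a b = Real.Gamma a * Real.Gamma b / Real.Gamma (a + b) := by
  have hcomplex : ((Betafn a b : ℝ) : ℂ) = Complex.betaIntegral a b := by
    rw [Betafn, Complex.betaIntegral, ← intervalIntegral.integral_ofReal]
    refine intervalIntegral.integral_congr fun x hx => ?_
    rw [Set.uIcc_of_le zero_le_one] at hx
    push_cast
    rw [Complex.ofReal_cpow hx.1, Complex.ofReal_cpow (sub_nonneg.mpr hx.2)]
    norm_num
  have hG := Complex.Gamma_mul_Gamma_eq_betaIntegral (s := (a : ℂ)) (t := (b : ℂ))
    (by simpa using ha) (by simpa using hb)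
  rw [← Complex.ofReal_add, Complex.Gamma_ofReal, Complex.Gamma_ofReal, Complex.Gamma_ofReal,
    ← hcomplex] at hG
  have hreal : Real.Gamma a * Real.Gamma b = Real.Gamma (a + b) * Betafn a b := by
    exact_mod_cast hG
  rw [hreal, mul_div_cancel_left₀ _ (Real.Gamma_pos_of_pos (add_pos ha hb)).ne']

theorem Betafn_pos (ha : 0 < a) (hb : 0 < b) : 0 < Betafn a b := by
  rw [Betafn_eq_Gamma ha hb]
  have := Real.Gamma_pos_of_pos ha
  have := Real.Gamma_pos_of_pos hb
  have := Real.Gamma_pos_of_pos (add_pos ha hb)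
  positivity

theorem Betafn_add_one_left (ha : 0 < a) (hb : 0 < b) :
    Betafn (a + 1) b = a / (a + b) * Betafn a b := by
  have hab : 0 < a + b := add_pos ha hb
  rw [Betafn_eq_Gamma (by positivity) hb, Betafn_eq_Gamma ha hb, add_right_comm,
    Real.Gamma_add_one ha.ne', Real.Gamma_add_one hab.ne']
  have := (Real.Gamma_pos_of_pos hab).ne'
  field_simp

theorem Betafn_add_one_right (ha : 0 < a) (hb : 0 < b) :
    Betafn a (b + 1) = b / (a + b) * Betafn a b := by
  have hab : 0 < a + b := add_pos ha hb
  rw [Betafn_eq_Gamma ha (by positivity), Betafn_eq_Gamma ha hb, ← add_assoc,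
    Real.Gamma_add_one hb.ne', Real.Gamma_add_one hab.ne']
  have := (Real.Gamma_pos_of_pos hab).ne'
  field_simp

end Beta

def redCount (y : ℕ → Bool) (j : ℕ) : ℕ :=
  ((Finset.range j).filter (fun i => y i = true)).card

theorem redCount_zero (y : ℕ → Bool) : redCount y 0 = 0 := rfl

theorem redCount_succ (y : ℕ → Bool) (j : ℕ) :
    redCount y (j + 1) = redCount y j + if y j then 1 else 0 := by
  simp only [redCount, card_filter, sum_range_succ]

theorem redCount_le (y : ℕ → Bool) (j : ℕ) : redCount y j ≤ j :=
  (card_filter_le _ _).trans (card_range j).le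

theorem prod_polya_step_eq_Betafn_div {α β : ℝ} (hα : 0 < α) (hβ : 0 < β)
    (y : ℕ → Bool) (n : ℕ) :
    ∏ j ∈ range n, (if y j then α + redCount y j else β + (j - redCount y j)) / (α + β + j)
      = Betafn (α + redCount y n) (n + β - redCount y n) / Betafn α β := by
  induction n with
  | zero => simp [redCount_zero, (Betafn_pos hα hβ).ne']
  | succ m ih =>
    rw [prod_range_succ, ih, redCount_succ]
    set c := redCount y m
    have hc : (c : ℝ) ≤ m := by exact_mod_cast redCount_le y m
    have hred : 0 < α + c := by positivity
    have hblack : 0 < m + β - c := by linarith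
    have hsum : α + c + (m + β - c) = α + β + m := by ring
    cases y m
    · rw [if_neg Bool.false_ne_true, if_neg Bool.false_ne_true,
        show ((m + 1 : ℕ) : ℝ) + β - ((c + 0 : ℕ) : ℝ) = m + β - c + 1 by push_cast; ring,
        Nat.add_zero, Betafn_add_one_right hred hblack, hsum]
      ring
    · rw [if_pos rfl, if_pos rfl,
        show ((m + 1 : ℕ) : ℝ) + β - ((c + 1 : ℕ) : ℝ) = m + β - c by push_cast; ring,
        show α + ((c + 1 : ℕ) : ℝ) = α + c + 1 by push_cast; ring,
        Betafn_add_one_left hred hblack, hsum]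
      ring

/-- In Pólya's urn with `r ≥ 1` red and `b ≥ 1` black balls initially and `d ≥ 1`
balls of the drawn color added at each step, the probability of observing a fixed
sequence of red-ball indicators `y_1,…,y_n` (computed as the product of the
sequential drawing probabilities, the red probability at step `j+1` being
`(r + s_j d)/(r + b + j d)` where `s_j` is the number of reds drawn so far)
equals `B(r/d + s_n, n + b/d − s_n)/B(r/d, b/d)`. -/
theorem polya_joint_law (r b d n : ℕ) (hr : 1 ≤ r) (hb : 1 ≤ b) (hd : 1 ≤ d)
    (y : ℕ → Bool)
    (s : ℕ → ℕ) (hs : ∀ j, s j = ((Finset.range j).filter (fun i => y i = true)).card) :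
    (∏ j ∈ Finset.range n,
        ((if y j then ((r : ℝ) + s j * d) else ((b : ℝ) + (j - s j) * d))
          / ((r : ℝ) + b + j * d)))
      = Betafn ((r : ℝ) / d + s n) ((n : ℝ) + (b : ℝ) / d - s n)
          / Betafn ((r : ℝ) / d) ((b : ℝ) / d) := by
  obtain rfl : s = redCount y := funext hs
  have hd₀ : (0 : ℝ) < d := by exact_mod_cast hd
  have hα : (0 : ℝ) < r / d := div_pos (by exact_mod_cast hr) hd₀
  have hβ : (0 : ℝ) < b / d := div_pos (by exact_mod_cast hb) hd₀
  rw [← prod_polya_step_eq_Betafn_div hα hβ]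
  refine prod_congr rfl fun j _ => ?_
  split <;> field_simp
end

section
/- (t−1)Σ_{n=0}^∞ (nt)!/((nt−n+1)!) · ((n+1)(t−1))!/((n+1)t)! equals ln 2 when t = 2 and equals (4/27)π√3 when t = 3. -/
open MeasureTheory Real Set

lemma integral_pow_one_sub (m : ℕ) :
    ∫ x in Set.Ioo (0:ℝ) 1, x ^ m * (1 - x) = 1 / (((m:ℝ)+1)*((m:ℝ)+2)) := by
  rw [← MeasureTheory.integral_Ioc_eq_integral_Ioo,
      ← intervalIntegral.integral_of_le (zero_le_one (α := ℝ))]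
  have h : ∀ x : ℝ, x ^ m * (1-x) = x ^ m - x ^ (m+1) := fun x => by ring
  simp_rw [h]
  rw [intervalIntegral.integral_sub (intervalIntegral.intervalIntegrable_pow m)
      (intervalIntegral.intervalIntegrable_pow (m+1)), integral_pow, integral_pow]
  have h1 : ((m:ℝ)+1) ≠ 0 := by positivity
  have h2 : ((m:ℝ)+2) ≠ 0 := by positivity
  push_cast
  have h3 : ((m:ℝ)+1+1) ≠ 0 := by positivity
  simp only [one_pow, zero_pow (Nat.succ_ne_zero _)]
  rw [div_sub_div _ _ h1 h3, div_eq_div_iff (by positivity) (by positivity)]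
  ring

lemma hasSum_key (k : ℕ) (hk : 1 ≤ k) :
    HasSum (fun n : ℕ => (1:ℝ) / (((k:ℝ)*n+1)*((k:ℝ)*n+2)))
      (∫ x in Set.Ioo (0:ℝ) 1, (1-x)/(1-x^k)) := by
  set μ := MeasureTheory.volume.restrict (Set.Ioo (0:ℝ) 1) with hμ
  have hF_int : ∀ n : ℕ, Integrable (fun x : ℝ => x ^ (k*n) * (1-x)) μ := fun n =>
    (((continuous_pow (k*n)).mul (continuous_const.sub continuous_id)).integrableOn_Icc
      (a := (0:ℝ)) (b := 1)).mono_set Set.Ioo_subset_Icc_self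
  have hval : ∀ n : ℕ, ∫ x : ℝ, x ^ (k*n) * (1-x) ∂μ = 1 / (((k:ℝ)*n+1)*((k:ℝ)*n+2)) := by
    intro n
    rw [hμ, integral_pow_one_sub (k*n)]
    push_cast
    ring_nf
  have hnorm : ∀ n : ℕ, ∫ x : ℝ, ‖x ^ (k*n) * (1-x)‖ ∂μ = 1 / (((k:ℝ)*n+1)*((k:ℝ)*n+2)) := by
    intro n
    rw [← hval n, hμ]
    refine setIntegral_congr_fun measurableSet_Ioo fun x hx => ?_
    rw [Real.norm_eq_abs, abs_of_nonneg (by nlinarith [pow_nonneg hx.1.le (k*n), hx.2.le, hx.1.le])]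
  have hsum : Summable fun n : ℕ => ∫ x : ℝ, ‖x ^ (k*n) * (1-x)‖ ∂μ := by
    simp_rw [hnorm]
    have hbase : Summable fun n : ℕ => (1:ℝ) / ((n:ℝ)+1)^2 := by
      have := (Real.summable_one_div_nat_pow (p := 2)).2 one_lt_two
      rw [← summable_nat_add_iff 1] at this
      simpa using this
    refine Summable.of_nonneg_of_le (fun n => by positivity) (fun n => ?_) hbase
    have hk' : (1:ℝ) ≤ (k:ℝ) := by exact_mod_cast hk
    have h1 : ((n:ℝ)+1) ≤ (k:ℝ)*n+1 := by nlinarith [Nat.cast_nonneg (α := ℝ) n]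
    have h2 : ((n:ℝ)+1) ≤ (k:ℝ)*n+2 := by nlinarith [Nat.cast_nonneg (α := ℝ) n]
    rw [sq]
    gcongr <;> positivity
  have key := MeasureTheory.hasSum_integral_of_summable_integral_norm hF_int hsum
  simp_rw [hval] at key
  convert key using 1
  · rfl
  rw [hμ]
  refine setIntegral_congr_fun measurableSet_Ioo fun x hx => ?_
  have hx1 : (0:ℝ) ≤ x := hx.1.le
  have hxk : x ^ k < 1 := pow_lt_one₀ hx1 hx.2 (by omega)
  have hgeo := (hasSum_geometric_of_lt_one (pow_nonneg hx1 k) hxk).mul_left (1-x)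
  have : (fun n : ℕ => (1-x) * (x^k)^n) = fun n : ℕ => x ^ (k*n) * (1-x) := by
    funext n; rw [← pow_mul]; ring
  rw [this] at hgeo
  rw [hgeo.tsum_eq, div_eq_mul_inv]

lemma integral_log_two : ∫ x in Set.Ioo (0:ℝ) 1, (1-x)/(1-x^2) = Real.log 2 := by
  have heq : Set.EqOn (fun x : ℝ => (1-x)/(1-x^2)) (fun x : ℝ => (1+x)⁻¹) (Set.Ioo 0 1) := by
    intro x hx
    have h1 : (1:ℝ) - x ≠ 0 := by nlinarith [hx.2]
    have h2 : (1:ℝ) + x ≠ 0 := by nlinarith [hx.1]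
    have h12 : (1:ℝ) - x^2 ≠ 0 := by nlinarith [hx.1, hx.2]
    show (1-x)/(1-x^2) = (1+x)⁻¹
    rw [show (1:ℝ)-x^2 = (1-x)*(1+x) by ring]
    field_simp
  rw [setIntegral_congr_fun measurableSet_Ioo heq, ← MeasureTheory.integral_Ioc_eq_integral_Ioo,
      ← intervalIntegral.integral_of_le (zero_le_one (α := ℝ))]
  have hderiv : ∀ x ∈ Set.uIcc (0:ℝ) 1,
      HasDerivAt (fun y : ℝ => Real.log (1+y)) (1+x)⁻¹ x := by
    intro x hx
    rw [Set.uIcc_of_le (zero_le_one (α := ℝ))] at hx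
    have h : (1:ℝ) + x ≠ 0 := by nlinarith [hx.1]
    have := ((hasDerivAt_id x).const_add (1:ℝ)).log h
    simpa [one_div] using this
  rw [intervalIntegral.integral_eq_sub_of_hasDerivAt hderiv]
  · norm_num
  · apply ContinuousOn.intervalIntegrable
    apply ContinuousOn.inv₀ (by fun_prop)
    intro x hx
    rw [Set.uIcc_of_le (zero_le_one (α := ℝ))] at hx
    nlinarith [hx.1]

lemma integral_pi : ∫ x in Set.Ioo (0:ℝ) 1, (1-x)/(1-x^3) = Real.pi * Real.sqrt 3 / 9 := by
  have s3 : (0:ℝ) < Real.sqrt 3 := Real.sqrt_pos.2 (by norm_num)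
  have s3sq : Real.sqrt 3 ^ 2 = 3 := Real.sq_sqrt (by norm_num)
  have heq : Set.EqOn (fun x : ℝ => (1-x)/(1-x^3)) (fun x : ℝ => (x^2+x+1)⁻¹) (Set.Ioo 0 1) := by
    intro x hx
    have h1 : (1:ℝ) - x ≠ 0 := by nlinarith [hx.2]
    have h2 : (0:ℝ) < x^2+x+1 := by nlinarith [hx.1, sq_nonneg x]
    have h3 : (1:ℝ) - x^3 = (1-x)*(x^2+x+1) := by ring
    show (1-x)/(1-x^3) = (x^2+x+1)⁻¹
    rw [h3]
    field_simp
  rw [setIntegral_congr_fun measurableSet_Ioo heq, ← MeasureTheory.integral_Ioc_eq_integral_Ioo,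
      ← intervalIntegral.integral_of_le (zero_le_one (α := ℝ))]
  have hderiv : ∀ x ∈ Set.uIcc (0:ℝ) 1,
      HasDerivAt (fun y : ℝ => 2 / Real.sqrt 3 * Real.arctan ((2*y+1)/Real.sqrt 3))
        (x^2+x+1)⁻¹ x := by
    intro x _
    have hin : HasDerivAt (fun y : ℝ => (2*y+1)/Real.sqrt 3) (2/Real.sqrt 3) x := by
      have := (((hasDerivAt_id x).const_mul (2:ℝ)).add_const (1:ℝ)).div_const (Real.sqrt 3)
      simpa using this
    have harc := (Real.hasDerivAt_arctan ((2*x+1)/Real.sqrt 3)).comp x hin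
    have := harc.const_mul (2 / Real.sqrt 3)
    convert this using 1
    · rfl
    · rfl
    · rfl
    have hpos : (0:ℝ) < x^2+x+1 := by nlinarith [sq_nonneg (x+1), sq_nonneg x]
    have hd : (0:ℝ) < 1 + ((2*x+1)/Real.sqrt 3)^2 := by positivity
    rw [div_pow, s3sq]
    field_simp
    rw [s3sq, div_eq_iff (by nlinarith [hpos])]
    ring
  rw [intervalIntegral.integral_eq_sub_of_hasDerivAt hderiv]
  · have e1 : ((2:ℝ)*1+1)/Real.sqrt 3 = Real.sqrt 3 := by
      rw [div_eq_iff s3.ne']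
      nlinarith [s3sq]
    have e0 : ((2:ℝ)*0+1)/Real.sqrt 3 = 1/Real.sqrt 3 := by norm_num
    have a1 : Real.arctan (Real.sqrt 3) = Real.pi/3 := by
      rw [← Real.tan_pi_div_three, Real.arctan_tan] <;> linarith [Real.pi_pos]
    have a0 : Real.arctan (1/Real.sqrt 3) = Real.pi/6 := by
      rw [← Real.tan_pi_div_six, Real.arctan_tan] <;> linarith [Real.pi_pos]
    rw [e1, e0, a1, a0]
    field_simp
    linear_combination (-(18:ℝ))*s3sq
  · apply ContinuousOn.intervalIntegrable
    apply ContinuousOn.inv₀ (by fun_prop)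
    intro x hx
    rw [Set.uIcc_of_le (zero_le_one (α := ℝ))] at hx
    nlinarith [hx.1, sq_nonneg x]

/-- `q_−(t) = (t−1)·Σ_{n≥0} [(nt)!/(nt−n+1)!]·[((n+1)(t−1))!/((n+1)t)!]`. -/
noncomputable def qMinus (t : ℕ) : ℝ :=
  ((t : ℝ) - 1) * ∑' n : ℕ,
    ((Nat.factorial (n * t) : ℝ) / (Nat.factorial (n * t - n + 1) : ℝ)) *
      ((Nat.factorial ((n + 1) * (t - 1)) : ℝ) / (Nat.factorial ((n + 1) * t) : ℝ))

/-- `q_−(2) = ln 2` and `q_−(3) = (4/27)π√3`. -/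
theorem qMinus_two_three :
    qMinus 2 = Real.log 2 ∧ qMinus 3 = 4 / 27 * Real.pi * Real.sqrt 3 := by
  constructor
  · have h : ∀ n : ℕ, ((Nat.factorial (n * 2) : ℝ) / (Nat.factorial (n * 2 - n + 1) : ℝ)) *
        ((Nat.factorial ((n + 1) * (2 - 1)) : ℝ) / (Nat.factorial ((n + 1) * 2) : ℝ))
        = 1 / (((2:ℝ)*n+1)*((2:ℝ)*n+2)) := by
      intro n
      have e1 : n*2 - n + 1 = n+1 := by omega
      have e2 : (n+1)*(2-1) = n+1 := by omega
      have e3 : (n+1)*2 = (n*2+1)+1 := by omega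
      rw [e1, e2, e3, Nat.factorial_succ, Nat.factorial_succ]
      have f0 : (Nat.factorial (n*2) : ℝ) ≠ 0 := Nat.cast_ne_zero.2 (Nat.factorial_ne_zero _)
      have f1 : (Nat.factorial (n+1) : ℝ) ≠ 0 := Nat.cast_ne_zero.2 (Nat.factorial_ne_zero _)
      push_cast
      field_simp
      rw [Nat.factorial_succ (n*2)]
      push_cast
      ring
    have key := (hasSum_key 2 (by norm_num)).tsum_eq
    push_cast at key
    rw [qMinus, tsum_congr h, key, integral_log_two]
    norm_num
  · have h : ∀ n : ℕ, ((Nat.factorial (n * 3) : ℝ) / (Nat.factorial (n * 3 - n + 1) : ℝ)) *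
        ((Nat.factorial ((n + 1) * (3 - 1)) : ℝ) / (Nat.factorial ((n + 1) * 3) : ℝ))
        = 2/3 * (1 / (((3:ℝ)*n+1)*((3:ℝ)*n+2))) := by
      intro n
      have e1 : n*3 - n + 1 = n*2+1 := by omega
      have e2 : (n+1)*(3-1) = (n*2+1)+1 := by omega
      have e3 : (n+1)*3 = ((n*3+1)+1)+1 := by omega
      rw [e1, e2, e3, Nat.factorial_succ, Nat.factorial_succ, Nat.factorial_succ,
        Nat.factorial_succ]
      have f0 : (Nat.factorial (n*3) : ℝ) ≠ 0 := Nat.cast_ne_zero.2 (Nat.factorial_ne_zero _)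
      have f1 : (Nat.factorial (n*2+1) : ℝ) ≠ 0 := Nat.cast_ne_zero.2 (Nat.factorial_ne_zero _)
      push_cast
      field_simp
      rw [show n*3+2 = ((n*3)+1)+1 from rfl, Nat.factorial_succ, Nat.factorial_succ]
      push_cast
      ring
    have key := (hasSum_key 3 (by norm_num)).tsum_eq
    push_cast at key
    rw [qMinus, tsum_congr h, tsum_mul_left, key, integral_pi]
    push_cast
    ring
end
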